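/- arXiv:math/9901137 — 5 statements merged into one kernel-verified Lean document; each statement's English description precedes it below -/
import Mathlib

section
/- Let (S,V,h) be a spin space of odd dimension m = dim V. Then the complex vector space A(h) = {w ∈ End S : wv + vw = 0 for all v ∈ V} is two-dimensional. -/
open Module

/-- Moving an element through a list product with signs. -/
lemma spin_aux_move {R E : Type*} [CommSemiring R] [Ring E] [Algebra R E]
    {ι : Type*} (f : ι → E) (ε : ι → R) (b : E) :
    ∀ l : List ι, (∀ i ∈ l, b * f i = ε i • (f i * b)) →
      b * (l.map f).prod = (l.map ε).prod • ((l.map f).prod * b)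
  | [], _ => by simp
  | i :: l, hl => by
    have h1 : b * f i = ε i • (f i * b) := hl i (by simp)
    have h2 := spin_aux_move f ε b l (fun j hj => hl j (by simp [hj]))
    simp only [List.map_cons, List.prod_cons]
    rw [← mul_assoc, h1, smul_mul_assoc, mul_assoc, h2, mul_smul_comm, smul_smul, ← mul_assoc]

lemma spin_prod_isUnit {E : Type*} [Monoid E] :
    ∀ l : List E, (∀ x ∈ l, IsUnit x) → IsUnit l.prod
  | [], _ => by simp
  | x :: l, hu => by
    rw [List.prod_cons]
    exact (hu x (by simp)).mul (spin_prod_isUnit l fun y hy => hu y (by simp [hy]))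

/-- Key lemma: in odd dimension nothing nonzero anticommutes with the whole image of σ. -/
lemma spin_anticomm_zero
    (S₀ : Type*) [AddCommGroup S₀] [Module ℂ S₀] [Nontrivial S₀]
    (W : Type*) [AddCommGroup W] [Module ℝ W] [FiniteDimensional ℝ W]
    (m : ℕ) (hm : Odd m)
    (hW : Module.finrank ℝ W = m)
    (h : QuadraticForm ℝ W)
    (hnd : LinearMap.BilinForm.Nondegenerate (QuadraticMap.polarBilin h))
    (σ : W →ₗ[ℝ] Module.End ℂ S₀)
    (hσ : ∀ v : W, σ v * σ v = h v • (1 : Module.End ℂ S₀))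
    (hirr : ∀ w : Module.End ℂ S₀,
      (∀ v : W, w * σ v = σ v * w) → ∃ c : ℂ, w = c • (1 : Module.End ℂ S₀))
    (a : Module.End ℂ S₀) (ha : ∀ v : W, a * σ v = -(σ v * a)) : a = 0 := by
  classical
  -- anticommutation relations from the Clifford relation
  have hanti : ∀ u v : W, σ u * σ v + σ v * σ u = (QuadraticMap.polar h u v) • 1 := by
    intro u v
    have h1 := hσ (u + v)
    rw [map_add, add_mul, mul_add, mul_add, hσ u, hσ v] at h1
    have h2 : σ u * σ v + σ v * σ u
        = h (u + v) • (1 : Module.End ℂ S₀) - h u • 1 - h v • 1 := by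
      rw [← h1]; abel
    rw [h2, QuadraticMap.polar, sub_smul, sub_smul]
  -- orthogonal basis
  haveI : Invertible (2 : ℝ) := invertibleOfNonzero two_ne_zero
  have hsymm : (QuadraticMap.polarBilin h).IsSymm := LinearMap.isSymm_def.mpr fun x y => by
    simp [QuadraticMap.polarBilin_apply_apply, QuadraticMap.polar_comm]
  obtain ⟨e₀, he₀⟩ := LinearMap.BilinForm.exists_orthogonal_basis hsymm
  set e : Basis (Fin m) ℝ W := e₀.reindex (finCongr hW) with he
  have horth : ∀ i j : Fin m, i ≠ j → QuadraticMap.polar h (e i) (e j) = 0 := by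
    intro i j hij
    have := (LinearMap.isOrthoᵢ_def.mp he₀) ((finCongr hW).symm i) ((finCongr hW).symm j)
      (fun hc => hij (by simpa using congrArg (finCongr hW) hc))
    simpa [he, Basis.reindex_apply, QuadraticMap.polarBilin_apply_apply] using this
  -- each h (e i) is nonzero
  have hne : ∀ i : Fin m, h (e i) ≠ 0 := by
    intro i hzero
    have hmap : QuadraticMap.polarBilin h (e i) = 0 := by
      apply e.ext
      intro j
      by_cases hij : i = j
      · subst hij
        simp [QuadraticMap.polarBilin_apply_apply, QuadraticMap.polar_self, hzero]
      · simpa [QuadraticMap.polarBilin_apply_apply] using horth i j hij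
    exact e.ne_zero i (hnd.1 (e i) (fun w => by rw [hmap]; rfl))
  -- pairwise anticommutation of the σ (e i)
  have hac : ∀ i j : Fin m, i ≠ j → σ (e i) * σ (e j) = -(σ (e j) * σ (e i)) := by
    intro i j hij
    have h1 := hanti (e i) (e j)
    rw [horth i j hij, zero_smul] at h1
    exact eq_neg_of_add_eq_zero_left h1
  -- the volume element
  set l : List (Fin m) := List.finRange m with hl
  set ω : Module.End ℂ S₀ := (l.map (fun i => σ (e i))).prod with hω
  -- ω commutes with each σ (e j)
  have hcomm : ∀ j : Fin m, σ (e j) * ω = ω * σ (e j) := by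
    intro j
    have hmove := spin_aux_move (fun i => σ (e i)) (fun i => if i = j then (1:ℂ) else -1)
      (σ (e j)) l (by
        intro i _
        show σ (e j) * σ (e i) = (if i = j then (1:ℂ) else -1) • (σ (e i) * σ (e j))
        by_cases hij : i = j
        · subst hij; simp
        · rw [if_neg hij, hac j i (Ne.symm hij), neg_smul, one_smul])
    have hprod : ((l.map fun i => if i = j then (1:ℂ) else -1).prod) = 1 := by
      rw [hl, ← List.ofFn_eq_map, List.prod_ofFn]
      have hstep : ∀ i : Fin m, (if i = j then (1:ℂ) else -1)
          = (-1) * (if i = j then -1 else 1) := by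
        intro i; by_cases hij : i = j <;> simp [hij]
      rw [Finset.prod_congr rfl (fun i _ => hstep i), Finset.prod_mul_distrib,
        Finset.prod_const, Finset.prod_ite_eq', Finset.card_univ, Fintype.card_fin,
        if_pos (Finset.mem_univ j), Odd.neg_one_pow hm]
      norm_num
    rw [hmove, hprod, one_smul]
  -- ω commutes with every σ v
  have hcommv : ∀ v : W, ω * σ v = σ v * ω := by
    intro v
    conv_lhs => rw [← e.sum_repr v]
    conv_rhs => rw [← e.sum_repr v]
    rw [map_sum]
    simp only [map_smul]
    rw [Finset.mul_sum, Finset.sum_mul]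
    exact Finset.sum_congr rfl (fun j _ => by
      rw [mul_smul_comm, smul_mul_assoc, hcomm j])
  obtain ⟨c, hc⟩ := hirr ω hcommv
  -- ω is a unit, so c ≠ 0
  have hunit : IsUnit ω := by
    apply spin_prod_isUnit
    intro x hx
    obtain ⟨i, -, rfl⟩ := List.mem_map.mp hx
    exact ⟨⟨σ (e i), (h (e i))⁻¹ • σ (e i),
      by rw [mul_smul_comm, hσ, smul_smul, inv_mul_cancel₀ (hne i), one_smul],
      by rw [smul_mul_assoc, hσ, smul_smul, inv_mul_cancel₀ (hne i), one_smul]⟩, rfl⟩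
  have hc0 : c ≠ 0 := by
    rintro rfl
    rw [zero_smul] at hc
    rw [hc] at hunit
    exact zero_ne_one (isUnit_zero_iff.mp hunit)
  -- a anticommutes with ω
  have hamove := spin_aux_move (fun i => σ (e i)) (fun _ => (-1:ℂ)) a l
    (fun i _ => by rw [ha (e i), neg_smul, one_smul])
  have hlen : (l.map fun _ : Fin m => (-1:ℂ)).prod = -1 := by
    rw [List.map_const', List.prod_replicate, hl, List.length_finRange, Odd.neg_one_pow hm]
  rw [hlen] at hamove
  rw [← hω] at hamove
  rw [hc, mul_smul_comm, smul_mul_assoc, mul_one, one_mul, neg_smul, one_smul] at hamove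
  -- conclude a = 0
  have h2 : (2 * c) • a = 0 := by
    rw [mul_smul, two_smul]
    nth_rewrite 2 [hamove]
    exact add_neg_cancel _
  rcases smul_eq_zero.mp h2 with hz | hz
  · exact absurd hz (by simp [hc0])
  · exact hz

/-- Let `(S, V, h)` be a spin space of odd dimension `m = 2n - 1`, given in
Cartan form: `S = S₀ × S₀` with `S₀` complex of dimension `2^((m-1)/2)`, and the vectors of the
`m`-dimensional quadratic space `(W, h)` (with `h` nondegenerate) acting on `S` as
`ρ(v) = σ(v) ⊕ (-σ(v))`, where `σ` is a Pauli representation: `σ(v)² = h(v)·1` and `σ` is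
irreducible (its commutant consists of the complex scalars).  Then the complex vector space
`A(h) = {w ∈ End S | w ρ(v) + ρ(v) w = 0 for all v}` is two-dimensional. -/
theorem anticommutant_odd_rank_two
    (S₀ : Type*) [AddCommGroup S₀] [Module ℂ S₀] [FiniteDimensional ℂ S₀]
    (W : Type*) [AddCommGroup W] [Module ℝ W] [FiniteDimensional ℝ W]
    (m : ℕ) (hm : Odd m)
    (hW : Module.finrank ℝ W = m)
    (hS : Module.finrank ℂ S₀ = 2 ^ ((m - 1) / 2))
    (h : QuadraticForm ℝ W)
    (hnd : LinearMap.BilinForm.Nondegenerate (QuadraticMap.polarBilin h))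
    (σ : W →ₗ[ℝ] Module.End ℂ S₀)
    (hσ : ∀ v : W, σ v * σ v = h v • (1 : Module.End ℂ S₀))
    (hirr : ∀ w : Module.End ℂ S₀,
      (∀ v : W, w * σ v = σ v * w) → ∃ c : ℂ, w = c • (1 : Module.End ℂ S₀)) :
    Module.finrank ℂ
      ↥(⨅ v : W, LinearMap.ker
          (LinearMap.mulRight ℂ (LinearMap.prodMap (σ v) (-(σ v))) +
           LinearMap.mulLeft ℂ (LinearMap.prodMap (σ v) (-(σ v))))) = 2 := by
  classical
  have hpos : 0 < Module.finrank ℂ S₀ := by rw [hS]; positivity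
  haveI : Nontrivial S₀ := Module.nontrivial_of_finrank_pos hpos
  obtain ⟨s₀, hs₀⟩ := exists_ne (0 : S₀)
  set ρ : W → Module.End ℂ (S₀ × S₀) :=
    fun v => LinearMap.prodMap (σ v) (-(σ v)) with hρ
  set w₁ : Module.End ℂ (S₀ × S₀) :=
    (LinearMap.inl ℂ S₀ S₀).comp (LinearMap.snd ℂ S₀ S₀) with hw₁
  set w₂ : Module.End ℂ (S₀ × S₀) :=
    (LinearMap.inr ℂ S₀ S₀).comp (LinearMap.fst ℂ S₀ S₀) with hw₂
  have hw₁app : ∀ p : S₀ × S₀, w₁ p = (p.2, 0) := fun p => rfl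
  have hw₂app : ∀ p : S₀ × S₀, w₂ p = (0, p.1) := fun p => rfl
  have hρapp : ∀ (v : W) (p : S₀ × S₀), ρ v p = (σ v p.1, -(σ v p.2)) := fun v p => rfl
  -- membership criterion
  have hmem : ∀ w : Module.End ℂ (S₀ × S₀),
      (w ∈ ⨅ v : W, LinearMap.ker
          (LinearMap.mulRight ℂ (ρ v) + LinearMap.mulLeft ℂ (ρ v)))
        ↔ ∀ (v : W) (p : S₀ × S₀), w (ρ v p) + ρ v (w p) = 0 := by
    intro w
    rw [Submodule.mem_iInf]
    constructor
    · intro hw v p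
      have := LinearMap.ext_iff.mp (LinearMap.mem_ker.mp (hw v)) p
      simpa [Module.End.mul_apply] using this
    · intro hw v
      rw [LinearMap.mem_ker]
      apply LinearMap.ext
      intro p
      simpa [Module.End.mul_apply] using hw v p
  have hspan : (⨅ v : W, LinearMap.ker
        (LinearMap.mulRight ℂ (ρ v) + LinearMap.mulLeft ℂ (ρ v)))
      = Submodule.span ℂ (Set.range ![w₁, w₂]) := by
    apply le_antisymm
    · -- the hard inclusion
      intro w hw
      have hw' := (hmem w).mp hw
      set A : Module.End ℂ S₀ :=
        (LinearMap.fst ℂ S₀ S₀) ∘ₗ w ∘ₗ (LinearMap.inl ℂ S₀ S₀) with hA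
      set B : Module.End ℂ S₀ :=
        (LinearMap.fst ℂ S₀ S₀) ∘ₗ w ∘ₗ (LinearMap.inr ℂ S₀ S₀) with hB
      set C : Module.End ℂ S₀ :=
        (LinearMap.snd ℂ S₀ S₀) ∘ₗ w ∘ₗ (LinearMap.inl ℂ S₀ S₀) with hC
      set D : Module.End ℂ S₀ :=
        (LinearMap.snd ℂ S₀ S₀) ∘ₗ w ∘ₗ (LinearMap.inr ℂ S₀ S₀) with hD
      have hAapp : ∀ x : S₀, A x = (w (x, 0)).1 := fun x => rfl
      have hBapp : ∀ y : S₀, B y = (w (0, y)).1 := fun y => rfl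
      have hCapp : ∀ x : S₀, C x = (w (x, 0)).2 := fun x => rfl
      have hDapp : ∀ y : S₀, D y = (w (0, y)).2 := fun y => rfl
      have hkey1 : ∀ (v : W) (x : S₀),
          w (σ v x, 0) + (σ v ((w (x,0)).1), -(σ v ((w (x,0)).2))) = 0 := by
        intro v x
        have := hw' v (x, 0)
        simpa [hρapp] using this
      have hkey2 : ∀ (v : W) (y : S₀),
          -(w (0, σ v y)) + (σ v ((w (0,y)).1), -(σ v ((w (0,y)).2))) = 0 := by
        intro v y
        have := hw' v (0, y)
        rw [hρapp] at this
        rw [show ((σ v (0:S₀)), -(σ v y)) = -(((0:S₀), σ v y)) by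
          simp [Prod.ext_iff], map_neg] at this
        exact this
      -- operator relations
      have hAeq : ∀ v : W, A * σ v = -(σ v * A) := by
        intro v
        apply LinearMap.ext
        intro x
        simp only [Module.End.mul_apply, LinearMap.neg_apply]
        have := congrArg Prod.fst (hkey1 v x)
        simpa [hAapp] using eq_neg_of_add_eq_zero_left (by simpa using this)
      have hCeq : ∀ v : W, C * σ v = σ v * C := by
        intro v
        apply LinearMap.ext
        intro x
        simp only [Module.End.mul_apply]
        have := congrArg Prod.snd (hkey1 v x)
        have h2 : C (σ v x) + -(σ v (C x)) = 0 := by simpa [hCapp] using this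
        have h3 := eq_neg_of_add_eq_zero_left h2
        rwa [neg_neg] at h3
      have hBeq : ∀ v : W, B * σ v = σ v * B := by
        intro v
        apply LinearMap.ext
        intro y
        simp only [Module.End.mul_apply]
        have := congrArg Prod.fst (hkey2 v y)
        have h2 : -(B (σ v y)) + σ v (B y) = 0 := by simpa [hBapp] using this
        exact (neg_add_eq_zero.mp h2)
      have hDeq : ∀ v : W, D * σ v = -(σ v * D) := by
        intro v
        apply LinearMap.ext
        intro y
        simp only [Module.End.mul_apply, LinearMap.neg_apply]
        have := congrArg Prod.snd (hkey2 v y)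
        have h2 : -(D (σ v y)) + -(σ v (D y)) = 0 := by simpa [hDapp] using this
        have h3 : -(D (σ v y) + σ v (D y)) = 0 := by rw [neg_add]; exact h2
        exact eq_neg_of_add_eq_zero_left (neg_eq_zero.mp h3)
      have hA0 : A = 0 := spin_anticomm_zero S₀ W m hm hW h hnd σ hσ hirr A hAeq
      have hD0 : D = 0 := spin_anticomm_zero S₀ W m hm hW h hnd σ hσ hirr D hDeq
      obtain ⟨β, hβ⟩ := hirr B hBeq
      obtain ⟨γ, hγ⟩ := hirr C hCeq
      -- decompose w
      have hwdec : w = β • w₁ + γ • w₂ := by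
        apply LinearMap.ext
        intro p
        have hp : w p = w (p.1, 0) + w (0, p.2) := by
          rw [← map_add]
          congr 1
          simp [Prod.ext_iff]
        have hfst : (w p).1 = A p.1 + B p.2 := by
          rw [hp]; simp [hAapp, hBapp]
        have hsnd : (w p).2 = C p.1 + D p.2 := by
          rw [hp]; simp [hCapp, hDapp]
        have : w p = ((w p).1, (w p).2) := rfl
        rw [this, hfst, hsnd, hA0, hD0, hβ, hγ]
        simp [hw₁app, hw₂app, Prod.ext_iff]
      rw [hwdec]
      exact Submodule.add_mem _
        (Submodule.smul_mem _ _ (Submodule.subset_span ⟨0, rfl⟩))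
        (Submodule.smul_mem _ _ (Submodule.subset_span ⟨1, rfl⟩))
    · -- easy inclusion
      rw [Submodule.span_le]
      rintro _ ⟨i, rfl⟩
      fin_cases i
      · apply (hmem w₁).mpr
        intro v p
        simp [hw₁app, hρapp, Prod.ext_iff]
      · apply (hmem w₂).mpr
        intro v p
        simp [hw₂app, hρapp, Prod.ext_iff]
  have hind : LinearIndependent ℂ ![w₁, w₂] := by
    rw [LinearIndependent.pair_iff]
    intro s t hst
    have h1 := congrArg (fun f : Module.End ℂ (S₀ × S₀) => f (s₀, s₀)) hst
    simp only [LinearMap.add_apply, LinearMap.smul_apply, LinearMap.zero_apply,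
      hw₁app, hw₂app] at h1
    have h2 : (s • s₀, t • s₀) = ((0 : S₀), (0 : S₀)) := by
      simpa [Prod.ext_iff, Prod.smul_mk] using h1
    rw [Prod.ext_iff] at h2
    exact ⟨by simpa [hs₀] using (smul_eq_zero.mp h2.1),
      by simpa [hs₀] using (smul_eq_zero.mp h2.2)⟩
  rw [hspan, finrank_span_eq_card hind, Fintype.card_fin]
end

section
/- Let (S,V,h) be a spin space and Γ ∈ A(h) with Γ² = -id_S. For every v ∈ V, Γv = (id_S + Γ)·v·(id_S + Γ)⁻¹; consequently, the representation γ : Cl(h) → End S extending v ↦ Γv is equivalent to the inclusion representation Cl(h) → End S. -/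
/-!
Since `Γ` anticommutes with every `v ∈ V` and `Γ² = -1`, we have `Γ v Γ = v`, hence
`(1 + Γ) v = v + Γ v = Γ v (1 + Γ)`: the element `1 + Γ` intertwines `v` with `Γ v`.
It is invertible because `(1 + Γ)(1 - Γ) = 1 - Γ² = 2`. The elements `a` with
`(1 + Γ) inc a = γ a (1 + Γ)` form a subalgebra containing `V`, which generates `Cl(h)`.
-/

section Ring

variable {A : Type*} [Ring A]

theorem isUnit_one_add_of_mul_self_eq_neg_one {Γ : A} (h2 : IsUnit (2 : A))
    (hΓsq : Γ * Γ = -1) : IsUnit (1 + Γ) := by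
  have hcomm : Commute (1 + Γ) (1 - Γ) :=
    (Commute.one_left _).add_left ((Commute.one_right Γ).sub_right (Commute.refl Γ))
  have hprod : (1 + Γ) * (1 - Γ) = 2 := by
    rw [show (1 + Γ) * (1 - Γ) = 1 - Γ * Γ by noncomm_ring, hΓsq, sub_neg_eq_add,
      one_add_one_eq_two]
  exact (hcomm.isUnit_mul_iff.mp (hprod ▸ h2)).1

theorem one_add_mul_eq_mul_one_add {Γ v : A} (hanti : Γ * v = -(v * Γ)) (hΓsq : Γ * Γ = -1) :
    (1 + Γ) * v = Γ * v * (1 + Γ) :=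
  have hΓvΓ : Γ * v * Γ = v := by
    rw [hanti, neg_mul, mul_assoc, hΓsq, mul_neg_one, neg_neg]
  calc (1 + Γ) * v = v + Γ * v := by noncomm_ring
    _ = Γ * v * Γ + Γ * v := by rw [hΓvΓ]
    _ = Γ * v * (1 + Γ) := by noncomm_ring

theorem eq_mul_mul_inverse_of_mul_eq {u x y : A} (hu : IsUnit u) (h : u * x = y * u) :
    y = u * x * Ring.inverse u := by
  rw [h, Ring.mul_inverse_cancel_right _ _ hu]

end Ring

theorem CliffordAlgebra.mul_map_eq_map_mul_of_ι {R M A : Type*} [CommRing R]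
    [AddCommGroup M] [Module R M] [Ring A] [Algebra R A] {Q : QuadraticForm R M}
    {f g : CliffordAlgebra Q →ₐ[R] A} {u : A} (h : ∀ m, u * g (ι Q m) = f (ι Q m) * u)
    (a : CliffordAlgebra Q) :
    u * g a = f a * u := by
  induction a using CliffordAlgebra.induction with
  | algebraMap r => simp only [AlgHom.commutes, Algebra.commutes]
  | ι m => exact h m
  | mul x y hx hy => rw [map_mul, map_mul, ← mul_assoc, hx, mul_assoc, hy, mul_assoc]
  | add x y hx hy => rw [map_add, map_add, mul_add, add_mul, hx, hy]

theorem gamma_equivalent_to_inclusion_general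
    (S : Type*) [AddCommGroup S] [Module ℂ S]
    (V : Submodule ℝ (Module.End ℂ S))
    (h : QuadraticForm ℝ V)
    (Γ : Module.End ℂ S)
    (hΓanti : ∀ v ∈ V, Γ * v = -(v * Γ))
    (hΓsq : Γ * Γ = -1)
    (γ inc : CliffordAlgebra h →ₐ[ℝ] Module.End ℂ S)
    (hγ : ∀ v : V, γ (CliffordAlgebra.ι h v) = Γ * (v : Module.End ℂ S))
    (hinc : ∀ v : V, inc (CliffordAlgebra.ι h v) = (v : Module.End ℂ S)) :
    IsUnit ((1 : Module.End ℂ S) + Γ) ∧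
    (∀ v : V, Γ * (v : Module.End ℂ S) =
        (1 + Γ) * (v : Module.End ℂ S) * Ring.inverse (1 + Γ)) ∧
    ∀ a : CliffordAlgebra h, γ a = (1 + Γ) * inc a * Ring.inverse (1 + Γ) := by
  have h2 : IsUnit (2 : Module.End ℂ S) := by
    rw [← map_ofNat (algebraMap ℂ (Module.End ℂ S)) 2]
    exact (IsUnit.mk0 (2 : ℂ) two_ne_zero).map _
  have hunit := isUnit_one_add_of_mul_self_eq_neg_one h2 hΓsq
  have hintertwine (v : V) : (1 + Γ) * v = Γ * v * (1 + Γ) :=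
    one_add_mul_eq_mul_one_add (hΓanti v v.2) hΓsq
  refine ⟨hunit, fun v => eq_mul_mul_inverse_of_mul_eq hunit (hintertwine v), fun a => ?_⟩
  refine eq_mul_mul_inverse_of_mul_eq hunit (CliffordAlgebra.mul_map_eq_map_mul_of_ι ?_ a)
  intro v
  rw [hinc, hγ, hintertwine]

/-- Let `(S, V, h)` be a spin space and `Γ ∈ A(h)` with `Γ² = -id_S`.  Then
`id_S + Γ` is invertible and `Γv = (id_S + Γ) v (id_S + Γ)⁻¹` for every `v ∈ V`; consequently
the representation `γ : Cl(h) → End S` extending `v ↦ Γv` is equivalent to the inclusion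
representation `inc : Cl(h) → End S` (extending `v ↦ v`):
`γ a = (id_S + Γ) (inc a) (id_S + Γ)⁻¹` for all `a ∈ Cl(h)`. -/
theorem gamma_equivalent_to_inclusion
    (S : Type*) [AddCommGroup S] [Module ℂ S]
    (V : Submodule ℝ (Module.End ℂ S))
    (h : QuadraticForm ℝ V)
    (hcl : ∀ v : V, (v : Module.End ℂ S) * (v : Module.End ℂ S) = h v • 1)
    (Γ : Module.End ℂ S)
    (hΓanti : ∀ v ∈ V, Γ * v = -(v * Γ))
    (hΓsq : Γ * Γ = -1)
    (γ inc : CliffordAlgebra h →ₐ[ℝ] Module.End ℂ S)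
    (hγ : ∀ v : V, γ (CliffordAlgebra.ι h v) = Γ * (v : Module.End ℂ S))
    (hinc : ∀ v : V, inc (CliffordAlgebra.ι h v) = (v : Module.End ℂ S)) :
    IsUnit ((1 : Module.End ℂ S) + Γ) ∧
    (∀ v : V, Γ * (v : Module.End ℂ S) =
        (1 + Γ) * (v : Module.End ℂ S) * Ring.inverse (1 + Γ)) ∧
    ∀ a : CliffordAlgebra h, γ a = (1 + Γ) * inc a * Ring.inverse (1 + Γ) :=
  gamma_equivalent_to_inclusion_general S V h Γ hΓanti hΓsq γ inc hγ hinc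
end

section
/- Let (S,V,h) be a spin space and G ⊂ GL(S) a spinor group (a closed subgroup containing Spin₀(h) with aVa⁻¹ = V for all a ∈ G). The homomorphism Ad : G → O(h), Ad(a)v = ava⁻¹, is surjective if and only if Pin_γ(h) ⊆ K(h)·G. -/
open LinearMap (BilinForm)

namespace SpinAux

lemma prod_self_inv {G : Type*} [Group G] : ∀ l : List G, (∀ a ∈ l, a * a = 1) →
    l.reverse.prod * l.prod = 1
  | [], _ => by simp
  | a :: t, h => by
    simp only [List.reverse_cons, List.prod_append, List.prod_cons, List.prod_nil, mul_one]
    have ht := prod_self_inv t (fun b hb => h b (List.mem_cons_of_mem a hb))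
    have ha := h a List.mem_cons_self
    rw [mul_assoc, ← mul_assoc a a t.prod, ha, one_mul, ht]

variable {V : Type*} [AddCommGroup V] [Module ℝ V]

noncomputable def reflMap (B : BilinForm ℝ V) (v : V) : V →ₗ[ℝ] V where
  toFun x := x - ((2 * B x v) / B v v) • v
  map_add' x y := by
    simp only [map_add, LinearMap.add_apply]
    rw [show 2 * (B x v + B y v) / B v v = 2 * B x v / B v v + 2 * B y v / B v v by ring,
      add_smul]
    abel
  map_smul' c x := by
    simp only [map_smul, LinearMap.smul_apply, smul_eq_mul, RingHom.id_apply, smul_sub,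
      smul_smul]
    rw [show 2 * (c * B x v) / B v v = c * (2 * B x v / B v v) by ring]

lemma reflMap_apply (B : BilinForm ℝ V) (v x : V) :
    reflMap B v x = x - ((2 * B x v) / B v v) • v := rfl

lemma reflMap_invol (B : BilinForm ℝ V) {v : V} (h : B v v ≠ 0) (x : V) :
    reflMap B v (reflMap B v x) = x := by
  have h2 : (2 * B v v) / B v v = 2 := by field_simp
  simp only [reflMap_apply, map_sub, map_smul]
  rw [h2, two_smul, show v - (v + v) = -v by abel, smul_neg, sub_neg_eq_add]
  abel

noncomputable def refl (B : BilinForm ℝ V) (v : V) (h : B v v ≠ 0) : V ≃ₗ[ℝ] V :=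
  LinearEquiv.ofLinear (reflMap B v) (reflMap B v)
    (by ext x; exact reflMap_invol B h x) (by ext x; exact reflMap_invol B h x)

lemma refl_apply (B : BilinForm ℝ V) (v : V) (h : B v v ≠ 0) (x : V) :
    refl B v h x = x - ((2 * B x v) / B v v) • v := rfl

lemma refl_self_vec (B : BilinForm ℝ V) (v : V) (h : B v v ≠ 0) :
    refl B v h v = -v := by
  rw [refl_apply, mul_div_assoc, div_self h, mul_one, two_smul]
  abel

lemma refl_mul_self (B : BilinForm ℝ V) (v : V) (h : B v v ≠ 0) :
    refl B v h * refl B v h = 1 := by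
  apply LinearEquiv.toLinearMap_injective
  ext x
  exact reflMap_invol B h x

lemma refl_isom (B : BilinForm ℝ V) (hs : ∀ x y, B x y = B y x) (v : V) (h : B v v ≠ 0)
    (x y : V) : B (refl B v h x) (refl B v h y) = B x y := by
  simp only [refl_apply, map_sub, map_smul, LinearMap.sub_apply, LinearMap.smul_apply,
    smul_eq_mul]
  rw [hs v y]
  field_simp
  ring

lemma refl_smul (B : BilinForm ℝ V) (v : V) {c : ℝ} (hc : c ≠ 0) (h : B v v ≠ 0)
    (h' : B (c • v) (c • v) ≠ 0) : refl B (c • v) h' = refl B v h := by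
  apply LinearEquiv.toLinearMap_injective
  ext x
  simp only [refl_apply, LinearEquiv.coe_coe, LinearMap.coe_coe, map_smul,
    LinearMap.smul_apply, smul_eq_mul, smul_smul]
  congr 1
  rw [show (2 * (c * B x v)) / (c * (c * B v v)) * c = 2 * B x v / B v v by
    field_simp]

lemma prod_isom (B : BilinForm ℝ V) (hs : ∀ x y, B x y = B y x)
    (l : List {v : V // B v v ≠ 0}) (x y : V) :
    B (((l.map fun a => refl B a.1 a.2).prod) x) (((l.map fun a => refl B a.1 a.2).prod) y)
      = B x y := by
  induction l generalizing x y with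
  | nil => simp
  | cons a t ih =>
    simp only [List.map_cons, List.prod_cons]
    have happ : ∀ z, ((refl B a.1 a.2 * (t.map fun b => refl B b.1 b.2).prod) z)
        = refl B a.1 a.2 (((t.map fun b => refl B b.1 b.2).prod) z) := fun z => rfl
    rw [happ, happ, refl_isom B hs a.1 a.2, ih]

lemma exists_send (B : BilinForm ℝ V) (hs : ∀ x y, B x y = B y x) {v u : V}
    (hv : B v v ≠ 0) (hu : B u u = B v v) :
    ∃ l : List {w : V // B w w ≠ 0}, ((l.map fun a => refl B a.1 a.2).prod) u = v := by
  have expm : B (u - v) (u - v) = 2 * (B v v - B u v) := by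
    simp only [map_sub, LinearMap.sub_apply]
    rw [hu, hs v u]; ring
  have expum : B u (u - v) = B v v - B u v := by
    simp only [map_sub]; rw [hu]
  have expp : B (u + v) (u + v) = 2 * (B v v + B u v) := by
    simp only [map_add, LinearMap.add_apply]
    rw [hu, hs v u]; ring
  have expup : B u (u + v) = B v v + B u v := by
    simp only [map_add]; rw [hu]
  by_cases h1 : B (u - v) (u - v) ≠ 0
  · refine ⟨[⟨u - v, h1⟩], ?_⟩
    simp only [List.map_cons, List.map_nil, List.prod_cons, List.prod_nil, mul_one]
    rw [refl_apply, expum, show (2 * (B v v - B u v)) / B (u - v) (u - v) = 1 by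
      rw [expm]; rw [expm] at h1; field_simp; exact div_self (right_ne_zero_of_mul h1)]
    simp
  · push_neg at h1
    have hb : B u v = B v v := by rw [expm] at h1; linarith
    have h2 : B (u + v) (u + v) ≠ 0 := by rw [expp, hb]; intro hc; apply hv; linarith
    refine ⟨[⟨v, hv⟩, ⟨u + v, h2⟩], ?_⟩
    simp only [List.map_cons, List.map_nil, List.prod_cons, List.prod_nil, mul_one]
    have happ : ∀ z, ((refl B v hv * refl B (u + v) h2) z)
        = refl B v hv (refl B (u + v) h2 z) := fun z => rfl
    have h2' : 2 * (B v v + B u v) ≠ 0 := by rw [expp] at h2; exact h2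
    have hinner : refl B (u + v) h2 u = -v := by
      rw [refl_apply, expup, expp, div_self h2', one_smul]
      abel
    rw [happ, hinner, map_neg, refl_self_vec, neg_neg]

def restrictEquiv (g : V ≃ₗ[ℝ] V) (W : Submodule ℝ V) (h1 : ∀ x ∈ W, g x ∈ W)
    (h2 : ∀ x ∈ W, g.symm x ∈ W) : W ≃ₗ[ℝ] W where
  toFun x := ⟨g x, h1 x x.2⟩
  invFun x := ⟨g.symm x, h2 x x.2⟩
  map_add' x y := by ext; simp
  map_smul' c x := by ext; simp
  left_inv x := by ext; simp
  right_inv x := by ext; simp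

theorem cartan_dieudonne (n : ℕ) :
    ∀ {V : Type u} [AddCommGroup V] [Module ℝ V] [FiniteDimensional ℝ V]
      (B : BilinForm ℝ V) (_hs : ∀ x y, B x y = B y x)
      (_hnd : ∀ x : V, (∀ y, B x y = 0) → x = 0)
      (_hn : Module.finrank ℝ V = n) (f : V ≃ₗ[ℝ] V)
      (_hf : ∀ x y, B (f x) (f y) = B x y),
      ∃ l : List {v : V // B v v ≠ 0}, f = (l.map fun a => refl B a.1 a.2).prod := by
  induction n using Nat.strong_induction_on with
  | _ n ih =>
    intro V _ _ _ B hs hnd hn f hf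
    rcases Nat.eq_zero_or_pos n with h0 | hpos
    · subst h0
      have hss : Subsingleton V := by
        rw [← Module.finrank_zero_iff (R := ℝ)]; exact hn
      refine ⟨[], ?_⟩
      apply LinearEquiv.toLinearMap_injective
      ext x
      exact Subsingleton.elim _ _
    · -- find anisotropic vector
      have hnt : Nontrivial V := by
        rw [← Module.finrank_pos_iff (R := ℝ)]; omega
      have hex : ∃ v : V, B v v ≠ 0 := by
        by_contra hcon
        push_neg at hcon
        have hB0 : ∀ x y : V, B x y = 0 := by
          intro x y
          have h1 : B (x + y) (x + y) = 0 := hcon _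
          have h2 := hcon x
          have h3 := hcon y
          have h4 := hs x y
          simp only [map_add, LinearMap.add_apply] at h1
          linarith
        obtain ⟨x, y, hxy⟩ := exists_pair_ne V
        exact hxy (by rw [hnd x (hB0 x), hnd y (hB0 y)])
      obtain ⟨v, hv⟩ := hex
      obtain ⟨ls, hls⟩ := exists_send B hs hv (hf v v)
      set s : V ≃ₗ[ℝ] V := (ls.map fun a => refl B a.1 a.2).prod with hsdef
      set g : V ≃ₗ[ℝ] V := s * f with hgdef
      have hgv : g v = v := hls
      have hgf : ∀ x y, B (g x) (g y) = B x y := by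
        intro x y
        have : ∀ z, g z = s (f z) := fun z => rfl
        rw [this, this, hsdef, prod_isom B hs, hf]
      have hgsv : g.symm v = v := by
        apply g.injective
        rw [LinearEquiv.apply_symm_apply, hgv]
      have hgsf : ∀ x y, B (g.symm x) (g.symm y) = B x y := by
        intro x y
        rw [← hgf (g.symm x) (g.symm y), LinearEquiv.apply_symm_apply,
          LinearEquiv.apply_symm_apply]
      set W : Submodule ℝ V := LinearMap.ker (B v) with hWdef
      have hmemW : ∀ x : V, x ∈ W ↔ B v x = 0 := fun x => LinearMap.mem_ker
      have hdec : ∀ x : V, ∃ c : ℝ, ∃ w ∈ W, x = c • v + w := by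
        intro x
        refine ⟨B v x / B v v, x - (B v x / B v v) • v, ?_, by abel⟩
        rw [hmemW]
        simp only [map_sub, map_smul, smul_eq_mul]
        field_simp
        ring
      have hWrank : Module.finrank ℝ (↥W) = n - 1 := by
        have hr : LinearMap.range (B v) = ⊤ := by
          rw [LinearMap.range_eq_top]
          intro r
          exact ⟨(r / B v v) • v, by simp only [map_smul, smul_eq_mul]; field_simp⟩
        have hrn := LinearMap.finrank_range_add_finrank_ker (B v)
        rw [hr] at hrn
        simp only [finrank_top, Module.finrank_self] at hrn
        rw [← hWdef] at hrn
        omega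
      set B' : BilinForm ℝ (↥W) := B.restrict W with hB'def
      have hB'app : ∀ x y : ↥W, B' x y = B (↑x) (↑y) := fun x y => rfl
      have hs' : ∀ x y : ↥W, B' x y = B' y x := fun x y => hs _ _
      have hnd' : ∀ x : ↥W, (∀ y : ↥W, B' x y = 0) → x = 0 := by
        intro x hx
        refine Subtype.ext (hnd _ ?_)
        intro y
        obtain ⟨c, w, hw, rfl⟩ := hdec y
        have h1 : B (↑x) w = 0 := hx ⟨w, hw⟩
        have h2 : B (↑x) v = 0 := by rw [hs]; exact (hmemW _).mp x.2
        simp only [map_add, map_smul, smul_eq_mul, h1, h2, mul_zero, add_zero]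
      have hgW : ∀ x ∈ W, g x ∈ W := by
        intro x hx
        rw [hmemW, ← hgv, hgf v x]
        exact (hmemW x).mp hx
      have hgsW : ∀ x ∈ W, g.symm x ∈ W := by
        intro x hx
        rw [hmemW, ← hgsv, hgsf v x]
        exact (hmemW x).mp hx
      set g' : (↥W) ≃ₗ[ℝ] (↥W) := restrictEquiv g W hgW hgsW with hg'def
      have hg'app : ∀ x : ↥W, (↑(g' x) : V) = g ↑x := fun x => rfl
      have hg'f : ∀ x y : ↥W, B' (g' x) (g' y) = B' x y := by
        intro x y
        rw [hB'app, hB'app, hg'app, hg'app]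
        exact hgf _ _
      obtain ⟨l', hl'⟩ := ih (n - 1) (by omega) B' hs' hnd' hWrank g' hg'f
      -- lift the list
      have hlift : ∀ a : {w : ↥W // B' w w ≠ 0}, B (↑(a.1) : V) (↑(a.1) : V) ≠ 0 :=
        fun a => a.2
      set L : List {w : V // B w w ≠ 0} := l'.map (fun a => ⟨↑(a.1), hlift a⟩) with hLdef
      have key : ∀ t : List {w : ↥W // B' w w ≠ 0},
          (((t.map (fun a => (⟨↑(a.1), hlift a⟩ : {w : V // B w w ≠ 0}))).map
              (fun a => refl B a.1 a.2)).prod) v = v ∧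
          ∀ x : ↥W, (((t.map (fun a => (⟨↑(a.1), hlift a⟩ : {w : V // B w w ≠ 0}))).map
              (fun a => refl B a.1 a.2)).prod) ↑x
            = ↑(((t.map fun a => refl B' a.1 a.2).prod) x) := by
        intro t
        induction t with
        | nil => exact ⟨rfl, fun x => rfl⟩
        | cons a t iht =>
          simp only [List.map_cons, List.prod_cons]
          have happ : ∀ (r p : V ≃ₗ[ℝ] V) (z : V), (r * p) z = r (p z) := fun _ _ _ => rfl
          have happ' : ∀ (r p : (↥W) ≃ₗ[ℝ] (↥W)) (z : ↥W), (r * p) z = r (p z) :=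
            fun _ _ _ => rfl
          constructor
          · rw [happ, iht.1, refl_apply]
            have hva : B v ↑(a.1) = 0 := (hmemW _).mp (a.1).2
            rw [hva]
            simp
          · intro x
            rw [happ, iht.2 x, happ', refl_apply, refl_apply]
            push_cast
            rw [hB'app, hB'app]
      have hgL : g = ((L.map fun a => refl B a.1 a.2)).prod := by
        apply LinearEquiv.toLinearMap_injective
        ext x
        obtain ⟨c, w, hw, rfl⟩ := hdec x
        simp only [LinearEquiv.coe_coe, LinearMap.coe_coe, map_add, map_smul]
        rw [hgv, hLdef, (key l').1]
        congr 1
        have h1 : g w = ↑(g' ⟨w, hw⟩) := rfl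
        rw [h1, hl', ← (key l').2 ⟨w, hw⟩]
      refine ⟨ls.reverse ++ L, ?_⟩
      rw [List.map_append, List.prod_append]
      have hrev : ((ls.reverse.map fun a => refl B a.1 a.2)).prod * s = 1 := by
        rw [List.map_reverse, hsdef]
        apply prod_self_inv
        intro a ha
        obtain ⟨b, _, rfl⟩ := List.mem_map.mp ha
        exact refl_mul_self B b.1 b.2
      have hsinv : ((ls.reverse.map fun a => refl B a.1 a.2)).prod = s⁻¹ :=
        eq_inv_of_mul_eq_one_left hrev
      rw [hsinv, ← hgL, hgdef, inv_mul_cancel_left]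

end SpinAux

set_option maxHeartbeats 4000000 in
open SpinAux in
/-- Let `(S, V, h)` be a spin space (`V` the real span of an orthonormal frame
`e` of pairwise anticommuting elements of `End S` squaring to `±1`, `Γ ∈ A(h)`, `Γ² = -id_S`)
and let `G ⊆ GL(S)` be a spinor group, i.e. a subgroup normalizing `V`.  The homomorphism
`Ad : G → O(h)`, `Ad(a)v = a v a⁻¹`, is surjective (every orthogonal transformation `f` of
`(V, h)` is of the form `Ad(a)` for some `a ∈ G`) if and only if `Pin_γ(h) ⊆ K(h) · G`, where
`Pin_γ(h)` is the subgroup generated by the elements `Γv` for unit vectors `v ∈ V` and `K(h)`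
is the commutant of `V` in `GL(S)`. -/
theorem ad_surjective_iff_pin_gamma_subset
    (S : Type*) [AddCommGroup S] [Module ℂ S] [FiniteDimensional ℂ S]
    (m : ℕ)
    (hdim : Module.finrank ℂ S = 2 ^ ((m + 1) / 2))
    (e : Fin m → Module.End ℂ S)
    (hanti : ∀ i j : Fin m, i ≠ j → e i * e j = -(e j * e i))
    (hunit : ∀ i : Fin m, e i * e i = 1 ∨ e i * e i = -1)
    (V : Submodule ℝ (Module.End ℂ S))
    (hV : V = Submodule.span ℝ (Set.range e))
    (Γ : Module.End ℂ S)
    (hΓanti : ∀ v ∈ V, Γ * v = -(v * Γ))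
    (hΓsq : Γ * Γ = -1)
    (G : Subgroup (Module.End ℂ S)ˣ)
    (hG : ∀ a ∈ G, ∀ v ∈ V,
      (a : Module.End ℂ S) * v * ((a⁻¹ : (Module.End ℂ S)ˣ) : Module.End ℂ S) ∈ V)
    (PinΓ : Subgroup (Module.End ℂ S)ˣ)
    (hPinΓ : PinΓ = Subgroup.closure
      {u : (Module.End ℂ S)ˣ | ∃ v ∈ V,
        (v * v = 1 ∨ v * v = -1) ∧ (u : Module.End ℂ S) = Γ * v}) :
    (∀ f : V ≃ₗ[ℝ] V,
        (∀ v : V, ((f v : Module.End ℂ S)) * (f v : Module.End ℂ S) =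
            (v : Module.End ℂ S) * (v : Module.End ℂ S)) →
        ∃ a ∈ G, ∀ v : V,
          (a : Module.End ℂ S) * (v : Module.End ℂ S) *
              ((a⁻¹ : (Module.End ℂ S)ˣ) : Module.End ℂ S) = (f v : Module.End ℂ S)) ↔
    (∀ p ∈ PinΓ, ∃ k g : (Module.End ℂ S)ˣ,
        (∀ v ∈ V, (k : Module.End ℂ S) * v = v * (k : Module.End ℂ S)) ∧
        g ∈ G ∧ p = k * g) := by
  classical
  subst hPinΓ
  have hSpos : 0 < Module.finrank ℂ S := by rw [hdim]; positivity
  have hSnt : Nontrivial S := Module.finrank_pos_iff.mp hSpos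
  have hfdEnd : FiniteDimensional ℝ (Module.End ℂ S) :=
    Module.Finite.trans ℂ (Module.End ℂ S)
  have hdne : (Module.finrank ℂ S : ℝ) ≠ 0 := Nat.cast_ne_zero.mpr (by omega)
  -- the normalized real trace
  set τ : Module.End ℂ S →ₗ[ℝ] ℝ :=
    (Module.finrank ℂ S : ℝ)⁻¹ •
      (Complex.reLm ∘ₗ ((LinearMap.trace ℂ S).restrictScalars ℝ)) with hτdef
  have hτ1 : τ 1 = 1 := by
    simp only [hτdef, LinearMap.smul_apply, LinearMap.comp_apply,
      LinearMap.coe_restrictScalars, LinearMap.trace_one, Complex.reLm_coe,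
      Complex.natCast_re, smul_eq_mul]
    exact inv_mul_cancel₀ hdne
  have hτsmul1 : ∀ r : ℝ, τ (r • 1) = r := by
    intro r
    rw [map_smul, hτ1, smul_eq_mul, mul_one]
  -- the anticommutator of two elements of V is a real scalar
  have hgen : ∀ i : Fin m, ∀ w ∈ V,
      e i * w + w * e i ∈ Submodule.span ℝ ({1} : Set (Module.End ℂ S)) := by
    intro i w hw
    rw [hV] at hw
    induction hw using Submodule.span_induction with
    | mem y hy =>
      obtain ⟨j, rfl⟩ := hy
      by_cases hij : i = j
      · subst hij
        rcases hunit i with h | h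
        · rw [h]
          exact Submodule.mem_span_singleton.mpr ⟨2, by rw [two_smul]⟩
        · rw [h]
          exact Submodule.mem_span_singleton.mpr ⟨-2, by rw [neg_smul, two_smul]; abel⟩
      · rw [hanti i j hij, neg_add_cancel]
        exact Submodule.zero_mem _
    | zero => simp
    | add y z hy' hz' hy hz =>
      have h : e i * (y + z) + (y + z) * e i = (e i * y + y * e i) + (e i * z + z * e i) := by
        rw [mul_add, add_mul]; abel
      rw [h]
      exact Submodule.add_mem _ hy hz
    | smul c y hy' hy =>
      rw [mul_smul_comm, smul_mul_assoc, ← smul_add]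
      exact Submodule.smul_mem _ _ hy
  have hspan : ∀ v ∈ V, ∀ w ∈ V,
      v * w + w * v ∈ Submodule.span ℝ ({1} : Set (Module.End ℂ S)) := by
    intro v hv
    rw [hV] at hv
    induction hv using Submodule.span_induction with
    | mem x hx =>
      obtain ⟨i, rfl⟩ := hx
      exact hgen i
    | zero => simp
    | add x y hx' hy' hx hy =>
      intro w hw
      have h : (x + y) * w + w * (x + y) = (x * w + w * x) + (y * w + w * y) := by
        rw [mul_add, add_mul]; abel
      rw [h]
      exact Submodule.add_mem _ (hx w hw) (hy w hw)
    | smul c x hx' hx =>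
      intro w hw
      rw [smul_mul_assoc, mul_smul_comm, ← smul_add]
      exact Submodule.smul_mem _ _ (hx w hw)
  have hscal : ∀ v ∈ V, ∀ w ∈ V,
      v * w + w * v = τ (v * w + w * v) • (1 : Module.End ℂ S) := by
    intro v hv w hw
    obtain ⟨r, hr⟩ := Submodule.mem_span_singleton.mp (hspan v hv w hw)
    rw [← hr, hτsmul1]
  -- the bilinear form
  set Bf : LinearMap.BilinForm ℝ ↥V := LinearMap.mk₂ ℝ
      (fun v w : ↥V => τ ((v : Module.End ℂ S) * ↑w + ↑w * ↑v) / 2)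
      (by
        intro m1 m2 n
        have h : ((↑(m1 + m2) : Module.End ℂ S) * ↑n + ↑n * ↑(m1 + m2))
            = ((↑m1 : Module.End ℂ S) * ↑n + ↑n * ↑m1) + (↑m2 * ↑n + ↑n * ↑m2) := by
          push_cast
          rw [add_mul, mul_add]; abel
        rw [h, map_add]; ring)
      (by
        intro c m1 n
        have h : ((↑(c • m1) : Module.End ℂ S) * ↑n + ↑n * ↑(c • m1))
            = c • ((↑m1 : Module.End ℂ S) * ↑n + ↑n * ↑m1) := by
          push_cast
          rw [smul_mul_assoc, mul_smul_comm, smul_add]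
        rw [h, map_smul]; simp only [smul_eq_mul]; ring)
      (by
        intro m1 n1 n2
        have h : ((↑m1 : Module.End ℂ S) * ↑(n1 + n2) + ↑(n1 + n2) * ↑m1)
            = ((↑m1 : Module.End ℂ S) * ↑n1 + ↑n1 * ↑m1) + (↑m1 * ↑n2 + ↑n2 * ↑m1) := by
          push_cast
          rw [mul_add, add_mul]; abel
        rw [h, map_add]; ring)
      (by
        intro c m1 n1
        have h : ((↑m1 : Module.End ℂ S) * ↑(c • n1) + ↑(c • n1) * ↑m1)
            = c • ((↑m1 : Module.End ℂ S) * ↑n1 + ↑n1 * ↑m1) := by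
          push_cast
          rw [smul_mul_assoc, mul_smul_comm, smul_add]
        rw [h, map_smul]; simp only [smul_eq_mul]; ring)
    with hBfdef
  have hBfapp : ∀ v w : ↥V,
      Bf v w = τ ((v : Module.End ℂ S) * ↑w + ↑w * ↑v) / 2 := fun v w => rfl
  have hBs : ∀ v w : ↥V, Bf v w = Bf w v := by
    intro v w
    rw [hBfapp, hBfapp, add_comm]
  have hkey : ∀ v w : ↥V,
      (v : Module.End ℂ S) * ↑w + ↑w * ↑v = (2 * Bf v w) • 1 := by
    intro v w
    have h := hscal ↑v v.2 ↑w w.2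
    rw [hBfapp, show 2 * (τ ((v : Module.End ℂ S) * ↑w + ↑w * ↑v) / 2)
      = τ ((v : Module.End ℂ S) * ↑w + ↑w * ↑v) by ring]
    exact h
  have hQ : ∀ v : ↥V, (v : Module.End ℂ S) * ↑v = Bf v v • 1 := by
    intro v
    have h2 : (2:ℝ) • ((↑v : Module.End ℂ S) * ↑v) = (2:ℝ) • (Bf v v • (1 : Module.End ℂ S)) := by
      calc (2:ℝ) • ((↑v : Module.End ℂ S) * ↑v) = ↑v * ↑v + ↑v * ↑v := two_smul ℝ _
        _ = (2 * Bf v v) • 1 := hkey v v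
        _ = (2:ℝ) • (Bf v v • 1) := mul_smul 2 _ 1
    have h3 := congrArg (fun z : Module.End ℂ S => (2:ℝ)⁻¹ • z) h2
    simpa [smul_smul] using h3
  have hinj : ∀ r s : ℝ, r • (1 : Module.End ℂ S) = s • 1 → r = s := by
    intro r s h
    obtain ⟨x, hx⟩ := exists_ne (0 : S)
    have h1 : r • x = s • x := by
      have := congrArg (fun φ : Module.End ℂ S => φ x) h
      simpa using this
    have h2 : (r : ℂ) • x = (s : ℂ) • x := h1
    have h3 : (r : ℂ) = (s : ℂ) := smul_left_injective ℂ hx h2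
    exact_mod_cast h3
  -- nondegeneracy
  have hBnd : ∀ x : ↥V, (∀ y : ↥V, Bf x y = 0) → x = 0 := by
    intro x hx
    have hxV : (x : Module.End ℂ S) ∈ Submodule.span ℝ (Set.range e) := by
      rw [← hV]; exact x.2
    rw [Submodule.mem_span_range_iff_exists_fun] at hxV
    obtain ⟨c, hc⟩ := hxV
    have hcj : ∀ j, c j = 0 := by
      intro j
      have hej : e j ∈ V := hV ▸ Submodule.subset_span ⟨j, rfl⟩
      set yj : ↥V := ⟨e j, hej⟩ with hyj
      have h0 := hx yj
      rw [hBfapp] at h0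
      have harg : (x : Module.End ℂ S) * ↑yj + ↑yj * ↑x = (2 * c j) • (e j * e j) := by
        show (x : Module.End ℂ S) * e j + e j * ↑x = (2 * c j) • (e j * e j)
        have hcoe : (x : Module.End ℂ S) = ∑ i, c i • e i := hc.symm
        rw [hcoe, Finset.sum_mul, Finset.mul_sum, ← Finset.sum_add_distrib]
        rw [Finset.sum_eq_single j]
        · rw [smul_mul_assoc, mul_smul_comm, ← smul_add, ← two_smul ℝ (e j * e j), smul_smul]
          congr 1
          ring
        · intro i _ hij
          rw [smul_mul_assoc, mul_smul_comm, ← smul_add, hanti i j hij, neg_add_cancel,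
            smul_zero]
        · intro h
          exact absurd (Finset.mem_univ j) h
      rw [harg, map_smul, smul_eq_mul] at h0
      rcases hunit j with h | h
      · rw [h, hτ1] at h0
        linarith
      · rw [h] at h0
        have hτn : τ (-1 : Module.End ℂ S) = -1 := by
          rw [show (-1 : Module.End ℂ S) = -(1 : Module.End ℂ S) from rfl, map_neg, hτ1]
        rw [hτn] at h0
        linarith
    have hx0 : (x : Module.End ℂ S) = 0 := by
      rw [← hc]
      exact Finset.sum_eq_zero fun i _ => by rw [hcj i, zero_smul]
    exact Subtype.ext hx0
  -- the squares ±1 condition in terms of Bf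
  have hBpm : ∀ v' : ↥V,
      ((v' : Module.End ℂ S) * ↑v' = 1 ∨ (v' : Module.End ℂ S) * ↑v' = -1) →
      (Bf v' v' = 1 ∨ Bf v' v' = -1) := by
    intro v' h
    rcases h with h | h
    · exact Or.inl (hinj _ _ (by rw [one_smul, ← hQ]; exact h))
    · exact Or.inr (hinj _ _ (by rw [neg_one_smul, ← hQ]; exact h))
  -- the square of Γ v'
  have hsqΓ : ∀ v' : ↥V, (Γ * ↑v') * (Γ * ↑v') = Bf v' v' • (1 : Module.End ℂ S) := by
    intro v'
    have hvΓ : (↑v' : Module.End ℂ S) * Γ = -(Γ * ↑v') := by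
      rw [hΓanti ↑v' v'.2, neg_neg]
    calc (Γ * ↑v') * (Γ * ↑v')
        = Γ * ((↑v' * Γ) * ↑v') := by noncomm_ring
      _ = Γ * ((-(Γ * ↑v')) * ↑v') := by rw [hvΓ]
      _ = -((Γ * Γ) * (↑v' * ↑v')) := by noncomm_ring
      _ = ↑v' * ↑v' := by rw [hΓsq]; noncomm_ring
      _ = Bf v' v' • 1 := hQ v'
  -- the key bridge: conjugation by a unit of the form Γ v' is the reflection in v'
  have hbridge : ∀ (u : (Module.End ℂ S)ˣ) (v' : ↥V),
      (u : Module.End ℂ S) = Γ * ↑v' →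
      ((↑v' : Module.End ℂ S) * ↑v' = 1 ∨ (↑v' : Module.End ℂ S) * ↑v' = -1) →
      ∀ (hne : Bf v' v' ≠ 0) (w : ↥V),
        (u : Module.End ℂ S) * ↑w * ((u⁻¹ : (Module.End ℂ S)ˣ) : Module.End ℂ S)
          = ↑(refl Bf v' hne w) := by
    intro u v' huΓ hsq hne w
    have hBv := hBpm v' hsq
    have hq2 : Bf v' v' * Bf v' v' = 1 := by
      rcases hBv with h | h <;> rw [h] <;> norm_num
    have husq : (u : Module.End ℂ S) * ↑u = Bf v' v' • 1 := by
      rw [huΓ]; exact hsqΓ v'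
    have huinv : ((u⁻¹ : (Module.End ℂ S)ˣ) : Module.End ℂ S) = Bf v' v' • ↑u := by
      rcases hBv with h | h
      · have h1 : u * u = 1 := Units.ext (by
          rw [Units.val_mul, husq, h, one_smul, Units.val_one])
        rw [inv_eq_of_mul_eq_one_right h1, h, one_smul]
      · have h1 : u * u = -1 := Units.ext (by
          rw [Units.val_mul, husq, h, neg_one_smul, Units.val_neg, Units.val_one])
        have h2 : u⁻¹ = -u := by
          apply inv_eq_of_mul_eq_one_right
          rw [mul_neg, h1, neg_neg]
        rw [h2, h, neg_one_smul, Units.val_neg]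
    have hvΓ : (↑v' : Module.End ℂ S) * Γ = -(Γ * ↑v') := by
      rw [hΓanti ↑v' v'.2, neg_neg]
    have hwΓ : (↑w : Module.End ℂ S) * Γ = -(Γ * ↑w) := by
      rw [hΓanti ↑w w.2, neg_neg]
    have hstep1 : (Γ * ↑v') * ↑w * (Γ * ↑v')
        = -((↑v' : Module.End ℂ S) * ↑w * ↑v') := by
      have h1 : (↑v' : Module.End ℂ S) * ↑w * Γ = Γ * (↑v' * ↑w) := by
        calc (↑v' : Module.End ℂ S) * ↑w * Γ = ↑v' * (↑w * Γ) := by rw [mul_assoc]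
          _ = ↑v' * (-(Γ * ↑w)) := by rw [hwΓ]
          _ = (↑v' * Γ) * (-(↑w)) := by noncomm_ring
          _ = (-(Γ * ↑v')) * (-(↑w)) := by rw [hvΓ]
          _ = Γ * (↑v' * ↑w) := by noncomm_ring
      calc (Γ * ↑v') * ↑w * (Γ * ↑v')
          = Γ * (↑v' * ↑w * Γ) * ↑v' := by noncomm_ring
        _ = Γ * (Γ * (↑v' * ↑w)) * ↑v' := by rw [h1]
        _ = (Γ * Γ) * (↑v' * ↑w * ↑v') := by noncomm_ring
        _ = -(↑v' * ↑w * ↑v') := by rw [hΓsq]; noncomm_ring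
    have hstep2 : (↑v' : Module.End ℂ S) * ↑w * ↑v'
        = (2 * Bf v' w) • (↑v' : Module.End ℂ S) - Bf v' v' • ↑w := by
      have h1 : (↑v' : Module.End ℂ S) * ↑w = (2 * Bf v' w) • 1 - ↑w * ↑v' :=
        eq_sub_of_add_eq (hkey v' w)
      calc (↑v' : Module.End ℂ S) * ↑w * ↑v'
          = ((2 * Bf v' w) • (1 : Module.End ℂ S) - ↑w * ↑v') * ↑v' := by rw [h1]
        _ = (2 * Bf v' w) • ↑v' - ↑w * (↑v' * ↑v') := by
            rw [sub_mul, smul_mul_assoc, one_mul, mul_assoc]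
        _ = (2 * Bf v' w) • ↑v' - ↑w * (Bf v' v' • 1) := by rw [hQ v']
        _ = (2 * Bf v' w) • ↑v' - Bf v' v' • ↑w := by rw [mul_smul_comm, mul_one]
    have hcoef : 2 * Bf w v' / Bf v' v' = Bf v' v' * (2 * Bf v' w) := by
      have hqinv : (Bf v' v')⁻¹ = Bf v' v' := inv_eq_of_mul_eq_one_right hq2
      rw [hBs w v', div_eq_mul_inv, hqinv]
      ring
    have hRHS : (↑(refl Bf v' hne w) : Module.End ℂ S)
        = ↑w - (Bf v' v' * (2 * Bf v' w)) • ↑v' := by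
      rw [refl_apply, ← hcoef]
      push_cast
      ring_nf
    have hLHS : (Γ * ↑v') * ↑w * (Bf v' v' • (Γ * ↑v'))
        = ↑w - (Bf v' v' * (2 * Bf v' w)) • (↑v' : Module.End ℂ S) := by
      calc (Γ * ↑v') * ↑w * (Bf v' v' • (Γ * ↑v'))
          = Bf v' v' • ((Γ * ↑v') * ↑w * (Γ * ↑v')) := by rw [mul_smul_comm]
        _ = Bf v' v' • (Bf v' v' • ↑w - (2 * Bf v' w) • ↑v') := by
            rw [hstep1, hstep2, neg_sub]
        _ = (Bf v' v' * Bf v' v') • ↑w - (Bf v' v' * (2 * Bf v' w)) • ↑v' := by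
            rw [smul_sub, smul_smul, smul_smul]
        _ = ↑w - (Bf v' v' * (2 * Bf v' w)) • ↑v' := by rw [hq2, one_smul]
    rw [huinv, huΓ, hRHS]
    exact hLHS
  -- commutation helpers
  have hkinv : ∀ k : (Module.End ℂ S)ˣ,
      (∀ x ∈ V, (k : Module.End ℂ S) * x = x * ↑k) →
      ∀ x ∈ V, ((k⁻¹ : (Module.End ℂ S)ˣ) : Module.End ℂ S) * x = x * ↑(k⁻¹ : (Module.End ℂ S)ˣ) := by
    intro k hk x hx
    have h1 : ((k⁻¹ : (Module.End ℂ S)ˣ) : Module.End ℂ S) * x * ↑k = x := by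
      rw [mul_assoc, ← hk x hx, ← mul_assoc, Units.inv_mul, one_mul]
    calc ((k⁻¹ : (Module.End ℂ S)ˣ) : Module.End ℂ S) * x
        = (↑(k⁻¹ : (Module.End ℂ S)ˣ) * x * ↑k) * ↑(k⁻¹ : (Module.End ℂ S)ˣ) :=
          (Units.mul_inv_cancel_right _ _).symm
      _ = x * ↑(k⁻¹ : (Module.End ℂ S)ˣ) := by rw [h1]
  have hconjG : ∀ g : (Module.End ℂ S)ˣ, g ∈ G → ∀ k : (Module.End ℂ S)ˣ,
      (∀ x ∈ V, (k : Module.End ℂ S) * x = x * ↑k) →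
      ∀ x ∈ V, ((g * k * g⁻¹ : (Module.End ℂ S)ˣ) : Module.End ℂ S) * x
        = x * ↑(g * k * g⁻¹ : (Module.End ℂ S)ˣ) := by
    intro g hg k hk x hx
    have hz : (↑(g⁻¹ : (Module.End ℂ S)ˣ) : Module.End ℂ S) * x * ↑g ∈ V := by
      have := hG g⁻¹ (inv_mem hg) x hx
      rwa [inv_inv] at this
    set z : Module.End ℂ S := ↑(g⁻¹ : (Module.End ℂ S)ˣ) * x * ↑g with hzdef
    have hz1 : (↑g : Module.End ℂ S) * z = x * ↑g := by
      rw [hzdef, ← mul_assoc, Units.mul_inv_cancel_left]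
    have hA : (↑(g⁻¹ : (Module.End ℂ S)ˣ) : Module.End ℂ S) * x
        = z * ↑(g⁻¹ : (Module.End ℂ S)ˣ) := by
      rw [hzdef, Units.mul_inv_cancel_right]
    calc (↑(g * k * g⁻¹ : (Module.End ℂ S)ˣ) : Module.End ℂ S) * x
        = ↑g * ↑k * (↑(g⁻¹ : (Module.End ℂ S)ˣ) * x) := by
          rw [Units.val_mul, Units.val_mul, mul_assoc]
      _ = ↑g * ↑k * (z * ↑(g⁻¹ : (Module.End ℂ S)ˣ)) := by rw [hA]
      _ = ↑g * (↑k * z) * ↑(g⁻¹ : (Module.End ℂ S)ˣ) := by noncomm_ring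
      _ = ↑g * (z * ↑k) * ↑(g⁻¹ : (Module.End ℂ S)ˣ) := by rw [hk z hz]
      _ = (↑g * z) * (↑k * ↑(g⁻¹ : (Module.End ℂ S)ˣ)) := by noncomm_ring
      _ = x * ↑g * (↑k * ↑(g⁻¹ : (Module.End ℂ S)ˣ)) := by rw [hz1]
      _ = x * ↑(g * k * g⁻¹ : (Module.End ℂ S)ˣ) := by
          rw [Units.val_mul, Units.val_mul]; noncomm_ring
  have hmulcomm : ∀ k1 k2 : (Module.End ℂ S)ˣ,
      (∀ x ∈ V, (k1 : Module.End ℂ S) * x = x * ↑k1) →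
      (∀ x ∈ V, (k2 : Module.End ℂ S) * x = x * ↑k2) →
      ∀ x ∈ V, ((k1 * k2 : (Module.End ℂ S)ˣ) : Module.End ℂ S) * x
        = x * ↑(k1 * k2 : (Module.End ℂ S)ˣ) := by
    intro k1 k2 h1 h2 x hx
    rw [Units.val_mul, mul_assoc, h2 x hx, ← mul_assoc, h1 x hx, mul_assoc]
  constructor
  · -- Ad surjective → PinΓ ⊆ K·G
    intro hsurj p hp
    induction hp using Subgroup.closure_induction with
    | mem x hx =>
      obtain ⟨v0, hv0V, hsq0, hxΓ⟩ := hx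
      set vv : ↥V := ⟨v0, hv0V⟩ with hvvdef
      have hsq : (↑vv : Module.End ℂ S) * ↑vv = 1 ∨ (↑vv : Module.End ℂ S) * ↑vv = -1 := hsq0
      have hne : Bf vv vv ≠ 0 := by
        rcases hBpm vv hsq with h | h <;> rw [h] <;> norm_num
      set f : ↥V ≃ₗ[ℝ] ↥V := refl Bf vv hne with hfdef
      have hfiso : ∀ w : ↥V, (↑(f w) : Module.End ℂ S) * ↑(f w) = ↑w * ↑w := by
        intro w
        rw [hQ (f w), hQ w, hfdef, refl_isom Bf hBs vv hne w w]
      obtain ⟨a, haG, ha⟩ := hsurj f hfiso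
      refine ⟨x * a⁻¹, a, ?_, haG, by rw [inv_mul_cancel_right]⟩
      intro y hy
      have hzV : (↑(a⁻¹ : (Module.End ℂ S)ˣ) : Module.End ℂ S) * y * ↑a ∈ V := by
        have := hG a⁻¹ (inv_mem haG) y hy
        rwa [inv_inv] at this
      set z : ↥V := ⟨↑(a⁻¹ : (Module.End ℂ S)ˣ) * y * ↑a, hzV⟩ with hzdef
      have hfz : (↑(f z) : Module.End ℂ S) = y := by
        rw [← ha z]
        show (↑a : Module.End ℂ S) * (↑(a⁻¹ : (Module.End ℂ S)ˣ) * y * ↑a)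
          * ↑(a⁻¹ : (Module.End ℂ S)ˣ) = y
        calc (↑a : Module.End ℂ S) * (↑(a⁻¹ : (Module.End ℂ S)ˣ) * y * ↑a)
              * ↑(a⁻¹ : (Module.End ℂ S)ˣ)
            = (↑a * ↑(a⁻¹ : (Module.End ℂ S)ˣ)) * y
              * (↑a * ↑(a⁻¹ : (Module.End ℂ S)ˣ)) := by noncomm_ring
          _ = y := by rw [Units.mul_inv, one_mul, mul_one]
      have hxz : (↑x : Module.End ℂ S) * ↑z * ↑(x⁻¹ : (Module.End ℂ S)ˣ) = y := by
        rw [hbridge x vv hxΓ hsq hne z, ← hfdef]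
        exact hfz
      have hky : (↑(x * a⁻¹ : (Module.End ℂ S)ˣ) : Module.End ℂ S) * y
          * ↑((x * a⁻¹ : (Module.End ℂ S)ˣ)⁻¹) = y := by
        rw [mul_inv_rev, inv_inv, Units.val_mul, Units.val_mul]
        calc (↑x * ↑(a⁻¹ : (Module.End ℂ S)ˣ)) * y * (↑a * ↑(x⁻¹ : (Module.End ℂ S)ˣ))
            = ↑x * (↑(a⁻¹ : (Module.End ℂ S)ˣ) * y * ↑a) * ↑(x⁻¹ : (Module.End ℂ S)ˣ) := by
              noncomm_ring
          _ = ↑x * ↑z * ↑(x⁻¹ : (Module.End ℂ S)ˣ) := rfl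
          _ = y := hxz
      calc (↑(x * a⁻¹ : (Module.End ℂ S)ˣ) : Module.End ℂ S) * y
          = ↑(x * a⁻¹ : (Module.End ℂ S)ˣ) * y * ↑((x * a⁻¹ : (Module.End ℂ S)ˣ)⁻¹)
            * ↑(x * a⁻¹ : (Module.End ℂ S)ˣ) := (Units.inv_mul_cancel_right _ _).symm
        _ = y * ↑(x * a⁻¹ : (Module.End ℂ S)ˣ) := by rw [hky]
    | one => exact ⟨1, 1, by simp, one_mem G, by rw [mul_one]⟩
    | mul x y hx hy ihx ihy =>
      obtain ⟨k1, g1, hk1, hg1, he1⟩ := ihx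
      obtain ⟨k2, g2, hk2, hg2, he2⟩ := ihy
      refine ⟨k1 * (g1 * k2 * g1⁻¹), g1 * g2, ?_, mul_mem hg1 hg2, ?_⟩
      · exact hmulcomm _ _ hk1 (hconjG g1 hg1 k2 hk2)
      · rw [he1, he2]; group
    | inv x hx ihx =>
      obtain ⟨k, g, hk, hgG, he⟩ := ihx
      refine ⟨g⁻¹ * k⁻¹ * (g⁻¹)⁻¹, g⁻¹,
        hconjG g⁻¹ (inv_mem hgG) k⁻¹ (hkinv k hk), inv_mem hgG, ?_⟩
      rw [he]; group
  · -- PinΓ ⊆ K·G → Ad surjective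
    intro hsub f hf
    have hiso : ∀ x y : ↥V, Bf (f x) (f y) = Bf x y := by
      intro x y
      have hd : ∀ w, Bf (f w) (f w) = Bf w w := fun w =>
        hinj _ _ (by rw [← hQ, ← hQ]; exact hf w)
      have h1 := hd (x + y)
      simp only [map_add, LinearMap.add_apply] at h1
      have h2 := hd x
      have h3 := hd y
      have h4 := hBs (f x) (f y)
      have h5 := hBs x y
      linarith
    obtain ⟨l, hl⟩ := cartan_dieudonne (Module.finrank ℝ ↥V) Bf hBs hBnd rfl f hiso
    have hUex : ∀ a : {v : ↥V // Bf v v ≠ 0}, ∃ U : (Module.End ℂ S)ˣ,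
        (U ∈ {u : (Module.End ℂ S)ˣ | ∃ v ∈ V,
          (v * v = 1 ∨ v * v = -1) ∧ (u : Module.End ℂ S) = Γ * v}) ∧
        ∀ w : ↥V, (U : Module.End ℂ S) * ↑w * ↑(U⁻¹ : (Module.End ℂ S)ˣ)
            = ↑(refl Bf a.1 a.2 w) := by
      intro a
      have hq := a.2
      set q := Bf a.1 a.1 with hqdef
      have habs : |q| > 0 := abs_pos.mpr hq
      have hsqrt : Real.sqrt |q| > 0 := Real.sqrt_pos.mpr habs
      set c : ℝ := (Real.sqrt |q|)⁻¹ with hcdef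
      have hcne : c ≠ 0 := inv_ne_zero (ne_of_gt hsqrt)
      set ua : ↥V := c • a.1 with huadef
      have hBua : Bf ua ua = |q|⁻¹ * q := by
        rw [huadef]
        simp only [map_smul, LinearMap.smul_apply, smul_eq_mul]
        rw [hcdef, ← hqdef]
        rw [show (Real.sqrt |q|)⁻¹ * ((Real.sqrt |q|)⁻¹ * q)
            = (Real.sqrt |q| * Real.sqrt |q|)⁻¹ * q by rw [mul_inv]; ring,
          Real.mul_self_sqrt (abs_nonneg q)]
      have hsign : Bf ua ua = 1 ∨ Bf ua ua = -1 := by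
        rcases lt_or_gt_of_ne hq with hlt | hgt
        · right; rw [hBua, abs_of_neg hlt, inv_neg, neg_mul, inv_mul_cancel₀ hq]
        · left; rw [hBua, abs_of_pos hgt, inv_mul_cancel₀ hq]
      have hsq' : (↑ua : Module.End ℂ S) * ↑ua = 1 ∨ (↑ua : Module.End ℂ S) * ↑ua = -1 := by
        rcases hsign with h | h
        · left; rw [hQ ua, h, one_smul]
        · right; rw [hQ ua, h, neg_one_smul]
      have hneua : Bf ua ua ≠ 0 := by rcases hsign with h | h <;> rw [h] <;> norm_num
      have hq2' : Bf ua ua * Bf ua ua = 1 := by rcases hsign with h | h <;> rw [h] <;> norm_num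
      have hp1 : (Γ * ↑ua) * (Bf ua ua • (Γ * (↑ua : Module.End ℂ S))) = 1 := by
        rw [mul_smul_comm, hsqΓ ua, smul_smul, hq2', one_smul]
      have hp2 : (Bf ua ua • (Γ * (↑ua : Module.End ℂ S))) * (Γ * ↑ua) = 1 := by
        rw [smul_mul_assoc, hsqΓ ua, smul_smul, hq2', one_smul]
      set U0 : (Module.End ℂ S)ˣ := ⟨Γ * ↑ua, Bf ua ua • (Γ * ↑ua), hp1, hp2⟩ with hU0def
      have hrefleq : refl Bf ua hneua = refl Bf a.1 a.2 :=
        refl_smul Bf a.1 hcne a.2 hneua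
      refine ⟨U0, ⟨↑ua, ua.2, hsq', rfl⟩, ?_⟩
      intro w
      rw [hbridge U0 ua rfl hsq' hneua w, hrefleq]
    choose Ul hUmem hUconj using hUex
    set p : (Module.End ℂ S)ˣ := (l.map Ul).prod with hpdef
    have hpmem : p ∈ Subgroup.closure {u : (Module.End ℂ S)ˣ | ∃ v ∈ V,
        (v * v = 1 ∨ v * v = -1) ∧ (u : Module.End ℂ S) = Γ * v} := by
      rw [hpdef]
      apply Subgroup.list_prod_mem
      intro x hxl
      obtain ⟨a, _, rfl⟩ := List.mem_map.mp hxl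
      exact Subgroup.subset_closure (hUmem a)
    have hconjl : ∀ t : List {v : ↥V // Bf v v ≠ 0}, ∀ w : ↥V,
        (((t.map Ul).prod : (Module.End ℂ S)ˣ) : Module.End ℂ S) * ↑w
            * ↑(((t.map Ul).prod)⁻¹ : (Module.End ℂ S)ˣ)
          = ↑(((t.map fun a => refl Bf a.1 a.2).prod) w) := by
      intro t
      induction t with
      | nil => intro w; simp
      | cons a t iht =>
        intro w
        simp only [List.map_cons, List.prod_cons]
        rw [mul_inv_rev, Units.val_mul, Units.val_mul]
        have happ : ∀ (r p : ↥V ≃ₗ[ℝ] ↥V) (z : ↥V), (r * p) z = r (p z) := fun _ _ _ => rfl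
        rw [happ]
        calc (↑(Ul a) * ↑((t.map Ul).prod : (Module.End ℂ S)ˣ)) * (↑w : Module.End ℂ S)
              * (↑(((t.map Ul).prod)⁻¹ : (Module.End ℂ S)ˣ) * ↑(Ul a)⁻¹)
            = ↑(Ul a) * (↑((t.map Ul).prod : (Module.End ℂ S)ˣ) * ↑w
                * ↑(((t.map Ul).prod)⁻¹ : (Module.End ℂ S)ˣ)) * ↑(Ul a)⁻¹ := by
              noncomm_ring
          _ = ↑(Ul a) * ↑(((t.map fun a => refl Bf a.1 a.2).prod) w) * ↑(Ul a)⁻¹ := by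
              rw [iht w]
          _ = ↑(refl Bf a.1 a.2 (((t.map fun a => refl Bf a.1 a.2).prod) w)) :=
              hUconj a _
    obtain ⟨k, g, hk, hgG, hpkg⟩ := hsub p hpmem
    refine ⟨g, hgG, ?_⟩
    intro w
    have hadp : (↑p : Module.End ℂ S) * ↑w * ↑(p⁻¹ : (Module.End ℂ S)ˣ) = ↑(f w) := by
      rw [hpdef, hconjl l w, ← hl]
    have hgeq : g = k⁻¹ * p := by rw [hpkg, inv_mul_cancel_left]
    rw [hgeq, mul_inv_rev, inv_inv, Units.val_mul, Units.val_mul]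
    have hfwV : (↑(f w) : Module.End ℂ S) ∈ V := (f w).2
    calc (↑(k⁻¹ : (Module.End ℂ S)ˣ) * ↑p) * (↑w : Module.End ℂ S)
          * (↑(p⁻¹ : (Module.End ℂ S)ˣ) * ↑k)
        = ↑(k⁻¹ : (Module.End ℂ S)ˣ) * (↑p * ↑w * ↑(p⁻¹ : (Module.End ℂ S)ˣ)) * ↑k := by
          noncomm_ring
      _ = ↑(k⁻¹ : (Module.End ℂ S)ˣ) * ↑(f w) * ↑k := by rw [hadp]
      _ = ↑(f w) * ↑(k⁻¹ : (Module.End ℂ S)ˣ) * ↑k := by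
          rw [hkinv k hk ↑(f w) hfwV]
      _ = ↑(f w) := Units.inv_mul_cancel_right _ _
end

section
/- Let (S,V,h) be a spin space of even dimension m and Lpin(h) = {a ∈ GL(S) : aVa⁻¹ = V}. Then Lpin(h) = ℂ^×·Pin(h), and there is a split exact sequence 1 → ℂ^×·Spin(h) → Lpin(h) → ℤ₂ → 1, where the map to ℤ₂ is induced by conjugation on the one-dimensional space A(h) (equivalently by the ℤ₂-grading a ↦ aηa⁻¹η⁻¹ = ±1). -/
open Module

namespace LpinAux
set_option linter.unusedSectionVars false
set_option linter.unnecessarySimpa false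
set_option maxHeartbeats 1000000
variable {S : Type*} [AddCommGroup S] [Module ℂ S] [FiniteDimensional ℂ S]
variable {m : ℕ} {e : Fin m → Module.End ℂ S}



lemma pm (n : ℕ) : (-1 : Module.End ℂ S) ^ n = 1 ∨ (-1 : Module.End ℂ S) ^ n = -1 := by
  rcases Nat.even_or_odd n with h | h
  · exact Or.inl h.neg_one_pow
  · exact Or.inr h.neg_one_pow

/-- L0: moving a generator across a product of generators. -/
lemma sign_lemma (hanti : ∀ i j : Fin m, i ≠ j → e i * e j = -(e j * e i))
    (j : Fin m) : ∀ L : List (Fin m),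
    e j * (L.map e).prod =
      (-1 : Module.End ℂ S) ^ (L.filter (· ≠ j)).length * ((L.map e).prod * e j)
  | [] => by simp
  | i :: L => by
    have IH := sign_lemma hanti j L
    by_cases h : i = j
    · subst h
      have hf : ((i :: L).filter (· ≠ i)).length = (L.filter (· ≠ i)).length := by
        simp [List.filter_cons]
      rw [hf, List.map_cons, List.prod_cons]
      rcases pm (S := S) (L.filter (· ≠ i)).length with hP | hP <;> rw [hP] at IH ⊢
      · simp only [one_mul] at IH ⊢; rw [IH, ← mul_assoc, IH, mul_assoc]
      · simp only [neg_one_mul] at IH ⊢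
        rw [IH, mul_neg, ← mul_assoc, IH, neg_mul, mul_assoc]
    · have hf : ((i :: L).filter (· ≠ j)).length = (L.filter (· ≠ j)).length + 1 := by
        simp [List.filter_cons, h]
      rw [hf, List.map_cons, List.prod_cons, pow_succ]
      have key : e j * (e i * (L.map e).prod) = -(e i * (e j * (L.map e).prod)) := by
        rw [← mul_assoc, hanti j i (fun hh => h hh.symm), neg_mul, mul_assoc]
      rw [key, IH]
      rcases pm (S := S) (L.filter (· ≠ j)).length with hP | hP <;> rw [hP] <;>
        simp [mul_assoc]

/-- trace of an element anticommuting with a unit vanishes. -/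
lemma trace_zero_of_anticomm {x : Module.End ℂ S} (u : (Module.End ℂ S)ˣ)
    (h : (u : Module.End ℂ S) * x = -(x * u)) : LinearMap.trace ℂ S x = 0 := by
  have h2 : (u : Module.End ℂ S) * x * ↑u⁻¹ = -x := by
    rw [h, neg_mul, mul_assoc, Units.mul_inv, mul_one]
  have h1 : LinearMap.trace ℂ S ((u : Module.End ℂ S) * x * ↑u⁻¹) = LinearMap.trace ℂ S x := by
    rw [LinearMap.trace_mul_comm, ← mul_assoc, Units.inv_mul, one_mul]
  rw [h2, map_neg] at h1
  linear_combination (-1/2 : ℂ) * h1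



open scoped Classical in
noncomputable def vUnit (x : Module.End ℂ S) (h : x * x = 1 ∨ x * x = -1) :
    (Module.End ℂ S)ˣ :=
  if h1 : x * x = 1 then ⟨x, x, h1, h1⟩ else
    ⟨x, -x, by rw [mul_neg, h.resolve_left h1, neg_neg],
      by rw [neg_mul, h.resolve_left h1, neg_neg]⟩

@[simp] lemma vUnit_val (x : Module.End ℂ S) (h) :
    (vUnit x h : Module.End ℂ S) = x := by
  rw [vUnit]; split <;> rfl

lemma filter_length_nodup {l : List (Fin m)} (hl : l.Nodup) (j : Fin m) :
    (l.filter (· ≠ j)).length = if j ∈ l then l.length - 1 else l.length := by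
  induction l with
  | nil => simp
  | cons a l ih =>
    rcases List.nodup_cons.mp hl with ⟨ha, hl'⟩
    by_cases haj : a = j
    · subst haj
      have hfl : l.filter (· ≠ a) = l := by
        apply List.filter_eq_self.mpr
        intro x hx
        simp only [ne_eq, decide_eq_true_eq]
        rintro rfl; exact ha hx
      simp [List.filter_cons, hfl]
      exact fun x hx hxa => ha (hxa ▸ hx)
    · have hstep : ((a :: l).filter (· ≠ j)).length = (l.filter (· ≠ j)).length + 1 := by
        simp [List.filter_cons, haj]
      rw [hstep, ih hl']
      by_cases hj : j ∈ l
      · rw [if_pos hj, if_pos (List.mem_cons_of_mem a hj)]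
        have h1 : 1 ≤ l.length := List.length_pos_iff.mpr (List.ne_nil_of_mem hj)
        simp only [List.length_cons]
        omega
      · rw [if_neg hj, if_neg (by
          intro hmem
          rcases List.mem_cons.mp hmem with h | h
          · exact haj h.symm
          · exact hj h)]
        simp

noncomputable def eProd (e : Fin m → Module.End ℂ S)
    (hunit : ∀ i, e i * e i = 1 ∨ e i * e i = -1) (L : List (Fin m)) :
    (Module.End ℂ S)ˣ :=
  (L.map (fun i => vUnit (e i) (hunit i))).prod

lemma eProd_val (hunit : ∀ i, e i * e i = 1 ∨ e i * e i = -1) (L : List (Fin m)) :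
    ((eProd e hunit L : (Module.End ℂ S)ˣ) : Module.End ℂ S) = (L.map e).prod := by
  unfold eProd
  rw [← Units.coeHom_apply, map_list_prod]
  simp [List.map_map, Function.comp_def]

lemma conj_sign_inv (u : (Module.End ℂ S)ˣ) (σ y : Module.End ℂ S)
    (hσ2 : σ * σ = 1) (hc : ∀ z : Module.End ℂ S, σ * z = z * σ)
    (h : y * ↑u = σ * (↑u * y)) :
    y * ((u⁻¹ : (Module.End ℂ S)ˣ) : Module.End ℂ S) =
      σ * (((u⁻¹ : (Module.End ℂ S)ˣ) : Module.End ℂ S) * y) := by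
  have h1 : ((u⁻¹ : (Module.End ℂ S)ˣ) : Module.End ℂ S) * y =
      σ * (y * ((u⁻¹ : (Module.End ℂ S)ˣ) : Module.End ℂ S)) := by
    have h2 := congrArg
      (fun z => ((u⁻¹ : (Module.End ℂ S)ˣ) : Module.End ℂ S) * z *
        ((u⁻¹ : (Module.End ℂ S)ˣ) : Module.End ℂ S)) h
    rw [← mul_assoc, Units.mul_inv_cancel_right, ← mul_assoc, ← mul_assoc,
      ← hc ((u⁻¹ : (Module.End ℂ S)ˣ) : Module.End ℂ S), mul_assoc σ, Units.inv_mul,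
      mul_one, mul_assoc σ] at h2
    exact h2
  rw [h1, ← mul_assoc, hσ2, one_mul]

lemma exists_odd_j (hme : Even m) {I J : Finset (Fin m)} (hIJ : I ≠ J) :
    ∃ j : Fin m, Odd (((I.sort (· ≤ ·)).filter (· ≠ j)).length
      + ((J.sort (· ≤ ·)).filter (· ≠ j)).length) := by
  have hlen : ∀ (K : Finset (Fin m)) (j : Fin m),
      ((K.sort (· ≤ ·)).filter (· ≠ j)).length = if j ∈ K then K.card - 1 else K.card := by
    intro K j
    rw [filter_length_nodup (K.sort_nodup (· ≤ ·)) j, Finset.length_sort]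
    by_cases h : j ∈ K <;> simp [h, Finset.mem_sort]
  obtain ⟨mk, hmk⟩ := hme
  rcases Nat.even_or_odd (I.card + J.card) with hpar | hpar
  · have hex : ∃ j, ¬ (j ∈ I ↔ j ∈ J) := by
      by_contra hc
      push_neg at hc
      exact hIJ (Finset.ext fun j => hc j)
    obtain ⟨j, hj⟩ := hex
    refine ⟨j, ?_⟩
    rw [Nat.odd_iff]
    rw [Nat.even_iff] at hpar
    by_cases h1 : j ∈ I
    · have h2 : j ∉ J := fun h => hj ⟨fun _ => h, fun _ => h1⟩
      have hc1 : 1 ≤ I.card := Finset.card_pos.mpr ⟨j, h1⟩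
      rw [hlen I j, hlen J j, if_pos h1, if_neg h2]
      omega
    · have h2 : j ∈ J := by
        by_contra h2
        exact hj ⟨fun h => absurd h h1, fun h => absurd h h2⟩
      have hc1 : 1 ≤ J.card := Finset.card_pos.mpr ⟨j, h2⟩
      rw [hlen I j, hlen J j, if_neg h1, if_pos h2]
      omega
  · have hex : ∃ j, (j ∈ I ∧ j ∈ J) ∨ (j ∉ I ∧ j ∉ J) := by
      by_contra hc
      push_neg at hc
      have hunion : I ∪ J = Finset.univ := Finset.eq_univ_of_forall (fun j => by
        by_cases hji : j ∈ I
        · exact Finset.mem_union_left _ hji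
        · exact Finset.mem_union_right _ ((hc j).2 hji))
      have hinter : I ∩ J = ∅ := by
        apply Finset.eq_empty_of_forall_notMem
        intro j hj
        rcases Finset.mem_inter.mp hj with ⟨hj1, hj2⟩
        exact (hc j).1 hj1 hj2
      have hcards : I.card + J.card = m := by
        have hcc := Finset.card_union_add_card_inter I J
        rw [hunion, hinter] at hcc
        simpa [Finset.card_univ] using hcc.symm
      rw [Nat.odd_iff] at hpar
      omega
    obtain ⟨j, hj⟩ := hex
    refine ⟨j, ?_⟩
    rw [Nat.odd_iff]
    rw [Nat.odd_iff] at hpar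
    rcases hj with ⟨h1, h2⟩ | ⟨h1, h2⟩
    · have hc1 : 1 ≤ I.card := Finset.card_pos.mpr ⟨j, h1⟩
      have hc2 : 1 ≤ J.card := Finset.card_pos.mpr ⟨j, h2⟩
      rw [hlen I j, hlen J j, if_pos h1, if_pos h2]
      omega
    · rw [hlen I j, hlen J j, if_neg h1, if_neg h2]
      omega


noncomputable def PF (e : Fin m → Module.End ℂ S) (I : Finset (Fin m)) : Module.End ℂ S :=
  ((I.sort (· ≤ ·)).map e).prod

lemma neg_one_pow_sq (n : ℕ) :
    ((-1 : Module.End ℂ S) ^ n) * ((-1 : Module.End ℂ S) ^ n) = 1 := by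
  rw [← pow_add]
  exact Even.neg_one_pow ⟨n, rfl⟩

lemma neg_one_pow_comm (n : ℕ) (z : Module.End ℂ S) :
    (-1 : Module.End ℂ S) ^ n * z = z * (-1 : Module.End ℂ S) ^ n := by
  rcases pm (S := S) n with h | h <;> rw [h] <;> simp

lemma anticomm_of_signs {a b y : Module.End ℂ S}
    (h : (y * a = a * y ∧ y * b = -(b * y)) ∨ (y * a = -(a * y) ∧ y * b = b * y)) :
    y * (a * b) = -((a * b) * y) := by
  rcases h with ⟨h1, h2⟩ | ⟨h1, h2⟩
  · rw [← mul_assoc, h1, mul_assoc, h2]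
    simp [mul_assoc]
  · rw [← mul_assoc, h1, neg_mul, mul_assoc, h2]
    simp [mul_assoc]

lemma trace_PF_mul_inv_eq_zero (hme : Even m)
    (hanti : ∀ i j : Fin m, i ≠ j → e i * e j = -(e j * e i))
    (hunit : ∀ i, e i * e i = 1 ∨ e i * e i = -1)
    {I J : Finset (Fin m)} (hIJ : I ≠ J) :
    LinearMap.trace ℂ S (PF e I *
      ((eProd e hunit (J.sort (· ≤ ·)))⁻¹ : (Module.End ℂ S)ˣ)) = 0 := by
  obtain ⟨j, hodd⟩ := exists_odd_j hme hIJ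
  set kI := ((I.sort (· ≤ ·)).filter (· ≠ j)).length with hkI
  set kJ := ((J.sort (· ≤ ·)).filter (· ≠ j)).length with hkJ
  have hI : e j * PF e I =
      (-1 : Module.End ℂ S) ^ ((I.sort (· ≤ ·)).filter (· ≠ j)).length * (PF e I * e j) := by
    unfold PF; exact sign_lemma hanti j (I.sort (· ≤ ·))
  have hJraw := sign_lemma hanti j (J.sort (· ≤ ·))
  set u := eProd e hunit (J.sort (· ≤ ·)) with hu
  have hJu : e j * (u : Module.End ℂ S) =
      (-1 : Module.End ℂ S) ^ kJ * ((u : Module.End ℂ S) * e j) := by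
    rw [eProd_val hunit]
    exact hJraw
  have hJinv := conj_sign_inv u ((-1 : Module.End ℂ S) ^ kJ) (e j)
    (neg_one_pow_sq kJ) (neg_one_pow_comm kJ) hJu
  -- parity split
  have hkey : e j * (PF e I * ((u⁻¹ : (Module.End ℂ S)ˣ) : Module.End ℂ S)) =
      -((PF e I * ((u⁻¹ : (Module.End ℂ S)ˣ) : Module.End ℂ S)) * e j) := by
    apply anticomm_of_signs
    rcases Nat.even_or_odd kI with hpI | hpI
    · have hpJ : Odd kJ := by
        rcases Nat.even_or_odd kJ with h | h
        · exact absurd (hpI.add h) (Nat.not_even_iff_odd.mpr hodd)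
        · exact h
      left
      constructor
      · rw [hI, hpI.neg_one_pow, one_mul]
      · rw [hJinv, hpJ.neg_one_pow, neg_one_mul]
    · have hpJ : Even kJ := by
        rcases Nat.even_or_odd kJ with h | h
        · exact h
        · exact absurd (Odd.add_odd hpI h) (by
            rw [Nat.odd_iff] at hodd
            rw [Nat.even_iff]
            omega)
      right
      constructor
      · rw [hI, hpI.neg_one_pow, neg_one_mul]
      · rw [hJinv, hpJ.neg_one_pow, one_mul]
  have := trace_zero_of_anticomm (vUnit (e j) (hunit j)) (by rw [vUnit_val]; exact hkey)
  exact this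

lemma pf_linearIndependent (hme : Even m) (hdim : Module.finrank ℂ S = 2 ^ (m / 2))
    (hanti : ∀ i j : Fin m, i ≠ j → e i * e j = -(e j * e i))
    (hunit : ∀ i, e i * e i = 1 ∨ e i * e i = -1) :
    LinearIndependent ℂ (PF e) := by
  rw [Fintype.linearIndependent_iff]
  intro g hg J
  set u := eProd e hunit (J.sort (· ≤ ·)) with hu
  set y : Module.End ℂ S := ((u⁻¹ : (Module.End ℂ S)ˣ) : Module.End ℂ S) with hy
  have h0 : (∑ I : Finset (Fin m), g I • PF e I) * y = 0 := by rw [hg, zero_mul]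
  rw [Finset.sum_mul] at h0
  have h1 := congrArg (LinearMap.trace ℂ S) h0
  rw [map_sum, map_zero] at h1
  have h2 : ∀ I ∈ Finset.univ, I ≠ J →
      LinearMap.trace ℂ S (g I • PF e I * y) = 0 := by
    intro I _ hIJ
    rw [smul_mul_assoc, map_smul, trace_PF_mul_inv_eq_zero hme hanti hunit hIJ, smul_zero]
  rw [Finset.sum_eq_single_of_mem J (Finset.mem_univ J) h2] at h1
  have h3 : PF e J * y = 1 := by
    rw [hy, hu]
    unfold PF
    rw [← eProd_val hunit (J.sort (· ≤ ·)), Units.mul_inv]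
  rw [smul_mul_assoc, h3, map_smul, LinearMap.trace_one] at h1
  have hN : (Module.finrank ℂ S : ℂ) ≠ 0 := by
    rw [hdim]
    exact_mod_cast (Nat.two_pow_pos (m / 2)).ne'
  rcases smul_eq_zero.mp h1 with h | h
  · exact h
  · exact absurd h hN

lemma pf_span_top (hme : Even m) (hdim : Module.finrank ℂ S = 2 ^ (m / 2))
    (hanti : ∀ i j : Fin m, i ≠ j → e i * e j = -(e j * e i))
    (hunit : ∀ i, e i * e i = 1 ∨ e i * e i = -1) :
    Submodule.span ℂ (Set.range (PF e)) = ⊤ := by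
  apply (pf_linearIndependent hme hdim hanti hunit).span_eq_top_of_card_eq_finrank
  rw [Fintype.card_finset, Fintype.card_fin, Module.finrank_linearMap ℂ ℂ S S, hdim, ← pow_add]
  congr 1
  obtain ⟨k, hk⟩ := hme
  omega

lemma commutant (hme : Even m) (hdim : Module.finrank ℂ S = 2 ^ (m / 2))
    (hanti : ∀ i j : Fin m, i ≠ j → e i * e j = -(e j * e i))
    (hunit : ∀ i, e i * e i = 1 ∨ e i * e i = -1)
    {x : Module.End ℂ S} (hx : ∀ i, x * e i = e i * x) :
    ∃ c : ℂ, x = c • (1 : Module.End ℂ S) := by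
  have hprod : ∀ L : List (Fin m), Commute x ((L.map e).prod) := by
    intro L
    induction L with
    | nil => simpa using Commute.one_right x
    | cons a L ih =>
        rw [List.map_cons, List.prod_cons]
        exact Commute.mul_right (hx a) ih
  have hall : ∀ y : Module.End ℂ S, Commute x y := by
    intro y
    have hy : y ∈ Submodule.span ℂ (Set.range (PF e)) := by
      rw [pf_span_top hme hdim hanti hunit]; trivial
    induction hy using Submodule.span_induction with
    | mem z hz =>
        obtain ⟨I, rfl⟩ := hz
        exact hprod (I.sort (· ≤ ·))
    | zero => exact Commute.zero_right x
    | add a b _ _ ha hb => exact Commute.add_right ha hb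
    | smul c a _ ha => exact ha.smul_right c
  -- rank one argument
  have hS : Nontrivial S := by
    have hpos : 0 < Module.finrank ℂ S := by
      rw [hdim]; exact Nat.two_pow_pos (m / 2)
    exact Module.nontrivial_of_finrank_pos hpos
  obtain ⟨v₀, hv₀⟩ := exists_ne (0 : S)
  have hφ : ∃ φ : Module.Dual ℂ S, φ v₀ ≠ 0 := by
    by_contra hcon
    push_neg at hcon
    exact hv₀ ((Module.forall_dual_apply_eq_zero_iff ℂ v₀).mp hcon)
  obtain ⟨φ, hφ⟩ := hφ
  refine ⟨(φ v₀)⁻¹ * φ (x v₀), ?_⟩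
  apply LinearMap.ext
  intro v
  have hcom := hall (φ.smulRight v)
  have hev := congrArg (fun f : Module.End ℂ S => f v₀) hcom
  simp only [Module.End.mul_apply, LinearMap.smulRight_apply, map_smul] at hev
  have : x v = ((φ v₀)⁻¹ * φ (x v₀)) • v := by
    rw [mul_smul]
    rw [← hev]
    rw [smul_smul, inv_mul_cancel₀ hφ, one_smul]
  simpa using this



/-- bilinear form: products of elements of V are scalar up to swap. -/
lemma bform (hanti : ∀ i j : Fin m, i ≠ j → e i * e j = -(e j * e i))
    (hunit : ∀ i, e i * e i = 1 ∨ e i * e i = -1) :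
    ∀ v ∈ Submodule.span ℝ (Set.range e), ∀ w ∈ Submodule.span ℝ (Set.range e),
      ∃ r : ℝ, v * w + w * v = r • (1 : Module.End ℂ S) := by
  have inner : ∀ i : Fin m, ∀ w ∈ Submodule.span ℝ (Set.range e),
      ∃ r : ℝ, e i * w + w * e i = r • (1 : Module.End ℂ S) := by
    intro i w hw
    induction hw using Submodule.span_induction with
    | mem x hx =>
        obtain ⟨j, rfl⟩ := hx
        by_cases hij : i = j
        · subst hij
          rcases hunit i with h | h
          · exact ⟨2, by rw [h, two_smul]⟩
          · refine ⟨-2, ?_⟩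
            rw [h, neg_smul, two_smul]
            abel
        · refine ⟨0, ?_⟩
          rw [hanti i j hij, zero_smul, neg_add_cancel]
    | zero => exact ⟨0, by simp⟩
    | add x y hx hy ihx ihy =>
        obtain ⟨r1, h1⟩ := ihx
        obtain ⟨r2, h2⟩ := ihy
        refine ⟨r1 + r2, ?_⟩
        rw [mul_add, add_mul, add_smul, ← h1, ← h2]
        abel
    | smul a x hx ih =>
        obtain ⟨r, h⟩ := ih
        exact ⟨a * r, by rw [mul_smul_comm, smul_mul_assoc, ← smul_add, h, smul_smul]⟩
  intro v hv
  induction hv using Submodule.span_induction with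
  | mem x hx =>
      obtain ⟨i, rfl⟩ := hx
      exact inner i
  | zero => exact fun w hw => ⟨0, by simp⟩
  | add x y hx hy ihx ihy =>
      intro w hw
      obtain ⟨r1, h1⟩ := ihx w hw
      obtain ⟨r2, h2⟩ := ihy w hw
      refine ⟨r1 + r2, ?_⟩
      rw [mul_add, add_mul, add_smul, ← h1, ← h2]
      abel
  | smul a x hx ih =>
      intro w hw
      obtain ⟨r, h⟩ := ih w hw
      exact ⟨a * r, by rw [smul_mul_assoc, mul_smul_comm, ← smul_add, h, smul_smul]⟩

lemma eta_anticomm (hme : Even m) (hm0 : 0 < m)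
    (hanti : ∀ i j : Fin m, i ≠ j → e i * e j = -(e j * e i))
    {η : Module.End ℂ S} (hη : η = (List.ofFn e).prod) (j : Fin m) :
    e j * η = -(η * e j) := by
  have h := sign_lemma hanti j (List.finRange m)
  rw [List.ofFn_eq_map] at hη
  have hlen : ((List.finRange m).filter (· ≠ j)).length = m - 1 := by
    rw [filter_length_nodup (List.nodup_finRange m) j]
    simp
  have hodd : Odd (m - 1) := by
    obtain ⟨k, hk⟩ := hme
    rw [Nat.odd_iff]
    omega
  rw [hη, h, hlen, hodd.neg_one_pow, neg_one_mul]

lemma eta_anticomm_V (hme : Even m) (hm0 : 0 < m)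
    (hanti : ∀ i j : Fin m, i ≠ j → e i * e j = -(e j * e i))
    {η : Module.End ℂ S} (hη : η = (List.ofFn e).prod) :
    ∀ v ∈ Submodule.span ℝ (Set.range e), v * η = -(η * v) := by
  intro v hv
  induction hv using Submodule.span_induction with
  | mem x hx =>
      obtain ⟨j, rfl⟩ := hx
      exact eta_anticomm hme hm0 hanti hη j
  | zero => simp
  | add x y hx hy ihx ihy => rw [add_mul, mul_add, ihx, ihy, neg_add]
  | smul a x hx ih => rw [smul_mul_assoc, mul_smul_comm, ih, smul_neg]

lemma gen_conj_mem (hanti : ∀ i j : Fin m, i ≠ j → e i * e j = -(e j * e i))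
    (hunit : ∀ i, e i * e i = 1 ∨ e i * e i = -1)
    {x v : Module.End ℂ S} (hx : x ∈ Submodule.span ℝ (Set.range e))
    (hx2 : x * x = 1 ∨ x * x = -1) (hv : v ∈ Submodule.span ℝ (Set.range e)) :
    x * v * x ∈ Submodule.span ℝ (Set.range e) := by
  obtain ⟨r, hr⟩ := bform hanti hunit x hx v hv
  have hxv : x * v = r • (1 : Module.End ℂ S) - v * x := eq_sub_of_add_eq hr
  have hexp : x * v * x = r • x - v * (x * x) := by
    rw [hxv, sub_mul, smul_mul_assoc, one_mul, mul_assoc]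
  rcases hx2 with h | h
  · rw [hexp, h, mul_one]
    exact Submodule.sub_mem _ (Submodule.smul_mem _ r hx) hv
  · rw [hexp, h, mul_neg_one, sub_neg_eq_add]
    exact Submodule.add_mem _ (Submodule.smul_mem _ r hx) hv

lemma unit_inv_val {u : (Module.End ℂ S)ˣ}
    (h : (u : Module.End ℂ S) * u = 1 ∨ (u : Module.End ℂ S) * u = -1) :
    ((u⁻¹ : (Module.End ℂ S)ˣ) : Module.End ℂ S) = u ∨
      ((u⁻¹ : (Module.End ℂ S)ˣ) : Module.End ℂ S) = -(u : Module.End ℂ S) := by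
  rcases h with h | h
  · exact Or.inl (Units.inv_eq_of_mul_eq_one_right h)
  · refine Or.inr (Units.inv_eq_of_mul_eq_one_right ?_)
    rw [mul_neg, h, neg_neg]

lemma gen_conj_mem' (hanti : ∀ i j : Fin m, i ≠ j → e i * e j = -(e j * e i))
    (hunit : ∀ i, e i * e i = 1 ∨ e i * e i = -1)
    {u : (Module.End ℂ S)ˣ} (huV : (u : Module.End ℂ S) ∈ Submodule.span ℝ (Set.range e))
    (hu2 : (u : Module.End ℂ S) * u = 1 ∨ (u : Module.End ℂ S) * u = -1)
    {v : Module.End ℂ S} (hv : v ∈ Submodule.span ℝ (Set.range e)) :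
    (u : Module.End ℂ S) * v * ((u⁻¹ : (Module.End ℂ S)ˣ) : Module.End ℂ S)
      ∈ Submodule.span ℝ (Set.range e) ∧
    ((u⁻¹ : (Module.End ℂ S)ˣ) : Module.End ℂ S) * v * (u : Module.End ℂ S)
      ∈ Submodule.span ℝ (Set.range e) := by
  have hm := gen_conj_mem hanti hunit huV hu2 hv
  rcases unit_inv_val hu2 with h | h <;> rw [h]
  · exact ⟨hm, hm⟩
  · constructor
    · rw [mul_neg]
      exact Submodule.neg_mem _ hm
    · rw [neg_mul, neg_mul]
      exact Submodule.neg_mem _ hm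



lemma eProd_def (e : Fin m → Module.End ℂ S)
    (hunit : ∀ i, e i * e i = 1 ∨ e i * e i = -1) (L : List (Fin m)) :
    eProd e hunit L = (L.map (fun i => vUnit (e i) (hunit i))).prod := rfl

lemma conj_mul_units (a b : (Module.End ℂ S)ˣ) (v : Module.End ℂ S) :
    ((↑(a * b) : Module.End ℂ S)) * v * ↑(a * b)⁻¹ =
      ↑a * ((↑b : Module.End ℂ S) * v * ↑b⁻¹) * ↑a⁻¹ := by
  rw [mul_inv_rev, Units.val_mul, Units.val_mul]
  simp [mul_assoc]

lemma pin_conj_mem (hanti : ∀ i j : Fin m, i ≠ j → e i * e j = -(e j * e i))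
    (hunit : ∀ i, e i * e i = 1 ∨ e i * e i = -1)
    {Pin : Subgroup (Module.End ℂ S)ˣ}
    (hPin : Pin = Subgroup.closure
      {u : (Module.End ℂ S)ˣ | (u : Module.End ℂ S) ∈ Submodule.span ℝ (Set.range e) ∧
        ((u : Module.End ℂ S) * u = 1 ∨ (u : Module.End ℂ S) * u = -1)})
    {p : (Module.End ℂ S)ˣ} (hp : p ∈ Pin) :
    (∀ v ∈ Submodule.span ℝ (Set.range e),
        (p : Module.End ℂ S) * v * ((p⁻¹ : (Module.End ℂ S)ˣ) : Module.End ℂ S)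
          ∈ Submodule.span ℝ (Set.range e)) ∧
    (∀ v ∈ Submodule.span ℝ (Set.range e),
        ((p⁻¹ : (Module.End ℂ S)ˣ) : Module.End ℂ S) * v * (p : Module.End ℂ S)
          ∈ Submodule.span ℝ (Set.range e)) := by
  rw [hPin] at hp
  induction hp using Subgroup.closure_induction with
  | mem u hu =>
      obtain ⟨huV, hu2⟩ := hu
      exact ⟨fun v hv => (gen_conj_mem' hanti hunit huV hu2 hv).1,
        fun v hv => (gen_conj_mem' hanti hunit huV hu2 hv).2⟩
  | one => constructor <;> intro v hv <;> simpa using hv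
  | mul a b ha hb iha ihb =>
      constructor
      · intro v hv
        rw [conj_mul_units]
        exact iha.1 _ (ihb.1 v hv)
      · intro v hv
        have : ((↑(a * b)⁻¹ : Module.End ℂ S)) * v * ↑(a * b) =
            ↑b⁻¹ * ((↑a⁻¹ : Module.End ℂ S) * v * ↑a) * ↑b := by
          rw [mul_inv_rev, Units.val_mul, Units.val_mul]
          simp [mul_assoc]
        rw [this]
        exact ihb.2 _ (iha.2 v hv)
  | inv a ha iha =>
      constructor
      · intro v hv
        rw [inv_inv]
        exact iha.2 v hv
      · intro v hv
        rw [inv_inv]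
        exact iha.1 v hv

lemma pin_eta_sign (hme : Even m) (hm0 : 0 < m)
    (hanti : ∀ i j : Fin m, i ≠ j → e i * e j = -(e j * e i))
    {η : Module.End ℂ S} (hη : η = (List.ofFn e).prod)
    {Pin : Subgroup (Module.End ℂ S)ˣ}
    (hPin : Pin = Subgroup.closure
      {u : (Module.End ℂ S)ˣ | (u : Module.End ℂ S) ∈ Submodule.span ℝ (Set.range e) ∧
        ((u : Module.End ℂ S) * u = 1 ∨ (u : Module.End ℂ S) * u = -1)})
    {p : (Module.End ℂ S)ˣ} (hp : p ∈ Pin) :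
    (p : Module.End ℂ S) * η = η * p ∨ (p : Module.End ℂ S) * η = -(η * p) := by
  rw [hPin] at hp
  induction hp using Subgroup.closure_induction with
  | mem u hu =>
      obtain ⟨huV, _⟩ := hu
      right
      exact eta_anticomm_V hme hm0 hanti hη _ huV
  | one => left; simp
  | mul a b ha hb iha ihb =>
      rw [Units.val_mul, mul_assoc]
      rcases ihb with h | h <;> rcases iha with h' | h'
      · left; rw [h, ← mul_assoc, h', mul_assoc]
      · right; rw [h, ← mul_assoc, h', neg_mul, mul_assoc]
      · right; rw [h, mul_neg, ← mul_assoc, h', mul_assoc]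
      · left; rw [h, mul_neg, ← mul_assoc, h', neg_mul, neg_neg, mul_assoc]
  | inv a ha iha =>
      rcases iha with h | h
      · left
        have := conj_sign_inv a 1 η (by rw [one_mul]) (fun z => by rw [one_mul, mul_one])
          (by rw [one_mul, ← h])
        rw [one_mul] at this
        exact this.symm
      · right
        have hflip : η * ↑a = (-1) * (↑a * η) := by
          rw [neg_one_mul, h, neg_neg]
        have := conj_sign_inv a (-1) η (by rw [neg_one_mul, neg_neg]) (fun z => by simp) hflip
        rw [neg_one_mul] at this
        rw [this, neg_neg]

lemma normalize {w : Module.End ℂ S} (hw : w ∈ Submodule.span ℝ (Set.range e))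
    {t : ℝ} (hw2 : w * w = t • (1 : Module.End ℂ S)) (ht : t ≠ 0) :
    ∃ (z : Module.End ℂ S) (c : ℝ), 0 < c ∧ z = c • w ∧
      z ∈ Submodule.span ℝ (Set.range e) ∧ (z * z = 1 ∨ z * z = -1) := by
  set c : ℝ := (Real.sqrt |t|)⁻¹ with hc
  have habs : 0 < |t| := abs_pos.mpr ht
  have hcpos : 0 < c := by
    rw [hc]
    exact inv_pos.mpr (Real.sqrt_pos.mpr habs)
  refine ⟨c • w, c, hcpos, rfl, Submodule.smul_mem _ c hw, ?_⟩
  have hzz : (c • w) * (c • w) = (c * c * t) • (1 : Module.End ℂ S) := by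
    rw [smul_mul_assoc, mul_smul_comm, hw2, smul_smul, smul_smul]
  have hcc : c * c = |t|⁻¹ := by
    rw [hc, ← mul_inv, Real.mul_self_sqrt (le_of_lt habs)]
  have hcct : c * c * t = |t|⁻¹ * t := by
    rw [hcc]
  rcases lt_or_gt_of_ne ht with hneg | hpos
  · right
    rw [hzz, hcct, abs_of_neg hneg, ← neg_inv, neg_mul, inv_mul_cancel₀ ht, neg_smul, one_smul]
  · left
    rw [hzz, hcct, abs_of_pos hpos, inv_mul_cancel₀ ht, one_smul]

lemma frame_step (hme : Even m) (hm0 : 0 < m)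
    (hanti : ∀ i j : Fin m, i ≠ j → e i * e j = -(e j * e i))
    (hunit : ∀ i, e i * e i = 1 ∨ e i * e i = -1)
    {η : Module.End ℂ S} (hη : η = (List.ofFn e).prod)
    {Pin : Subgroup (Module.End ℂ S)ˣ}
    (hPin : Pin = Subgroup.closure
      {u : (Module.End ℂ S)ˣ | (u : Module.End ℂ S) ∈ Submodule.span ℝ (Set.range e) ∧
        ((u : Module.End ℂ S) * u = 1 ∨ (u : Module.End ℂ S) * u = -1)})
    {x y : Module.End ℂ S} (hxV : x ∈ Submodule.span ℝ (Set.range e))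
    (hyV : y ∈ Submodule.span ℝ (Set.range e))
    (hsq : (x * x = 1 ∧ y * y = 1) ∨ (x * x = -1 ∧ y * y = -1)) :
    ∃ q : (Module.End ℂ S)ˣ, q ∈ Pin ∧
      ((q : Module.End ℂ S) * x * ((q⁻¹ : (Module.End ℂ S)ˣ) : Module.End ℂ S) = y) ∧
      ∀ v ∈ Submodule.span ℝ (Set.range e), v * x = -(x * v) → v * y = -(y * v) →
        (q : Module.End ℂ S) * v * ((q⁻¹ : (Module.End ℂ S)ˣ) : Module.End ℂ S) = v := by
  obtain ⟨r, hr⟩ := bform hanti hunit x hxV y hyV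
  obtain ⟨σ, hσpm, hx2, hy2⟩ : ∃ σ : ℝ, (σ = 1 ∨ σ = -1) ∧
      x * x = σ • (1 : Module.End ℂ S) ∧ y * y = σ • (1 : Module.End ℂ S) := by
    rcases hsq with ⟨h1, h2⟩ | ⟨h1, h2⟩
    · exact ⟨1, Or.inl rfl, by rw [h1, one_smul], by rw [h2, one_smul]⟩
    · exact ⟨-1, Or.inr rfl, by rw [h1, neg_smul, one_smul],
        by rw [h2, neg_smul, one_smul]⟩
  have hplus : (x + y) * (x + y) = (σ + (r + σ)) • (1 : Module.End ℂ S) := by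
    have hexp : (x + y) * (x + y) = x * x + ((x * y + y * x) + y * y) := by noncomm_ring
    rw [hexp, hx2, hr, hy2, ← add_smul, ← add_smul]
  have hminus : (x - y) * (x - y) = (σ + (-r + σ)) • (1 : Module.End ℂ S) := by
    have hexp : (x - y) * (x - y) = x * x + (-(x * y + y * x) + y * y) := by noncomm_ring
    rw [hexp, hx2, hr, hy2, ← neg_smul, ← add_smul, ← add_smul]
  by_cases ht : σ + (r + σ) = 0
  · -- case B : use x - y and η
    have ht' : σ + (-r + σ) ≠ 0 := by
      rcases hσpm with h | h <;> (intro hcon; rw [h] at ht hcon; linarith)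
    obtain ⟨z, c, hc, hzw, hzV, hz2⟩ := normalize (Submodule.sub_mem _ hxV hyV) hminus ht'
    have hwx : (x - y) * x = (-y) * (x - y) := by
      have h1 : (x - y) * x = x * x - y * x := by noncomm_ring
      have h2 : (-y) * (x - y) = y * y - y * x := by noncomm_ring
      rw [h1, h2, hx2, hy2]
    have hzx : z * x = (-y) * z := by
      rw [hzw, smul_mul_assoc, mul_smul_comm, hwx]
    set u1 := vUnit z hz2 with hu1
    have hu1v : (u1 : Module.End ℂ S) = z := vUnit_val z hz2
    have hu1Pin : u1 ∈ Pin := by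
      rw [hPin]
      exact Subgroup.subset_closure ⟨by rw [hu1v]; exact hzV, by rw [hu1v]; exact hz2⟩
    have conj1 : (u1 : Module.End ℂ S) * x * ↑u1⁻¹ = -y := by
      calc (u1 : Module.End ℂ S) * x * ↑u1⁻¹ = (z * x) * ↑u1⁻¹ := by rw [hu1v]
        _ = ((-y) * z) * ↑u1⁻¹ := by rw [hzx]
        _ = (-y) * ((u1 : Module.End ℂ S) * ↑u1⁻¹) := by rw [hu1v, mul_assoc]
        _ = -y := by rw [Units.mul_inv, mul_one]
    have conjv : ∀ v ∈ Submodule.span ℝ (Set.range e), v * x = -(x * v) → v * y = -(y * v) →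
        (u1 : Module.End ℂ S) * v * ↑u1⁻¹ = -v := by
      intro v hv hvx hvy
      have hxv : x * v = -(v * x) := by rw [hvx, neg_neg]
      have hyv : y * v = -(v * y) := by rw [hvy, neg_neg]
      have hwv : (x - y) * v = -(v * (x - y)) := by
        rw [sub_mul, mul_sub, hxv, hyv]
        abel
      have hzv : z * v = -(v * z) := by
        rw [hzw, smul_mul_assoc, mul_smul_comm, hwv, smul_neg]
      calc (u1 : Module.End ℂ S) * v * ↑u1⁻¹ = (z * v) * ↑u1⁻¹ := by rw [hu1v]
        _ = -((v * z) * ↑u1⁻¹) := by rw [hzv, neg_mul]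
        _ = -(v * ((u1 : Module.End ℂ S) * ↑u1⁻¹)) := by rw [hu1v, mul_assoc]
        _ = -v := by rw [Units.mul_inv, mul_one]
    -- the volume element unit
    set uη := eProd e hunit (List.finRange m) with huη
    have huηv : (uη : Module.End ℂ S) = η := by
      rw [huη, eProd_val, hη, List.ofFn_eq_map]
    have huηPin : uη ∈ Pin := by
      rw [huη, hPin, eProd_def]
      apply Subgroup.list_prod_mem
      intro g hg
      obtain ⟨i, _, rfl⟩ := List.mem_map.mp hg
      exact Subgroup.subset_closure ⟨by rw [vUnit_val]; exact Submodule.subset_span ⟨i, rfl⟩,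
        by rw [vUnit_val]; exact hunit i⟩
    have hconjη : ∀ v ∈ Submodule.span ℝ (Set.range e),
        (uη : Module.End ℂ S) * v * ↑uη⁻¹ = -v := by
      intro v hv
      have hηv : η * v = -(v * η) := by
        rw [eta_anticomm_V hme hm0 hanti hη v hv, neg_neg]
      calc (uη : Module.End ℂ S) * v * ↑uη⁻¹ = (η * v) * ↑uη⁻¹ := by rw [huηv]
        _ = -((v * η) * ↑uη⁻¹) := by rw [hηv, neg_mul]
        _ = -(v * ((uη : Module.End ℂ S) * ↑uη⁻¹)) := by rw [huηv, mul_assoc]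
        _ = -v := by rw [Units.mul_inv, mul_one]
    refine ⟨uη * u1, mul_mem huηPin hu1Pin, ?_, ?_⟩
    · rw [conj_mul_units, conj1, mul_neg, neg_mul, hconjη y hyV, neg_neg]
    · intro v hv hvx hvy
      rw [conj_mul_units, conjv v hv hvx hvy, mul_neg, neg_mul, hconjη v hv, neg_neg]
  · -- case A : use x + y and y
    obtain ⟨z, c, hc, hzw, hzV, hz2⟩ := normalize (Submodule.add_mem _ hxV hyV) hplus ht
    have hwx : (x + y) * x = y * (x + y) := by
      have h1 : (x + y) * x = x * x + y * x := by noncomm_ring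
      have h2 : y * (x + y) = y * x + y * y := by noncomm_ring
      rw [h1, h2, hx2, hy2, add_comm]
    have hzx : z * x = y * z := by
      rw [hzw, smul_mul_assoc, mul_smul_comm, hwx]
    set u1 := vUnit z hz2 with hu1
    have hu1v : (u1 : Module.End ℂ S) = z := vUnit_val z hz2
    have hu1Pin : u1 ∈ Pin := by
      rw [hPin]
      exact Subgroup.subset_closure ⟨by rw [hu1v]; exact hzV, by rw [hu1v]; exact hz2⟩
    have conj1 : (u1 : Module.End ℂ S) * x * ↑u1⁻¹ = y := by
      calc (u1 : Module.End ℂ S) * x * ↑u1⁻¹ = (z * x) * ↑u1⁻¹ := by rw [hu1v]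
        _ = (y * z) * ↑u1⁻¹ := by rw [hzx]
        _ = y * ((u1 : Module.End ℂ S) * ↑u1⁻¹) := by rw [hu1v, mul_assoc]
        _ = y := by rw [Units.mul_inv, mul_one]
    have conjv : ∀ v ∈ Submodule.span ℝ (Set.range e), v * x = -(x * v) → v * y = -(y * v) →
        (u1 : Module.End ℂ S) * v * ↑u1⁻¹ = -v := by
      intro v hv hvx hvy
      have hxv : x * v = -(v * x) := by rw [hvx, neg_neg]
      have hyv : y * v = -(v * y) := by rw [hvy, neg_neg]
      have hwv : (x + y) * v = -(v * (x + y)) := by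
        rw [add_mul, mul_add, hxv, hyv, neg_add]
      have hzv : z * v = -(v * z) := by
        rw [hzw, smul_mul_assoc, mul_smul_comm, hwv, smul_neg]
      calc (u1 : Module.End ℂ S) * v * ↑u1⁻¹ = (z * v) * ↑u1⁻¹ := by rw [hu1v]
        _ = -((v * z) * ↑u1⁻¹) := by rw [hzv, neg_mul]
        _ = -(v * ((u1 : Module.End ℂ S) * ↑u1⁻¹)) := by rw [hu1v, mul_assoc]
        _ = -v := by rw [Units.mul_inv, mul_one]
    have hy2' : y * y = 1 ∨ y * y = -1 := by
      rcases hsq with ⟨_, h⟩ | ⟨_, h⟩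
      · exact Or.inl h
      · exact Or.inr h
    set u2 := vUnit y hy2' with hu2
    have hu2v : (u2 : Module.End ℂ S) = y := vUnit_val y hy2'
    have hu2Pin : u2 ∈ Pin := by
      rw [hPin]
      exact Subgroup.subset_closure ⟨by rw [hu2v]; exact hyV, by rw [hu2v]; exact hy2'⟩
    refine ⟨u2 * u1, mul_mem hu2Pin hu1Pin, ?_, ?_⟩
    · rw [conj_mul_units, conj1]
      have hyy : (u2 : Module.End ℂ S) * y = y * u2 := by rw [hu2v]
      rw [hyy, mul_assoc, Units.mul_inv, mul_one]
    · intro v hv hvx hvy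
      rw [conj_mul_units, conjv v hv hvx hvy, mul_neg, neg_mul]
      have hyv : y * v = -(v * y) := by rw [hvy, neg_neg]
      have : (u2 : Module.End ℂ S) * v * ↑u2⁻¹ = -v := by
        calc (u2 : Module.End ℂ S) * v * ↑u2⁻¹ = (y * v) * ↑u2⁻¹ := by rw [hu2v]
          _ = -((v * y) * ↑u2⁻¹) := by rw [hyv, neg_mul]
          _ = -(v * ((u2 : Module.End ℂ S) * ↑u2⁻¹)) := by rw [hu2v, mul_assoc]
          _ = -v := by rw [Units.mul_inv, mul_one]
      rw [this, neg_neg]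


lemma conj_prod (p : (Module.End ℂ S)ˣ) (a b : Module.End ℂ S) :
    ((p : Module.End ℂ S) * a * ↑p⁻¹) * ((p : Module.End ℂ S) * b * ↑p⁻¹) =
      (p : Module.End ℂ S) * (a * b) * ↑p⁻¹ := by
  simp [mul_assoc]


lemma frame_trans (hme : Even m) (hm0 : 0 < m)
    (hanti : ∀ i j : Fin m, i ≠ j → e i * e j = -(e j * e i))
    (hunit : ∀ i, e i * e i = 1 ∨ e i * e i = -1)
    {η : Module.End ℂ S} (hη : η = (List.ofFn e).prod)
    {Pin : Subgroup (Module.End ℂ S)ˣ}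
    (hPin : Pin = Subgroup.closure
      {u : (Module.End ℂ S)ˣ | (u : Module.End ℂ S) ∈ Submodule.span ℝ (Set.range e) ∧
        ((u : Module.End ℂ S) * u = 1 ∨ (u : Module.End ℂ S) * u = -1)})
    (f : Fin m → Module.End ℂ S)
    (hfV : ∀ i, f i ∈ Submodule.span ℝ (Set.range e))
    (hfa : ∀ i j, i ≠ j → f i * f j = -(f j * f i))
    (hfs : ∀ i, f i * f i = e i * e i) :
    ∃ p : (Module.End ℂ S)ˣ, p ∈ Pin ∧
      ∀ i, (p : Module.End ℂ S) * f i * ((p⁻¹ : (Module.End ℂ S)ˣ) : Module.End ℂ S) = e i := by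
  have key : ∀ k : ℕ, k ≤ m → ∃ p : (Module.End ℂ S)ˣ, p ∈ Pin ∧
      ∀ i : Fin m, (i : ℕ) < k →
        (p : Module.End ℂ S) * f i * ((p⁻¹ : (Module.End ℂ S)ˣ) : Module.End ℂ S) = e i := by
    intro k
    induction k with
    | zero => exact fun _ => ⟨1, one_mem _, fun i hi => absurd hi (Nat.not_lt_zero _)⟩
    | succ k ih =>
      intro hk1
      obtain ⟨p, hpPin, hp⟩ := ih (by omega)
      set kf : Fin m := ⟨k, by omega⟩ with hkf
      set x : Module.End ℂ S :=
        (p : Module.End ℂ S) * f kf * ((p⁻¹ : (Module.End ℂ S)ˣ) : Module.End ℂ S) with hx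
      have hxV : x ∈ Submodule.span ℝ (Set.range e) :=
        (pin_conj_mem hanti hunit hPin hpPin).1 _ (hfV kf)
      have hx2 : x * x = e kf * e kf := by
        rw [hx, conj_prod, hfs kf]
        rcases hunit kf with h | h <;> rw [h]
        · rw [mul_one, Units.mul_inv]
        · rw [mul_neg_one, neg_mul, Units.mul_inv]
      have hsq : (x * x = 1 ∧ e kf * e kf = 1) ∨ (x * x = -1 ∧ e kf * e kf = -1) := by
        rcases hunit kf with h | h
        · exact Or.inl ⟨hx2.trans h, h⟩
        · exact Or.inr ⟨hx2.trans h, h⟩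
      obtain ⟨q, hqPin, hq1, hq2⟩ := frame_step hme hm0 hanti hunit hη hPin hxV
        (Submodule.subset_span ⟨kf, rfl⟩) hsq
      refine ⟨q * p, mul_mem hqPin hpPin, ?_⟩
      intro i hi
      rw [conj_mul_units]
      rcases Nat.lt_or_ge (i : ℕ) k with hik | hik
      · have hik' : i ≠ kf := by
          intro hcon
          rw [hcon] at hik
          simp [hkf] at hik
        have hei : e i = (p : Module.End ℂ S) * f i * ((p⁻¹ : (Module.End ℂ S)ˣ) : Module.End ℂ S) :=
          (hp i hik).symm
        have hvx : e i * x = -(x * e i) := by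
          rw [hei, hx]
          simp only [conj_prod]
          rw [hfa i kf hik', mul_neg, neg_mul]
        have hvy : e i * e kf = -(e kf * e i) := hanti i kf hik'
        rw [hp i hik]
        exact hq2 (e i) (Submodule.subset_span ⟨i, rfl⟩) hvx hvy
      · have hieq : i = kf := Fin.ext (by simp only [hkf]; omega)
        rw [hieq, ← hx]
        exact hq1
  obtain ⟨p, hp, h⟩ := key m le_rfl
  exact ⟨p, hp, fun i => h i i.isLt⟩


end LpinAux

open LpinAux in
/-- Let `(S, V, h)` be a spin space of even dimension `m > 0`
(`dim_ℂ S = 2^(m/2)`, `V` the real span of an orthonormal anticommuting frame `e`, `η` the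
volume element) and `Lpin(h) = {a ∈ GL(S) : a V a⁻¹ = V}`.  Then:
(1) `Lpin(h) = ℂ^× · Pin(h)`;
(2) every `a ∈ Lpin(h)` satisfies `a η a⁻¹ = ±η` (the grading homomorphism `κ` to `ℤ₂`);
(3) the kernel of `κ` is `ℂ^× · Spin(h)` (where `Spin(h)` consists of the elements of `Pin(h)`
commuting with `η`), i.e. the sequence `1 → ℂ^× · Spin(h) → Lpin(h) → ℤ₂ → 1` is exact;
(4) the sequence splits: some involution of `Lpin(h)` anticommutes with `η`. -/
theorem lpin_even_structure
    (S : Type*) [AddCommGroup S] [Module ℂ S] [FiniteDimensional ℂ S]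
    (m : ℕ) (hme : Even m) (hm0 : 0 < m)
    (hdim : Module.finrank ℂ S = 2 ^ (m / 2))
    (e : Fin m → Module.End ℂ S)
    (hanti : ∀ i j : Fin m, i ≠ j → e i * e j = -(e j * e i))
    (hunit : ∀ i : Fin m, e i * e i = 1 ∨ e i * e i = -1)
    (V : Submodule ℝ (Module.End ℂ S))
    (hV : V = Submodule.span ℝ (Set.range e))
    (η : Module.End ℂ S) (hη : η = (List.ofFn e).prod)
    (Pin : Subgroup (Module.End ℂ S)ˣ)
    (hPin : Pin = Subgroup.closure
      {u : (Module.End ℂ S)ˣ | (u : Module.End ℂ S) ∈ V ∧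
        ((u : Module.End ℂ S) * u = 1 ∨ (u : Module.End ℂ S) * u = -1)})
    (inLpin : (Module.End ℂ S)ˣ → Prop)
    (hLpin : ∀ a, inLpin a ↔
      ((∀ v ∈ V, (a : Module.End ℂ S) * v *
          ((a⁻¹ : (Module.End ℂ S)ˣ) : Module.End ℂ S) ∈ V) ∧
       (∀ v ∈ V, ((a⁻¹ : (Module.End ℂ S)ˣ) : Module.End ℂ S) * v *
          (a : Module.End ℂ S) ∈ V))) :
    -- (1) `Lpin(h) = ℂ^× · Pin(h)`
    (∀ a : (Module.End ℂ S)ˣ, inLpin a ↔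
        ∃ c : ℂˣ, ∃ p ∈ Pin, (a : Module.End ℂ S) = (c : ℂ) • (p : Module.End ℂ S)) ∧
    -- (2) the grading homomorphism `κ : Lpin(h) → ℤ₂` is well defined
    (∀ a : (Module.End ℂ S)ˣ, inLpin a →
        ((a : Module.End ℂ S) * η = η * a ∨ (a : Module.End ℂ S) * η = -(η * a))) ∧
    -- (3) exactness: `ker κ = ℂ^× · Spin(h)`
    (∀ a : (Module.End ℂ S)ˣ, inLpin a →
        ((a : Module.End ℂ S) * η = η * a ↔
          ∃ c : ℂˣ, ∃ p ∈ Pin, (p : Module.End ℂ S) * η = η * p ∧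
            (a : Module.End ℂ S) = (c : ℂ) • (p : Module.End ℂ S))) ∧
    -- (4) the sequence `1 → ℂ^×·Spin(h) → Lpin(h) → ℤ₂ → 1` splits
    (∃ u : (Module.End ℂ S)ˣ, inLpin u ∧
        (u : Module.End ℂ S) * η = -(η * u) ∧ u * u = 1) := by
  subst hV
  have hPin' : Pin = Subgroup.closure
      {u : (Module.End ℂ S)ˣ | (u : Module.End ℂ S) ∈ Submodule.span ℝ (Set.range e) ∧
        ((u : Module.End ℂ S) * u = 1 ∨ (u : Module.End ℂ S) * u = -1)} := hPin
  -- part (1)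
  have part1 : ∀ a : (Module.End ℂ S)ˣ, inLpin a ↔
      ∃ c : ℂˣ, ∃ p ∈ Pin, (a : Module.End ℂ S) = (c : ℂ) • (p : Module.End ℂ S) := by
    intro a
    constructor
    · intro ha
      obtain ⟨h1, h2⟩ := (hLpin a).mp ha
      set f : Fin m → Module.End ℂ S := fun i =>
        (a : Module.End ℂ S) * e i * ((a⁻¹ : (Module.End ℂ S)ˣ) : Module.End ℂ S) with hf
      have hfV : ∀ i, f i ∈ Submodule.span ℝ (Set.range e) :=
        fun i => h1 (e i) (Submodule.subset_span ⟨i, rfl⟩)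
      have hfa : ∀ i j, i ≠ j → f i * f j = -(f j * f i) := by
        intro i j hij
        simp only [hf, conj_prod]
        rw [hanti i j hij, mul_neg, neg_mul]
      have hfs : ∀ i, f i * f i = e i * e i := by
        intro i
        simp only [hf, conj_prod]
        rcases hunit i with h | h <;> rw [h]
        · rw [mul_one, Units.mul_inv]
        · rw [mul_neg_one, neg_mul, Units.mul_inv]
      obtain ⟨p, hpPin, hp⟩ := frame_trans hme hm0 hanti hunit hη hPin' f hfV hfa hfs
      have hkey : ∀ i, ((p * a : (Module.End ℂ S)ˣ) : Module.End ℂ S) * e i *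
          (((p * a)⁻¹ : (Module.End ℂ S)ˣ) : Module.End ℂ S) = e i := by
        intro i
        rw [conj_mul_units]
        exact hp i
      have hcomm : ∀ i, ((p * a : (Module.End ℂ S)ˣ) : Module.End ℂ S) * e i =
          e i * ((p * a : (Module.End ℂ S)ˣ) : Module.End ℂ S) := by
        intro i
        calc ((p * a : (Module.End ℂ S)ˣ) : Module.End ℂ S) * e i
            = ((p * a : (Module.End ℂ S)ˣ) : Module.End ℂ S) * e i *
              (((p * a)⁻¹ : (Module.End ℂ S)ˣ) : Module.End ℂ S) *
              ((p * a : (Module.End ℂ S)ˣ) : Module.End ℂ S) :=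
              (Units.inv_mul_cancel_right _ _).symm
          _ = e i * ((p * a : (Module.End ℂ S)ˣ) : Module.End ℂ S) := by rw [hkey i]
      obtain ⟨c, hc⟩ := commutant hme hdim hanti hunit hcomm
      have hc0 : c ≠ 0 := by
        intro h0
        rw [h0, zero_smul] at hc
        have hone : (1 : Module.End ℂ S) = 0 := by
          calc (1 : Module.End ℂ S)
              = ((p * a : (Module.End ℂ S)ˣ) : Module.End ℂ S) *
                (((p * a)⁻¹ : (Module.End ℂ S)ˣ) : Module.End ℂ S) := (Units.mul_inv _).symm
            _ = 0 := by rw [hc, zero_mul]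
        have hS : Nontrivial S :=
          Module.nontrivial_of_finrank_pos (R := ℂ) (by rw [hdim]; exact Nat.two_pow_pos _)
        obtain ⟨s0, hs0⟩ := exists_ne (0 : S)
        exact hs0 (by simpa using congrArg (fun g : Module.End ℂ S => g s0) hone)
      have hval : (a : Module.End ℂ S) = c • ((p⁻¹ : (Module.End ℂ S)ˣ) : Module.End ℂ S) := by
        have h2' : (a : Module.End ℂ S) =
            ((p⁻¹ : (Module.End ℂ S)ˣ) : Module.End ℂ S) *
              ((p * a : (Module.End ℂ S)ˣ) : Module.End ℂ S) := by
          rw [Units.val_mul, ← mul_assoc, Units.inv_mul, one_mul]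
        rw [h2', hc, mul_smul_comm, mul_one]
      exact ⟨Units.mk0 c hc0, p⁻¹, inv_mem hpPin, by simpa using hval⟩
    · rintro ⟨c, p, hpPin, hval⟩
      rw [hLpin]
      have hinv : ((a⁻¹ : (Module.End ℂ S)ˣ) : Module.End ℂ S) =
          ((c : ℂ))⁻¹ • ((p⁻¹ : (Module.End ℂ S)ˣ) : Module.End ℂ S) := by
        have h1 : (a : Module.End ℂ S) *
            (((c : ℂ))⁻¹ • ((p⁻¹ : (Module.End ℂ S)ˣ) : Module.End ℂ S)) = 1 := by
          rw [hval, smul_mul_assoc, mul_smul_comm, smul_smul,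
            mul_inv_cancel₀ (Units.ne_zero c), one_smul, Units.mul_inv]
        calc ((a⁻¹ : (Module.End ℂ S)ˣ) : Module.End ℂ S)
            = ((a⁻¹ : (Module.End ℂ S)ˣ) : Module.End ℂ S) * ((a : Module.End ℂ S) *
              (((c : ℂ))⁻¹ • ((p⁻¹ : (Module.End ℂ S)ˣ) : Module.End ℂ S))) := by
              rw [h1, mul_one]
          _ = ((c : ℂ))⁻¹ • ((p⁻¹ : (Module.End ℂ S)ˣ) : Module.End ℂ S) := by
              rw [← mul_assoc, Units.inv_mul, one_mul]
      have hsmul : ∀ (d d' : ℂ) (P Q v : Module.End ℂ S), d * d' = 1 →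
          (d • P) * v * (d' • Q) = P * v * Q := by
        intro d d' P Q v hdd
        rw [smul_mul_assoc, smul_mul_assoc, mul_smul_comm, smul_smul, hdd, one_smul]
      constructor
      · intro v hv
        rw [hval, hinv, hsmul _ _ _ _ v (mul_inv_cancel₀ (Units.ne_zero c))]
        exact (pin_conj_mem hanti hunit hPin' hpPin).1 v hv
      · intro v hv
        rw [hval, hinv, hsmul _ _ _ _ v (inv_mul_cancel₀ (Units.ne_zero c))]
        exact (pin_conj_mem hanti hunit hPin' hpPin).2 v hv
  refine ⟨part1, ?_, ?_, ?_⟩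
  · -- part (2)
    intro a ha
    obtain ⟨c, p, hpPin, hval⟩ := (part1 a).mp ha
    rcases pin_eta_sign hme hm0 hanti hη hPin' hpPin with h | h
    · left
      rw [hval, smul_mul_assoc, h, mul_smul_comm]
    · right
      rw [hval, smul_mul_assoc, h, smul_neg, mul_smul_comm]
  · -- part (3)
    intro a ha
    constructor
    · intro haη
      obtain ⟨c, p, hpPin, hval⟩ := (part1 a).mp ha
      have hpval : (p : Module.End ℂ S) = ((c : ℂ))⁻¹ • (a : Module.End ℂ S) := by
        rw [hval, smul_smul, inv_mul_cancel₀ (Units.ne_zero c), one_smul]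
      have hpη : (p : Module.End ℂ S) * η = η * p := by
        rw [hpval, smul_mul_assoc, haη, mul_smul_comm]
      exact ⟨c, p, hpPin, hpη, hval⟩
    · rintro ⟨c, p, hpPin, hpη, hval⟩
      rw [hval, smul_mul_assoc, hpη, mul_smul_comm]
  · -- part (4)
    set i0 : Fin m := ⟨0, hm0⟩ with hi0
    have hanti0 : e i0 * η = -(η * e i0) := eta_anticomm hme hm0 hanti hη i0
    have he0V : e i0 ∈ Submodule.span ℝ (Set.range e) := Submodule.subset_span ⟨i0, rfl⟩
    rcases hunit i0 with h1 | h1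
    · refine ⟨⟨e i0, e i0, h1, h1⟩, ?_, ?_, ?_⟩
      · rw [hLpin]
        constructor <;> intro v hv
        · exact gen_conj_mem hanti hunit he0V (Or.inl h1) hv
        · exact gen_conj_mem hanti hunit he0V (Or.inl h1) hv
      · exact hanti0
      · exact Units.ext (by rw [Units.val_mul, Units.val_one]; exact h1)
    · have hI2 : (Complex.I • e i0) * (Complex.I • e i0) = 1 := by
        rw [smul_mul_assoc, mul_smul_comm, smul_smul, Complex.I_mul_I, h1]
        simp
      refine ⟨⟨Complex.I • e i0, Complex.I • e i0, hI2, hI2⟩, ?_, ?_, ?_⟩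
      · have hconj : ∀ v : Module.End ℂ S,
            (Complex.I • e i0) * v * (Complex.I • e i0) = -(e i0 * v * e i0) := by
          intro v
          rw [smul_mul_assoc, smul_mul_assoc, mul_smul_comm, smul_smul, Complex.I_mul_I]
          simp
        rw [hLpin]
        constructor <;> intro v hv
        · show (Complex.I • e i0) * v * (Complex.I • e i0) ∈ _
          rw [hconj]
          exact Submodule.neg_mem _ (gen_conj_mem hanti hunit he0V (Or.inr h1) hv)
        · show (Complex.I • e i0) * v * (Complex.I • e i0) ∈ _
          rw [hconj]
          exact Submodule.neg_mem _ (gen_conj_mem hanti hunit he0V (Or.inr h1) hv)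
      · show (Complex.I • e i0) * η = -(η * (Complex.I • e i0))
        rw [smul_mul_assoc, hanti0, mul_smul_comm, smul_neg]
      · exact Units.ext (by rw [Units.val_mul, Units.val_one]; exact hI2)
end

section
/- Let θ : Cl⁰_{m+2} → End S be a Weyl representation if m is even, or a Pauli representation if m is odd, and let i_{m+1} : Cl⁻_{m+1} → Cl⁰_{m+2} be the canonical isomorphism v ↦ v·e_{m+2} and inj : Cl⁻_m → Cl⁻_{m+1} the inclusion of Clifford algebras. Then θ ∘ i_{m+1} is a Pauli (resp. Dirac) representation of Cl⁻_{m+1}, and θ ∘ i_{m+1} ∘ inj is a Dirac (resp. Cartan) representation of Cl⁻_m. -/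
/-- A representation of a real algebra on a complex vector space is irreducible iff its
commutant consists of the complex scalars (Schur). -/
def IsIrredRep {A : Type*} [Ring A] [Algebra ℝ A] {S : Type*} [AddCommGroup S] [Module ℂ S]
    (ρ : A →ₐ[ℝ] Module.End ℂ S) : Prop :=
  ∀ w : Module.End ℂ S, (∀ a : A, w * ρ a = ρ a * w) → ∃ c : ℂ, w = c • (1 : Module.End ℂ S)

/-- The complex dimension of the commutant of a representation. -/
noncomputable def commutantRank {A : Type*} [Ring A] [Algebra ℝ A] {S : Type*}
    [AddCommGroup S] [Module ℂ S] (ρ : A →ₐ[ℝ] Module.End ℂ S) : ℕ :=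
  Module.finrank ℂ
    ↥(⨅ a : A, LinearMap.ker (LinearMap.mulLeft ℂ (ρ a) - LinearMap.mulRight ℂ (ρ a)))


section RingLemmas
variable {A : Type*} [Ring A] [Algebra ℝ A] {ι : Type*}

lemma prod_map_neg_one (l : List ι) :
    (l.map fun _ => (-1 : ℝ)).prod = (-1 : ℝ) ^ l.length := by
  induction l with
  | nil => simp
  | cons j t ih => simp [ih, pow_succ, mul_comm]

/-- Move an element across a product, picking up signs. -/
lemma move_prod (a : A) (F : ι → A) (ε : ι → ℝ) :
    ∀ l : List ι, (∀ i ∈ l, a * F i = ε i • (F i * a)) →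
      a * (l.map F).prod = (l.map ε).prod • ((l.map F).prod * a) := by
  intro l
  induction l with
  | nil => simp
  | cons j t ih =>
    intro h
    have hj := h j (by simp)
    have ht := ih fun i hi => h i (List.mem_cons_of_mem _ hi)
    simp only [List.map_cons, List.prod_cons]
    rw [← mul_assoc, hj, smul_mul_assoc, mul_assoc, ht]
    rw [mul_smul_comm, smul_smul, ← mul_assoc]

lemma isUnit_listProd (F : ι → A) (h : ∀ i, IsUnit (F i)) :
    ∀ l : List ι, IsUnit ((l.map F).prod) := by
  intro l
  induction l with
  | nil => simp
  | cons j t ih => simpa using (h j).mul ih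

/-- square of a product of pairwise anticommuting square-(-1) elements is a nonzero scalar. -/
lemma sq_listProd (F : ι → A) :
    ∀ l : List ι, (∀ i ∈ l, F i * F i = -1) →
      (l.Pairwise fun i j => F i * F j = -(F j * F i)) →
      ∃ s : ℝ, s ≠ 0 ∧ (l.map F).prod * (l.map F).prod = s • 1 := by
  intro l
  induction l with
  | nil => exact fun _ _ => ⟨1, one_ne_zero, by simp⟩
  | cons j t ih =>
    intro hsq hpw
    obtain ⟨hjt, hpw'⟩ := List.pairwise_cons.mp hpw
    obtain ⟨s, hs0, hs⟩ := ih (fun i hi => hsq i (List.mem_cons_of_mem _ hi)) hpw'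
    set P := (t.map F).prod with hP
    set c : ℝ := (t.map fun _ => (-1:ℝ)).prod with hc
    have hc2 : c * c = 1 := by
      rw [hc, prod_map_neg_one, ← mul_pow]; norm_num
    have hmv : F j * P = c • (P * F j) := by
      refine move_prod (F j) F (fun _ => (-1:ℝ)) t fun i hi => ?_
      rw [hjt i hi]; simp
    have hmv' : P * F j = c • (F j * P) := by
      rw [hmv, smul_smul, hc2, one_smul]
    have hone : (-1 : A) = (-1 : ℝ) • 1 := by simp
    have hc0 : c ≠ 0 := by
      rw [hc, prod_map_neg_one]
      exact pow_ne_zero _ (by norm_num)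
    refine ⟨c * s * (-1), mul_ne_zero (mul_ne_zero hc0 hs0) (by norm_num), ?_⟩
    · simp only [List.map_cons, List.prod_cons, ← hP]
      calc F j * P * (F j * P)
          = F j * ((P * F j) * P) := by rw [mul_assoc, ← mul_assoc P]
        _ = F j * ((c • (F j * P)) * P) := by rw [hmv']
        _ = c • (F j * (F j * (P * P))) := by
            rw [smul_mul_assoc, mul_smul_comm, mul_assoc]
        _ = c • (F j * (F j * (s • 1))) := by rw [hs]
        _ = (c * s) • (F j * F j) := by
            rw [mul_smul_comm, mul_smul_comm, smul_smul, mul_one]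
        _ = (c * s) • (-1 : A) := by rw [hsq j (by simp)]
        _ = (c * s * (-1)) • 1 := by rw [hone, smul_smul]

end RingLemmas

section Proj
variable {A : Type*} [Ring A] [Algebra ℝ A]

/-- Projection onto the `t`-eigenspace of conjugation by `a`. -/
noncomputable def projOp (a : A) (t : ℝ) : A →ₗ[ℝ] A :=
  (2⁻¹ : ℝ) • (LinearMap.id - t • ((LinearMap.mulRight ℝ a).comp (LinearMap.mulLeft ℝ a)))

lemma projOp_apply (a : A) (t : ℝ) (x : A) :
    projOp a t x = (2⁻¹ : ℝ) • (x - t • (a * x * a)) := rfl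

lemma projOp_eq (a P : A) (χ t : ℝ) (hsq : a * a = -1) (hmv : a * P = χ • (P * a))
    (hχ : χ = 1 ∨ χ = -1) (ht : t = 1 ∨ t = -1) :
    projOp a t P = if χ = t then P else 0 := by
  have key : a * P * a = -(χ • P) := by
    rw [hmv, smul_mul_assoc, mul_assoc, hsq, mul_neg, mul_one, smul_neg]
  rcases hχ with rfl | rfl <;> rcases ht with rfl | rfl <;>
    rw [projOp_apply, key] <;> norm_num <;> module

open scoped Classical in
lemma foldr_projOp_eq {k : ℕ} (E : Fin k → A) (t : Fin k → ℝ) (P : A) (χ : Fin k → ℝ)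
    (h : ∀ i, projOp (E i) (t i) P = if χ i = t i then P else 0) (l : List (Fin k)) :
    ((l.map fun i => projOp (E i) (t i)).foldr (· ∘ₗ ·) LinearMap.id) P
      = if (∀ i ∈ l, χ i = t i) then P else 0 := by
  induction l with
  | nil => simp
  | cons j r ih =>
    simp only [List.map_cons, List.foldr_cons, LinearMap.comp_apply, ih]
    by_cases hr : ∀ i ∈ r, χ i = t i
    · rw [if_pos hr, h j]
      by_cases hj : χ j = t j
      · rw [if_pos hj, if_pos (by simpa [hj] using hr)]
      · rw [if_neg hj, if_neg fun hall => hj (hall j List.mem_cons_self)]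
    · rw [if_neg hr, map_zero,
        if_neg fun hall => hr fun i hi => hall i (List.mem_cons_of_mem _ hi)]

end Proj

section Chars

/-- The sign with which conjugation by the `i`-th generator acts on the monomial `M`. -/
noncomputable def sgn (n : ℕ) (M : Finset (Fin n)) (i : Fin n) : ℝ :=
  (-1) ^ ((M.erase i).card)

lemma sgn_pm (n M i) : sgn n M i = 1 ∨ sgn n M i = -1 := by
  rcases Nat.even_or_odd ((M.erase i).card) with h | h
  · exact Or.inl (h.neg_one_pow)
  · exact Or.inr (h.neg_one_pow)

lemma neg_one_pow_eq_iff (a b : ℕ) : ((-1 : ℝ) ^ a = (-1) ^ b) ↔ (Even a ↔ Even b) := by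
  rcases Nat.even_or_odd a with ha | ha <;> rcases Nat.even_or_odd b with hb | hb
  · exact iff_of_true (by rw [ha.neg_one_pow, hb.neg_one_pow]) (by simp [ha, hb])
  · exact iff_of_false (by norm_num [ha.neg_one_pow, hb.neg_one_pow])
      (by simp [ha, Nat.not_even_iff_odd.mpr hb])
  · exact iff_of_false (by norm_num [ha.neg_one_pow, hb.neg_one_pow])
      (by simp [hb, Nat.not_even_iff_odd.mpr ha])
  · exact iff_of_true (by rw [ha.neg_one_pow, hb.neg_one_pow])
      (by simp [Nat.not_even_iff_odd.mpr ha, Nat.not_even_iff_odd.mpr hb])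

lemma even_erase_card {n : ℕ} (M : Finset (Fin n)) (i : Fin n) :
    Even ((M.erase i).card) ↔ (Even M.card ↔ i ∉ M) := by
  by_cases hi : i ∈ M
  · rw [Finset.card_erase_of_mem hi,
      Nat.even_sub (Finset.card_pos.mpr ⟨i, hi⟩)]
    simp [hi]
  · rw [Finset.erase_eq_of_notMem hi]
    simp [hi]

lemma sgn_sep {n : ℕ} (M N : Finset (Fin n)) (h : ∀ i, sgn n M i = sgn n N i) :
    M = N ∨ (Odd n ∧ M = Nᶜ) := by
  have key : ∀ i, ((Even M.card ↔ i ∉ M) ↔ (Even N.card ↔ i ∉ N)) := fun i => by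
    rw [← even_erase_card, ← even_erase_card]
    exact (neg_one_pow_eq_iff _ _).mp (h i)
  by_cases hc : Even M.card ↔ Even N.card
  · left
    ext i
    have := key i
    tauto
  · right
    have hMN : M = Nᶜ := by
      ext i
      have := key i
      simp only [Finset.mem_compl]
      tauto
    refine ⟨?_, hMN⟩
    have hn : N.card + Nᶜ.card = n := by
      rw [Finset.card_add_card_compl]
      simp
    rw [← Nat.not_even_iff_odd, ← hn, Nat.even_add]
    subst hMN
    tauto

lemma sgn_compl {n : ℕ} (hn : Odd n) (N : Finset (Fin n)) (i : Fin n) :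
    sgn n Nᶜ i = sgn n N i := by
  have hnc : N.card + Nᶜ.card = n := by rw [Finset.card_add_card_compl]; simp
  have hodd : ¬(Even Nᶜ.card ↔ Even N.card) := by
    have := Nat.not_even_iff_odd.mpr hn
    rw [← hnc, Nat.even_add] at this
    tauto
  rw [sgn, sgn, neg_one_pow_eq_iff, even_erase_card, even_erase_card]
  simp only [Finset.mem_compl]
  tauto

end Chars

section Cliff
open CliffordAlgebra
variable {n : ℕ} (Q : QuadraticForm ℝ (Fin n → ℝ))

/-- the `i`-th Clifford generator. -/
noncomputable def eC (i : Fin n) : CliffordAlgebra Q := ι Q (Pi.single i 1)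

/-- the monomial associated to a finite set of indices. -/
noncomputable def piM (M : Finset (Fin n)) : CliffordAlgebra Q :=
  ((M.sort (· ≤ ·)).map (eC Q)).prod

lemma sum_single_sq (i : Fin n) (c : ℝ) :
    ∑ k, (Pi.single i c : Fin n → ℝ) k * (Pi.single i c : Fin n → ℝ) k = c * c := by
  rw [Finset.sum_eq_single i]
  · simp
  · intro b _ hb; rw [Pi.single_eq_of_ne hb]; ring
  · simp

lemma sum_sq_add (v w : Fin n → ℝ) (h : ∀ k, v k * w k = 0) :
    ∑ k, (v k + w k) * (v k + w k) = (∑ k, v k * v k) + ∑ k, w k * w k := by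
  rw [← Finset.sum_add_distrib]
  exact Finset.sum_congr rfl fun k _ => by linear_combination 2 * h k

lemma single_mul_single_eq_zero {i j : Fin n} (h : i ≠ j) (k : Fin n) :
    (Pi.single i 1 : Fin n → ℝ) k * (Pi.single j 1 : Fin n → ℝ) k = 0 := by
  rcases eq_or_ne k i with rfl | hk
  · rw [Pi.single_eq_of_ne h]; ring
  · rw [Pi.single_eq_of_ne hk]; ring

variable (hQ : ∀ v, Q v = -∑ i, v i * v i)
include hQ

lemma Q_single (i : Fin n) (c : ℝ) : Q (Pi.single i c) = -(c * c) := by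
  rw [hQ, sum_single_sq]

lemma eC_sq (i : Fin n) : eC Q i * eC Q i = algebraMap ℝ _ (-1) := by
  rw [eC, ι_sq_scalar, Q_single Q hQ]
  norm_num

lemma eC_ortho {i j : Fin n} (h : i ≠ j) :
    Q.IsOrtho (Pi.single i 1) (Pi.single j 1) := by
  rw [QuadraticMap.isOrtho_def, hQ, hQ, hQ]
  simp only [Pi.add_apply]
  rw [sum_sq_add _ _ (single_mul_single_eq_zero h)]
  ring

lemma eC_anti {i j : Fin n} (h : i ≠ j) :
    eC Q i * eC Q j = -(eC Q j * eC Q i) :=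
  ι_mul_ι_comm_of_isOrtho (eC_ortho Q hQ h)

omit hQ

lemma univ_sum_single_smul (v : Fin n → ℝ) :
    ∑ i, v i • (Pi.single i 1 : Fin n → ℝ) = v := by
  funext k
  simp only [Finset.sum_apply, Pi.smul_apply, Pi.single_apply, smul_eq_mul, mul_ite,
    mul_one, mul_zero]
  rw [Finset.sum_ite_eq Finset.univ k v]
  simp

lemma iota_sum (v : Fin n → ℝ) : ι Q v = ∑ i, v i • eC Q i := by
  conv_lhs => rw [← univ_sum_single_smul v]
  rw [map_sum]
  simp [eC]

lemma piM_empty : piM Q ∅ = 1 := by simp [piM]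

lemma piM_insert {i : Fin n} {M : Finset (Fin n)} (h1 : ∀ b ∈ M, i ≤ b) (h2 : i ∉ M) :
    piM Q (insert i M) = eC Q i * piM Q M := by
  rw [piM, Finset.sort_insert _ h1 h2]
  simp [piM]

lemma piM_singleton (i : Fin n) : piM Q {i} = eC Q i := by
  rw [show ({i} : Finset (Fin n)) = insert i ∅ from rfl,
    piM_insert Q (by simp) (by simp), piM_empty, mul_one]

include hQ

lemma eC_mul_piM_mem :
    ∀ (c : ℕ) (M : Finset (Fin n)), M.card ≤ c → ∀ i : Fin n,
      eC Q i * piM Q M ∈ Submodule.span ℝ (piM Q '' {K | K ⊆ insert i M}) := by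
  intro c
  induction c with
  | zero =>
    intro M hM i
    have hempty : M = ∅ := Finset.card_eq_zero.mp (Nat.le_antisymm hM (Nat.zero_le _))
    subst hempty
    rw [piM_empty, mul_one, ← piM_singleton Q i]
    exact Submodule.subset_span ⟨{i}, by simp, rfl⟩
  | succ c ih =>
    intro M hM i
    rcases M.eq_empty_or_nonempty with rfl | hne
    · rw [piM_empty, mul_one, ← piM_singleton Q i]
      exact Submodule.subset_span ⟨{i}, by simp, rfl⟩
    set j := M.min' hne with hj
    have hjM : j ∈ M := M.min'_mem hne
    have hsplit : piM Q M = eC Q j * piM Q (M.erase j) := by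
      conv_lhs => rw [← Finset.insert_erase hjM]
      exact piM_insert Q (fun b hb => M.min'_le b (Finset.mem_of_mem_erase hb))
        (Finset.notMem_erase _ _)
    rcases lt_trichotomy i j with hij | rfl | hij
    · have hiM : i ∉ M := fun hmem => absurd (M.min'_le i hmem) (not_le.mpr hij)
      rw [← piM_insert Q (fun b hb => le_of_lt (lt_of_lt_of_le hij (M.min'_le b hb))) hiM]
      exact Submodule.subset_span ⟨insert i M, Set.mem_setOf.mpr subset_rfl, rfl⟩
    · rw [hsplit, ← mul_assoc, eC_sq Q hQ, Algebra.algebraMap_eq_smul_one, smul_mul_assoc,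
        one_mul]
      refine Submodule.smul_mem _ _ (Submodule.subset_span ⟨M.erase j, ?_, rfl⟩)
      exact fun x hx => Finset.mem_insert_of_mem (Finset.mem_of_mem_erase hx)
    · have hcard : (M.erase j).card ≤ c := by
        rw [Finset.card_erase_of_mem hjM]
        omega
      have hIH := ih (M.erase j) hcard i
      rw [hsplit, ← mul_assoc, eC_anti Q hQ (ne_of_gt hij), neg_mul, mul_assoc]
      refine neg_mem ?_
      refine Submodule.span_induction
        (p := fun x _ => eC Q j * x ∈
          Submodule.span ℝ (piM Q '' {K | K ⊆ insert i M}))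
        ?_ ?_ ?_ ?_ hIH
      · rintro _ ⟨K, hK, rfl⟩
        have hK' : K ⊆ insert i (M.erase j) := hK
        have hjK : j ∉ K := fun hmem => by
          rcases Finset.mem_insert.mp (hK' hmem) with h' | h'
          · exact absurd h' (ne_of_lt hij)
          · exact absurd h' (Finset.notMem_erase _ _)
        have hle : ∀ b ∈ K, j ≤ b := by
          intro b hb
          rcases Finset.mem_insert.mp (hK' hb) with rfl | h'
          · exact le_of_lt hij
          · exact M.min'_le b (Finset.mem_of_mem_erase h')
        rw [← piM_insert Q hle hjK]
        refine Submodule.subset_span ⟨insert j K, ?_, rfl⟩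
        intro x hx
        rcases Finset.mem_insert.mp hx with rfl | hx'
        · exact Finset.mem_insert_of_mem hjM
        · rcases Finset.mem_insert.mp (hK' hx') with rfl | h''
          · exact Finset.mem_insert_self _ _
          · exact Finset.mem_insert_of_mem (Finset.mem_of_mem_erase h'')
      · show eC Q j * 0 ∈ _
        rw [mul_zero]; exact zero_mem _
      · intro x y _ _ hx hy
        show eC Q j * (x + y) ∈ _
        rw [mul_add]; exact add_mem hx hy
      · intro r x _ hx
        show eC Q j * (r • x) ∈ _
        rw [mul_smul_comm]; exact Submodule.smul_mem _ _ hx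

lemma piM_span (x : CliffordAlgebra Q) :
    x ∈ Submodule.span ℝ (Set.range (piM Q)) := by
  have hone : (1 : CliffordAlgebra Q) ∈ Submodule.span ℝ (Set.range (piM Q)) :=
    Submodule.subset_span ⟨∅, piM_empty Q⟩
  have hmul : ∀ x y : CliffordAlgebra Q,
      y ∈ Submodule.span ℝ (Set.range (piM Q)) →
      x * y ∈ Submodule.span ℝ (Set.range (piM Q)) := by
    intro x
    induction x using CliffordAlgebra.induction with
    | algebraMap r =>
      intro y hy
      rw [← Algebra.smul_def]
      exact Submodule.smul_mem _ _ hy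
    | ι v =>
      intro y hy
      refine Submodule.span_induction
        (p := fun y _ => ι Q v * y ∈ Submodule.span ℝ (Set.range (piM Q)))
        ?_ ?_ ?_ ?_ hy
      · rintro _ ⟨M, rfl⟩
        rw [iota_sum, Finset.sum_mul]
        refine Submodule.sum_mem _ fun i _ => ?_
        rw [smul_mul_assoc]
        refine Submodule.smul_mem _ _ ?_
        exact Submodule.span_mono (Set.image_subset_range _ _)
          (eC_mul_piM_mem Q hQ M.card M le_rfl i)
      · show ι Q v * 0 ∈ _
        rw [mul_zero]; exact zero_mem _
      · intro a b _ _ ha hb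
        show ι Q v * (a + b) ∈ _
        rw [mul_add]; exact add_mem ha hb
      · intro r a _ ha
        show ι Q v * (r • a) ∈ _
        rw [mul_smul_comm]; exact Submodule.smul_mem _ _ ha
    | mul a b ha hb => intro y hy; rw [mul_assoc]; exact ha _ (hb _ hy)
    | add a b ha hb => intro y hy; rw [add_mul]; exact add_mem (ha _ hy) (hb _ hy)
  simpa using hmul x 1 hone

end Cliff

section ListCount
variable {ι : Type*} [DecidableEq ι]

lemma prod_ite_sign (i : ι) : ∀ l : List ι,
    (l.map fun j => if j = i then (1:ℝ) else -1).prod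
      = (-1) ^ ((l.filter (· ≠ i)).length) := by
  intro l
  induction l with
  | nil => simp
  | cons j t ih =>
    by_cases hj : j = i
    · subst hj
      rw [List.map_cons, List.prod_cons, if_pos rfl, one_mul, ih,
        List.filter_cons_of_neg (by simp)]
    · rw [List.map_cons, List.prod_cons, if_neg hj, ih,
        List.filter_cons_of_pos (by simpa using hj), List.length_cons, pow_succ]
      ring

lemma filter_ne_length (i : ι) : ∀ l : List ι, l.Nodup →
    ((l.filter (· ≠ i)).length) = l.length - (if i ∈ l then 1 else 0) := by
  intro l
  induction l with
  | nil => simp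
  | cons j t ih =>
    intro hnd
    obtain ⟨hjt, hnd'⟩ := List.nodup_cons.mp hnd
    by_cases hj : j = i
    · subst hj
      rw [List.filter_cons_of_neg (by simp), ih hnd', List.length_cons,
        if_neg (by exact fun h => hjt h), if_pos List.mem_cons_self]
      omega
    · rw [List.filter_cons_of_pos (by simpa using hj), List.length_cons, List.length_cons,
        ih hnd']
      have hle : (if i ∈ t then 1 else 0) ≤ t.length := by
        split
        · exact List.length_pos_of_mem (by assumption)
        · exact Nat.zero_le _
      have hmemiff : (i ∈ j :: t) ↔ (i ∈ t) := by
        simp only [List.mem_cons]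
        constructor
        · rintro (rfl | h)
          · exact absurd rfl hj
          · exact h
        · exact Or.inr
      rw [if_congr hmemiff rfl rfl]
      omega

end ListCount

section Rep
open CliffordAlgebra
variable {n : ℕ} {Q : QuadraticForm ℝ (Fin n → ℝ)}
  {A : Type*} [Ring A] [Algebra ℝ A]
  (ρ : CliffordAlgebra Q →ₐ[ℝ] A)

lemma sgn_eq (M : Finset (Fin n)) (i : Fin n) :
    ((M.sort (· ≤ ·)).map fun j => if j = i then (1:ℝ) else -1).prod = sgn n M i := by
  rw [prod_ite_sign, sgn, filter_ne_length i _ (M.sort_nodup _)]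
  congr 1
  rw [Finset.length_sort]
  by_cases hi : i ∈ M
  · rw [Finset.card_erase_of_mem hi, if_pos ((Finset.mem_sort _).mpr hi)]
  · rw [Finset.erase_eq_of_notMem hi, if_neg (fun h => hi ((Finset.mem_sort _).mp h))]
    omega

variable (hQ : ∀ v, Q v = -∑ i, v i * v i)
include hQ

lemma F_sq (i : Fin n) : ρ (eC Q i) * ρ (eC Q i) = -1 := by
  rw [← map_mul, eC_sq Q hQ, AlgHom.commutes]
  simp

lemma F_anti {i j : Fin n} (h : i ≠ j) :
    ρ (eC Q i) * ρ (eC Q j) = -(ρ (eC Q j) * ρ (eC Q i)) := by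
  rw [← map_mul, eC_anti Q hQ h, map_neg, map_mul]

lemma F_unit (i : Fin n) : IsUnit (ρ (eC Q i)) :=
  isUnit_iff_exists.mpr ⟨-(ρ (eC Q i)), by rw [mul_neg, F_sq ρ hQ, neg_neg],
    by rw [neg_mul, F_sq ρ hQ, neg_neg]⟩

omit hQ

lemma P_rho_eq (M : Finset (Fin n)) :
    ρ (piM Q M) = ((M.sort (· ≤ ·)).map fun i => ρ (eC Q i)).prod := by
  rw [piM, map_list_prod, List.map_map]
  rfl

include hQ

lemma P_rho_unit (M : Finset (Fin n)) : IsUnit (ρ (piM Q M)) := by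
  rw [P_rho_eq]
  exact isUnit_listProd _ (F_unit ρ hQ) _

lemma move_F (i : Fin n) (M : Finset (Fin n)) :
    ρ (eC Q i) * ρ (piM Q M) = sgn n M i • (ρ (piM Q M) * ρ (eC Q i)) := by
  rw [P_rho_eq, ← sgn_eq M i]
  refine move_prod _ _ _ _ fun j _ => ?_
  by_cases hj : j = i
  · subst hj; rw [if_pos rfl, one_smul]
  · rw [if_neg hj, F_anti ρ hQ (fun h => hj h.symm), neg_smul, one_smul]

omit hQ

lemma move_G (G : A) (hG : ∀ i, G * ρ (eC Q i) = -(ρ (eC Q i) * G)) (M : Finset (Fin n)) :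
    G * ρ (piM Q M) = ((-1 : ℝ) ^ M.card) • (ρ (piM Q M) * G) := by
  rw [P_rho_eq, ← Finset.length_sort (α := Fin n) (· ≤ ·) (s := M), ← prod_map_neg_one]
  refine move_prod _ _ _ _ fun j _ => ?_
  rw [hG j, neg_smul, one_smul]

lemma smul_unit_zero {A : Type*} [Ring A] [Algebra ℝ A] [Nontrivial A]
    {r : ℝ} {u : A} (hu : IsUnit u) (h : r • u = 0) : r = 0 := by
  obtain ⟨U, rfl⟩ := hu
  have h1 : r • (1 : A) = 0 := by
    have := congrArg (· * (↑U⁻¹ : A)) h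
    simpa [smul_mul_assoc] using this
  have : algebraMap ℝ A r = 0 := by
    rw [Algebra.algebraMap_eq_smul_one, h1]
  exact (algebraMap ℝ A).injective (by simpa using this)

include hQ

lemma proj_diag [Nontrivial A] (N M : Finset (Fin n)) :
    (((List.finRange n).map fun i => projOp (ρ (eC Q i)) (sgn n N i)).foldr
        (· ∘ₗ ·) LinearMap.id) (ρ (piM Q M))
      = if (∀ i, sgn n M i = sgn n N i) then ρ (piM Q M) else 0 := by
  rw [foldr_projOp_eq _ _ _ (fun i => sgn n M i)
      (fun i => projOp_eq _ _ _ _ (F_sq ρ hQ i) (move_F ρ hQ i M) (sgn_pm n M i) (sgn_pm n N i))]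
  exact if_congr (by simp) rfl rfl

end Rep

section Faithful
open CliffordAlgebra
variable {n : ℕ} {Q : QuadraticForm ℝ (Fin n → ℝ)}
  {A : Type*} [Ring A] [Algebra ℝ A] [Nontrivial A]
  (ρ : CliffordAlgebra Q →ₐ[ℝ] A)
  (hQ : ∀ v, Q v = -∑ i, v i * v i)
include hQ

/-- Common part: the coefficient extraction. -/
lemma ker_extract {x : CliffordAlgebra Q} (hx : ρ x = 0)
    {c : Finset (Fin n) →₀ ℝ} (hc : (c.sum fun M r => r • piM Q M) = x)
    (N : Finset (Fin n)) :
    (c.sum fun M r => if (∀ i, sgn n M i = sgn n N i) then r • ρ (piM Q M) else 0) = 0 := by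
  have hρ : (c.sum fun M r => r • ρ (piM Q M)) = 0 := by
    rw [← hx, ← hc, map_finsuppSum]
    exact Finsupp.sum_congr fun M _ => by rw [map_smul]
  have h0 : (c.sum fun M r => r • (((List.finRange n).map fun i =>
      projOp (ρ (eC Q i)) (sgn n N i)).foldr (· ∘ₗ ·) LinearMap.id) (ρ (piM Q M))) = 0 := by
    have h1 : (((List.finRange n).map fun i =>
        projOp (ρ (eC Q i)) (sgn n N i)).foldr (· ∘ₗ ·) LinearMap.id)
        (c.sum fun M r => r • ρ (piM Q M)) = (0 : A) := by
      rw [hρ, map_zero]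
    rw [map_finsuppSum] at h1
    rw [← h1]
    exact Finsupp.sum_congr fun M _ => by rw [map_smul]
  refine Eq.trans ?_ h0
  refine Finsupp.sum_congr fun M _ => ?_
  rw [proj_diag ρ hQ N M]
  split
  · rfl
  · rw [smul_zero]

lemma faithful_even (hn : Even n) : Function.Injective ρ := by
  refine (injective_iff_map_eq_zero ρ).mpr fun x hx => ?_
  obtain ⟨c, hc⟩ := Finsupp.mem_span_range_iff_exists_finsupp.mp (piM_span Q hQ x)
  suffices hc0 : ∀ N, c N = 0 by
    have hc' : c = 0 := Finsupp.ext hc0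
    rw [← hc, hc', Finsupp.sum_zero_index]
  intro N
  have key := ker_extract ρ hQ hx hc N
  have hrw : (c.sum fun M r => if (∀ i, sgn n M i = sgn n N i) then r • ρ (piM Q M) else 0)
      = c.sum fun M r => if M = N then r • ρ (piM Q M) else 0 := by
    refine Finsupp.sum_congr fun M _ => ?_
    by_cases hMN : M = N
    · subst hMN; rw [if_pos (fun _ => rfl), if_pos rfl]
    · rw [if_neg ?_, if_neg hMN]
      intro hall
      rcases sgn_sep M N hall with h | ⟨hodd, _⟩
      · exact hMN h
      · exact (Nat.not_even_iff_odd.mpr hodd) hn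
  rw [hrw, Finsupp.sum_ite_eq' c N (fun M r => r • ρ (piM Q M))] at key
  by_cases hmem : N ∈ c.support
  · rw [if_pos hmem] at key
    exact smul_unit_zero (P_rho_unit ρ hQ N) key
  · exact Finsupp.notMem_support_iff.mp hmem

lemma faithful_odd (hn : Odd n) (G : A)
    (hG : ∀ i, G * ρ (eC Q i) = -(ρ (eC Q i) * G)) (hGu : IsUnit G) :
    Function.Injective ρ := by
  refine (injective_iff_map_eq_zero ρ).mpr fun x hx => ?_
  obtain ⟨c, hc⟩ := Finsupp.mem_span_range_iff_exists_finsupp.mp (piM_span Q hQ x)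
  suffices hc0 : ∀ N, c N = 0 by
    have hc' : c = 0 := Finsupp.ext hc0
    rw [← hc, hc', Finsupp.sum_zero_index]
  have hNec : ∀ N : Finset (Fin n), N ≠ Nᶜ := by
    intro N hN
    have h1 : N.card + Nᶜ.card = n := by rw [Finset.card_add_card_compl]; simp
    rw [← hN] at h1
    rcases hn with ⟨k, hk⟩
    omega
  -- main step : for every N, `c N • P N + c Nᶜ • P Nᶜ = 0`
  have main : ∀ N : Finset (Fin n),
      c N • ρ (piM Q N) + c Nᶜ • ρ (piM Q Nᶜ) = 0 := by
    intro N
    have key := ker_extract ρ hQ hx hc N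
    have hrw : (c.sum fun M r => if (∀ i, sgn n M i = sgn n N i) then r • ρ (piM Q M) else 0)
        = c.sum fun M r => (if M = N then r • ρ (piM Q M) else 0)
            + (if M = Nᶜ then r • ρ (piM Q M) else 0) := by
      refine Finsupp.sum_congr fun M _ => ?_
      by_cases h1 : M = N
      · subst h1
        rw [if_pos (fun _ => rfl), if_pos rfl, if_neg (hNec M), add_zero]
      · by_cases h2 : M = Nᶜ
        · subst h2
          rw [if_pos (fun i => sgn_compl hn N i), if_neg h1, if_pos rfl, zero_add]
        · rw [if_neg ?_, if_neg h1, if_neg h2, add_zero]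
          intro hall
          rcases sgn_sep M N hall with h | ⟨_, h⟩
          · exact h1 h
          · exact h2 h
    rw [hrw, Finsupp.sum_add, Finsupp.sum_ite_eq' c N (fun M r => r • ρ (piM Q M)),
      Finsupp.sum_ite_eq' c Nᶜ (fun M r => r • ρ (piM Q M))] at key
    have e1 : (if N ∈ c.support then c N • ρ (piM Q N) else 0) = c N • ρ (piM Q N) := by
      split
      · rfl
      · rw [Finsupp.notMem_support_iff.mp (by assumption), zero_smul]
    have e2 : (if Nᶜ ∈ c.support then c Nᶜ • ρ (piM Q Nᶜ) else 0)
        = c Nᶜ • ρ (piM Q Nᶜ) := by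
      split
      · rfl
      · rw [Finsupp.notMem_support_iff.mp (by assumption), zero_smul]
    rw [e1, e2] at key
    exact key
  -- now exploit the anticommuting unit `G`
  intro N
  have key := main N
  obtain ⟨U, hU⟩ := P_rho_unit ρ hQ N
  set v : A := ((U⁻¹ : Aˣ) : A) with hv
  have huv : ρ (piM Q N) * v = 1 := by rw [← hU, hv]; exact U.mul_inv
  have hvu : v * ρ (piM Q N) = 1 := by rw [← hU, hv]; exact U.inv_mul
  -- multiply `key` on the right by `v`
  have key2 : c N • (1 : A) + c Nᶜ • (ρ (piM Q Nᶜ) * v) = 0 := by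
    have := congrArg (· * v) key
    simpa [add_mul, smul_mul_assoc, mul_assoc, huv] using this
  set W : A := ρ (piM Q Nᶜ) * v with hW
  have hWu : IsUnit W := ((P_rho_unit ρ hQ Nᶜ)).mul ⟨U⁻¹, rfl⟩
  -- G anticommutes with W
  have hsN : G * ρ (piM Q N) = ((-1 : ℝ) ^ N.card) • (ρ (piM Q N) * G) :=
    move_G ρ G hG N
  have hsNc : G * ρ (piM Q Nᶜ) = ((-1 : ℝ) ^ Nᶜ.card) • (ρ (piM Q Nᶜ) * G) :=
    move_G ρ G hG Nᶜ
  have hs2 : ((-1 : ℝ) ^ N.card) * ((-1 : ℝ) ^ N.card) = 1 := by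
    rw [← mul_pow]; norm_num
  have hGv : G * v = ((-1 : ℝ) ^ N.card) • (v * G) := by
    have h1 : v * (G * ρ (piM Q N)) * v = v * G := by
      simp only [mul_assoc]
      rw [huv, mul_one]
    have h2 : v * (G * ρ (piM Q N)) * v = ((-1 : ℝ) ^ N.card) • (G * v) := by
      rw [hsN, mul_smul_comm, smul_mul_assoc]
      congr 1
      simp only [mul_assoc]
      rw [← mul_assoc v (ρ (piM Q N)), hvu, one_mul]
    have h3 : v * G = ((-1 : ℝ) ^ N.card) • (G * v) := by rw [← h1, h2]
    rw [h3, smul_smul, hs2, one_smul]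
  have hsum : Nᶜ.card + N.card = n := by
    rw [add_comm, Finset.card_add_card_compl]
    simp
  have hscs : ((-1 : ℝ) ^ Nᶜ.card) * ((-1 : ℝ) ^ N.card) = -1 := by
    rw [← pow_add, hsum]
    exact hn.neg_one_pow
  have hGW : G * W = -(W * G) := by
    calc G * W = (G * ρ (piM Q Nᶜ)) * v := by rw [hW, mul_assoc]
      _ = ((-1 : ℝ) ^ Nᶜ.card) • (ρ (piM Q Nᶜ) * (G * v)) := by
          rw [hsNc, smul_mul_assoc, mul_assoc]
      _ = ((-1 : ℝ) ^ Nᶜ.card) • (ρ (piM Q Nᶜ) * (((-1 : ℝ) ^ N.card) • (v * G))) := by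
          rw [hGv]
      _ = (((-1 : ℝ) ^ Nᶜ.card) * ((-1 : ℝ) ^ N.card)) • (W * G) := by
          rw [mul_smul_comm, smul_smul, ← mul_assoc, ← hW]
      _ = -(W * G) := by rw [hscs, neg_one_smul]
  by_cases hcc : c Nᶜ = 0
  · rw [hcc, zero_smul, add_zero] at key
    exact smul_unit_zero ⟨U, hU⟩ key
  · exfalso
    set r : ℝ := (c Nᶜ)⁻¹ * (-(c N)) with hr
    have hWr : W = r • (1 : A) := by
      have hW1 : c Nᶜ • W = -(c N • (1 : A)) :=
        eq_neg_of_add_eq_zero_left (by rw [add_comm]; exact key2)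
      have := congrArg (fun z => (c Nᶜ)⁻¹ • z) hW1
      simpa [smul_smul, inv_mul_cancel₀ hcc, hr, mul_comm] using this
    have hcomm : G * W = W * G := by
      rw [hWr, mul_smul_comm, mul_one, smul_mul_assoc, one_mul]
    have hzero : (r + r) • G = 0 := by
      have h5 : W * G = r • G := by rw [hWr, smul_mul_assoc, one_mul]
      have h6 : G * W = r • G := by rw [hWr, mul_smul_comm, mul_one]
      have h7 : W * G + W * G = 0 := by
        nth_rewrite 1 [← hcomm]
        rw [hGW]
        exact neg_add_cancel _
      rw [add_smul, ← h5]
      exact h7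
    have hr0 : r + r = 0 := smul_unit_zero hGu hzero
    have hr0' : r = 0 := by linarith
    rw [hr0', zero_smul] at hWr
    exact hWu.ne_zero hWr

end Faithful

section Comm
open CliffordAlgebra
variable {n : ℕ} {Q : QuadraticForm ℝ (Fin n → ℝ)} {A : Type*} [Ring A] [Algebra ℝ A]

lemma comm_all (ρ : CliffordAlgebra Q →ₐ[ℝ] A) (w : A)
    (h : ∀ i, w * ρ (eC Q i) = ρ (eC Q i) * w) (x : CliffordAlgebra Q) :
    w * ρ x = ρ x * w := by
  induction x using CliffordAlgebra.induction with
  | algebraMap r => rw [AlgHom.commutes]; exact (Algebra.commutes r w).symm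
  | ι v =>
    rw [iota_sum, map_sum, Finset.mul_sum, Finset.sum_mul]
    refine Finset.sum_congr rfl fun i _ => ?_
    rw [map_smul, mul_smul_comm, smul_mul_assoc, h i]
  | mul a b ha hb => rw [map_mul, ← mul_assoc, ha, mul_assoc, hb, mul_assoc]
  | add a b ha hb => rw [map_add, mul_add, add_mul, ha, hb]

end Comm

section Surj
open CliffordAlgebra

lemma i'_surjective {m : ℕ} (Qm1 : QuadraticForm ℝ (Fin (m+1) → ℝ))
    (Qp : QuadraticForm ℝ (Fin (m+2) → ℝ)) (hQp : ∀ v, Qp v = ∑ i, v i * v i)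
    (i' : CliffordAlgebra Qm1 →ₐ[ℝ] (CliffordAlgebra.even Qp))
    (hi' : ∀ v : Fin (m+1) → ℝ, ((i' (ι Qm1 v) : CliffordAlgebra Qp)) =
      ι Qp (Fin.snoc v 0) * ι Qp (Pi.single (Fin.last (m+1)) 1)) :
    Function.Surjective i' := by
  set δ : Fin (m+2) → ℝ := Pi.single (Fin.last (m+1)) 1 with hδ
  set J : CliffordAlgebra Qm1 →ₐ[ℝ] CliffordAlgebra Qp :=
    ((CliffordAlgebra.even Qp).val).comp i' with hJdef
  have hJ : ∀ v : Fin (m+1) → ℝ, J (ι Qm1 v) = ι Qp (Fin.snoc v 0) * ι Qp δ := fun v => hi' v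
  have hQδ : Qp δ = 1 := by rw [hQp, hδ, sum_single_sq]; norm_num
  have hδδ : ι Qp δ * ι Qp δ = 1 := by rw [ι_sq_scalar, hQδ, map_one]
  have hptzero : ∀ (w : Fin (m+1) → ℝ) (k : Fin (m+2)), δ k * (Fin.snoc w 0 : Fin (m+2) → ℝ) k = 0 := by
    intro w k
    refine Fin.lastCases ?_ ?_ k
    · rw [Fin.snoc_last]; ring
    · intro j
      rw [hδ, Pi.single_eq_of_ne (Fin.castSucc_lt_last j).ne]
      ring
  have horto : ∀ w : Fin (m+1) → ℝ, Qp.IsOrtho δ (Fin.snoc w 0) := by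
    intro w
    rw [QuadraticMap.isOrtho_def, hQp, hQp, hQp]
    simp only [Pi.add_apply]
    rw [sum_sq_add _ _ (hptzero w)]
  have hanti : ∀ w : Fin (m+1) → ℝ,
      ι Qp δ * ι Qp (Fin.snoc w 0) = -(ι Qp (Fin.snoc w 0) * ι Qp δ) := fun w =>
    ι_mul_ι_comm_of_isOrtho (horto w)
  have hdbd : ∀ w : Fin (m+1) → ℝ,
      ι Qp δ * (ι Qp (Fin.snoc w 0) * ι Qp δ) = -(ι Qp (Fin.snoc w 0)) := by
    intro w
    rw [← mul_assoc, hanti w, neg_mul, mul_assoc, hδδ, mul_one]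
  have hJmul : ∀ v w : Fin (m+1) → ℝ,
      J (ι Qm1 v * ι Qm1 w) = -(ι Qp (Fin.snoc v 0) * ι Qp (Fin.snoc w 0)) := by
    intro v w
    rw [map_mul, hJ v, hJ w, mul_assoc, hdbd w, mul_neg]
  have hsplit : ∀ a : Fin (m+2) → ℝ,
      ι Qp a = ι Qp (Fin.snoc (Fin.init a) 0) + a (Fin.last (m+1)) • ι Qp δ := by
    intro a
    rw [← map_smul, ← map_add]
    congr 1
    funext k
    refine Fin.lastCases ?_ ?_ k
    · simp [Fin.snoc_last, hδ]
    · intro j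
      simp [Fin.snoc_castSucc, hδ, Pi.single_eq_of_ne (Fin.castSucc_lt_last j).ne, Fin.init]
  have claim : ∀ a b : Fin (m+2) → ℝ, ι Qp a * ι Qp b ∈ J.range := by
    intro a b
    rw [hsplit a, hsplit b, add_mul, mul_add, mul_add]
    refine add_mem (add_mem ?_ ?_) (add_mem ?_ ?_)
    · have h1 : -(J (ι Qm1 (Fin.init a) * ι Qm1 (Fin.init b)))
          = ι Qp (Fin.snoc (Fin.init a) 0) * ι Qp (Fin.snoc (Fin.init b) 0) := by
        rw [hJmul, neg_neg]
      rw [← h1]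
      exact neg_mem ((AlgHom.mem_range J).mpr ⟨_, rfl⟩)
    · rw [mul_smul_comm]
      exact Subalgebra.smul_mem _ ((AlgHom.mem_range J).mpr ⟨ι Qm1 (Fin.init a), hJ _⟩) _
    · rw [smul_mul_assoc]
      refine Subalgebra.smul_mem _ ?_ _
      rw [hanti (Fin.init b)]
      exact neg_mem ((AlgHom.mem_range J).mpr ⟨ι Qm1 (Fin.init b), hJ _⟩)
    · rw [smul_mul_assoc, mul_smul_comm, hδδ, smul_smul]
      exact Subalgebra.smul_mem _ (one_mem _) _
  intro z
  have hz : (z : CliffordAlgebra Qp) ∈ J.range := by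
    refine CliffordAlgebra.even_induction (Q := Qp) (motive := fun x _ => x ∈ J.range)
      (fun r => (J.range).algebraMap_mem r)
      (fun x y _ _ hx hy => add_mem hx hy)
      (fun m₁ m₂ x _ hx => mul_mem (claim m₁ m₂) hx) (z : CliffordAlgebra Qp) z.2
  obtain ⟨y, hy⟩ := hz
  exact ⟨y, Subtype.ext hy⟩

end Surj

section MoreHelpers

lemma smul_unit_zeroK {K A : Type*} [Field K] [Ring A] [Algebra K A] [Nontrivial A]
    {r : K} {u : A} (hu : IsUnit u) (h : r • u = 0) : r = 0 := by
  obtain ⟨U, rfl⟩ := hu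
  have h1 : r • (1 : A) = 0 := by
    have := congrArg (· * (↑U⁻¹ : A)) h
    simpa [smul_mul_assoc] using this
  have : algebraMap K A r = 0 := by
    rw [Algebra.algebraMap_eq_smul_one, h1]
  exact (algebraMap K A).injective (by simpa using this)

/-- conjugation by an anticommuting element preserves commutants. -/
lemma conj_comm {A : Type*} [Ring A] (T w x : A) (hwx : w * x = x * w)
    (hTx : T * x = -(x * T)) :
    (-(T * w * T)) * x = x * (-(T * w * T)) := by
  have hxT : x * T = -(T * x) := by rw [hTx, neg_neg]
  calc (-(T * w * T)) * x = -(T * w * (T * x)) := by simp only [neg_mul, mul_assoc]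
    _ = T * w * (x * T) := by rw [hTx, mul_neg, neg_neg]
    _ = T * (w * x) * T := by simp only [mul_assoc]
    _ = T * (x * w) * T := by rw [hwx]
    _ = (T * x) * (w * T) := by simp only [mul_assoc]
    _ = -((x * T) * (w * T)) := by rw [hTx, neg_mul]
    _ = x * (-(T * w * T)) := by simp only [mul_neg, mul_assoc]

open CliffordAlgebra in
lemma piM_append_max {n : ℕ} (Q : QuadraticForm ℝ (Fin n → ℝ)) :
    ∀ (c : ℕ) (M : Finset (Fin n)), M.card ≤ c → ∀ i : Fin n,
      (∀ b ∈ M, b ≤ i) → i ∉ M → piM Q (insert i M) = piM Q M * eC Q i := by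
  intro c
  induction c with
  | zero =>
    intro M hM i _ _
    have hempty : M = ∅ := Finset.card_eq_zero.mp (Nat.le_antisymm hM (Nat.zero_le _))
    subst hempty
    rw [show insert i (∅ : Finset (Fin n)) = {i} from rfl, piM_singleton, piM_empty, one_mul]
  | succ c ih =>
    intro M hM i hle hiM
    rcases M.eq_empty_or_nonempty with rfl | hne
    · rw [show insert i (∅ : Finset (Fin n)) = {i} from rfl, piM_singleton, piM_empty, one_mul]
    set j := M.min' hne with hj
    have hjM : j ∈ M := M.min'_mem hne
    have hji : j ≤ i := hle j hjM
    have hjnei : j ≠ i := fun h => hiM (h ▸ hjM)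
    have hins : insert i M = insert j (insert i (M.erase j)) := by
      rw [Finset.insert_comm, Finset.insert_erase hjM]
    have h1 : piM Q (insert i M) = eC Q j * piM Q (insert i (M.erase j)) := by
      rw [hins]
      refine piM_insert Q ?_ ?_
      · intro b hb
        rcases Finset.mem_insert.mp hb with rfl | hb'
        · exact hji
        · exact M.min'_le b (Finset.mem_of_mem_erase hb')
      · intro hmem
        rcases Finset.mem_insert.mp hmem with h' | h'
        · exact hjnei h'
        · exact Finset.notMem_erase _ _ h'
    have h2 : piM Q (insert i (M.erase j)) = piM Q (M.erase j) * eC Q i := by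
      refine ih (M.erase j) ?_ i (fun b hb => hle b (Finset.mem_of_mem_erase hb))
        (fun h => hiM (Finset.mem_of_mem_erase h))
      rw [Finset.card_erase_of_mem hjM]
      have := Finset.card_pos.mpr hne
      omega
    have h3 : piM Q M = eC Q j * piM Q (M.erase j) := by
      conv_lhs => rw [← Finset.insert_erase hjM]
      exact piM_insert Q (fun b hb => M.min'_le b (Finset.mem_of_mem_erase hb))
        (Finset.notMem_erase _ _)
    rw [h1, h2, h3, mul_assoc]

open CliffordAlgebra in
/-- an element commuting with all the generators appearing in a monomial commutes with it. -/
lemma comm_piM {n : ℕ} {Q : QuadraticForm ℝ (Fin n → ℝ)} {A : Type*} [Ring A] [Algebra ℝ A]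
    (ρ : CliffordAlgebra Q →ₐ[ℝ] A) (w : A) (M : Finset (Fin n))
    (h : ∀ i ∈ M, w * ρ (eC Q i) = ρ (eC Q i) * w) :
    w * ρ (piM Q M) = ρ (piM Q M) * w := by
  rw [P_rho_eq]
  refine Commute.list_prod_right _ _ fun x hx => ?_
  obtain ⟨i, hi, rfl⟩ := List.mem_map.mp hx
  exact h i ((Finset.mem_sort _).mp hi)

end MoreHelpers

/-- Consider `Cl⁻_m ⟶inj Cl⁻_{m+1} ⟶i_{m+1} Cl⁰_{m+2} ⟶θ End S`, where
`i_{m+1}` is the canonical isomorphism `v ↦ v·e_{m+2}` onto the even subalgebra of `Cl⁺_{m+2}`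
and `inj` the canonical inclusion.  If `m` is even and `θ` is a Weyl representation
(irreducible, of dimension `2^(m/2)`), then `θ ∘ i_{m+1}` is a Pauli representation
(irreducible) and `θ ∘ i_{m+1} ∘ inj` is a Dirac representation (irreducible and faithful).
If `m` is odd and `θ` is a Pauli representation, then `θ ∘ i_{m+1}` is a Dirac representation
and `θ ∘ i_{m+1} ∘ inj` is a Cartan representation (faithful, with two-dimensional
commutant). -/
theorem composite_spinor_representations
    (m : ℕ) (S : Type*) [AddCommGroup S] [Module ℂ S] [FiniteDimensional ℂ S]
    (hdim : Module.finrank ℂ S = 2 ^ ((m + 1) / 2))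
    (Qm : QuadraticForm ℝ (Fin m → ℝ)) (hQm : ∀ v, Qm v = -∑ i, v i * v i)
    (Qm1 : QuadraticForm ℝ (Fin (m + 1) → ℝ)) (hQm1 : ∀ v, Qm1 v = -∑ i, v i * v i)
    (Qp : QuadraticForm ℝ (Fin (m + 2) → ℝ)) (hQp : ∀ v, Qp v = ∑ i, v i * v i)
    (inj : CliffordAlgebra Qm →ₐ[ℝ] CliffordAlgebra Qm1)
    (hinj : ∀ v : Fin m → ℝ,
      inj (CliffordAlgebra.ι Qm v) = CliffordAlgebra.ι Qm1 (Fin.snoc v 0))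
    (i' : CliffordAlgebra Qm1 →ₐ[ℝ] (CliffordAlgebra.even Qp))
    (hi' : ∀ v : Fin (m + 1) → ℝ,
      ((i' (CliffordAlgebra.ι Qm1 v) : CliffordAlgebra Qp)) =
        CliffordAlgebra.ι Qp (Fin.snoc v 0) *
          CliffordAlgebra.ι Qp (Pi.single (Fin.last (m + 1)) 1))
    (θ : (CliffordAlgebra.even Qp) →ₐ[ℝ] Module.End ℂ S) :
    (Even m → IsIrredRep θ →
      (IsIrredRep (θ.comp i') ∧
        (IsIrredRep ((θ.comp i').comp inj) ∧
          Function.Injective ((θ.comp i').comp inj)))) ∧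
    (Odd m → IsIrredRep θ →
      ((IsIrredRep (θ.comp i') ∧ Function.Injective (θ.comp i')) ∧
        (Function.Injective ((θ.comp i').comp inj) ∧
          commutantRank ((θ.comp i').comp inj) = 2))) := by

  classical
  haveI hS : Nontrivial S := Module.nontrivial_of_finrank_pos
    (by rw [hdim]; positivity)
  set ρ1 : CliffordAlgebra Qm1 →ₐ[ℝ] Module.End ℂ S := θ.comp i' with hρ1def
  set ρ0 : CliffordAlgebra Qm →ₐ[ℝ] Module.End ℂ S := ρ1.comp inj with hρ0def
  have hsur := i'_surjective Qm1 Qp hQp i' hi'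
  have hIrr1 : IsIrredRep θ → IsIrredRep ρ1 := by
    intro hθ w hw
    refine hθ w fun b => ?_
    obtain ⟨a, rfl⟩ := hsur b
    exact hw a
  have hne_last : ∀ j : Fin m, Fin.castSucc j ≠ Fin.last m :=
    fun j => (Fin.castSucc_lt_last j).ne
  have hss : ∀ j : Fin m, (Fin.snoc (Pi.single j (1:ℝ)) 0 : Fin (m+1) → ℝ)
      = Pi.single (Fin.castSucc j) 1 := by
    intro j
    funext k
    refine Fin.lastCases ?_ ?_ k
    · rw [Fin.snoc_last, Pi.single_eq_of_ne (hne_last j).symm]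
    · intro k
      rw [Fin.snoc_castSucc]
      simp [Pi.single_apply, Fin.castSucc_inj]
  have hE0 : ∀ j : Fin m, ρ0 (eC Qm j) = ρ1 (eC Qm1 (Fin.castSucc j)) := by
    intro j
    show ρ1 (inj (eC Qm j)) = _
    rw [show eC Qm j = CliffordAlgebra.ι Qm (Pi.single j 1) from rfl, hinj, hss j]
    rfl
  set Mf : Finset (Fin (m+1)) := (Finset.univ).erase (Fin.last m) with hMf
  have hMfcard : Mf.card = m := by
    rw [hMf, Finset.card_erase_of_mem (Finset.mem_univ _), Finset.card_univ, Fintype.card_fin]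
    omega
  have hmemMf : ∀ j : Fin m, Fin.castSucc j ∈ Mf :=
    fun j => Finset.mem_erase.mpr ⟨hne_last j, Finset.mem_univ _⟩
  have hfull : piM Qm1 Finset.univ = piM Qm1 Mf * eC Qm1 (Fin.last m) := by
    have h := piM_append_max Qm1 Mf.card Mf le_rfl (Fin.last m)
      (fun b _ => Fin.le_last b) (Finset.notMem_erase _ _)
    rwa [hMf, Finset.insert_erase (Finset.mem_univ _)] at h
  -- even-m irreducibility of ρ0
  have hIrr0even : Even m → IsIrredRep θ → IsIrredRep ρ0 := by
    intro hm hθ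
    have h1 := hIrr1 hθ
    intro w hw
    have hwE : ∀ j : Fin m, w * ρ1 (eC Qm1 (Fin.castSucc j))
        = ρ1 (eC Qm1 (Fin.castSucc j)) * w := fun j => by rw [← hE0 j]; exact hw (eC Qm j)
    have hsgn_univ : ∀ i : Fin (m+1), sgn (m+1) Finset.univ i = 1 := by
      intro i
      rw [sgn, Finset.card_erase_of_mem (Finset.mem_univ _), Finset.card_univ,
        Fintype.card_fin, Nat.add_sub_cancel]
      exact hm.neg_one_pow
    have hωcomm : ∀ i : Fin (m+1), ρ1 (piM Qm1 Finset.univ) * ρ1 (eC Qm1 i)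
        = ρ1 (eC Qm1 i) * ρ1 (piM Qm1 Finset.univ) := by
      intro i
      have h := move_F ρ1 hQm1 i Finset.univ
      rw [hsgn_univ i, one_smul] at h
      exact h.symm
    obtain ⟨lam, hlam⟩ := h1 (ρ1 (piM Qm1 Finset.univ))
      (comm_all ρ1 _ hωcomm)
    have hwMf : w * ρ1 (piM Qm1 Mf) = ρ1 (piM Qm1 Mf) * w := by
      refine comm_piM ρ1 w Mf fun i hi => ?_
      obtain ⟨j, rfl⟩ : ∃ j : Fin m, Fin.castSucc j = i :=
        ⟨i.castPred (Finset.ne_of_mem_erase hi), Fin.castSucc_castPred _ _⟩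
      exact hwE j
    obtain ⟨U, hU⟩ := P_rho_unit ρ1 hQm1 Mf
    have hElast : ρ1 (eC Qm1 (Fin.last m)) = (↑U⁻¹ : Module.End ℂ S) * (lam • 1) := by
      have h2 : ρ1 (piM Qm1 Mf) * ρ1 (eC Qm1 (Fin.last m)) = lam • 1 := by
        rw [← map_mul, ← hfull, hlam]
      calc ρ1 (eC Qm1 (Fin.last m))
          = ↑U⁻¹ * (↑U * ρ1 (eC Qm1 (Fin.last m))) := by
            rw [← mul_assoc, U.inv_mul, one_mul]
        _ = ↑U⁻¹ * (lam • 1) := by rw [hU, h2]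
    have hcU : Commute w (↑U : Module.End ℂ S) := by
      show w * ↑U = ↑U * w
      rw [hU]
      exact hwMf
    have hcUinv := hcU.units_inv_right
    have hwlast : w * ρ1 (eC Qm1 (Fin.last m)) = ρ1 (eC Qm1 (Fin.last m)) * w := by
      rw [hElast]
      calc w * (↑U⁻¹ * (lam • 1)) = (w * ↑U⁻¹) * (lam • 1) := by rw [mul_assoc]
        _ = (↑U⁻¹ * w) * (lam • 1) := by rw [hcUinv.eq]
        _ = ↑U⁻¹ * (lam • 1) * w := by
            rw [mul_assoc, mul_assoc, mul_smul_comm, smul_mul_assoc, mul_one, one_mul]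
    have hwAll : ∀ i : Fin (m+1), w * ρ1 (eC Qm1 i) = ρ1 (eC Qm1 i) * w := by
      intro i
      by_cases hi : i = Fin.last m
      · subst hi; exact hwlast
      · obtain ⟨j, rfl⟩ : ∃ j : Fin m, Fin.castSucc j = i :=
          ⟨i.castPred hi, Fin.castSucc_castPred _ _⟩
        exact hwE j
    exact h1 w (comm_all ρ1 w hwAll)
  -- odd-m extras
  have hG : ∀ j : Fin m, ρ1 (eC Qm1 (Fin.last m)) * ρ0 (eC Qm j)
      = -(ρ0 (eC Qm j) * ρ1 (eC Qm1 (Fin.last m))) := by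
    intro j
    rw [hE0 j]
    exact F_anti ρ1 hQm1 fun h => hne_last j h.symm
  have hGu : IsUnit (ρ1 (eC Qm1 (Fin.last m))) := F_unit ρ1 hQm1 _
  have hRank : Odd m → IsIrredRep θ → commutantRank ρ0 = 2 := by
    intro hm hθ
    have h1 := hIrr1 hθ
    set ωf : Module.End ℂ S := ρ1 (piM Qm1 Mf) with hωf
    set T : Module.End ℂ S := ρ1 (eC Qm1 (Fin.last m)) with hT
    have hsgn_f : ∀ j : Fin m, sgn (m+1) Mf (Fin.castSucc j) = 1 := by
      intro j
      rw [sgn, Finset.card_erase_of_mem (hmemMf j), hMfcard]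
      refine Even.neg_one_pow ?_
      rcases hm with ⟨k, hk⟩
      exact ⟨k, by omega⟩
    have hsgn_last : sgn (m+1) Mf (Fin.last m) = -1 := by
      rw [sgn, Finset.erase_eq_of_notMem (Finset.notMem_erase _ _), hMfcard]
      exact hm.neg_one_pow
    have hcommf : ∀ j : Fin m, ρ1 (eC Qm1 (Fin.castSucc j)) * ωf
        = ωf * ρ1 (eC Qm1 (Fin.castSucc j)) := by
      intro j
      have h := move_F ρ1 hQm1 (Fin.castSucc j) Mf
      rw [hsgn_f j, one_smul] at h
      exact h
    have hTanti : T * ωf = -(ωf * T) := by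
      have h := move_F ρ1 hQm1 (Fin.last m) Mf
      rw [hsgn_last] at h
      rw [hT, hωf, h, neg_one_smul]
    have hTsq : T * T = -1 := F_sq ρ1 hQm1 _
    have hωfsq : ∃ s : ℝ, s ≠ 0 ∧ ωf * ωf = s • 1 := by
      rw [hωf, P_rho_eq]
      exact sq_listProd (fun i => ρ1 (eC Qm1 i)) (Mf.sort (· ≤ ·))
        (fun i _ => F_sq ρ1 hQm1 i)
        (List.Pairwise.imp (fun hab => F_anti ρ1 hQm1 hab) (Mf.sort_nodup _))
    have hωfU : IsUnit ωf := P_rho_unit ρ1 hQm1 Mf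
    have hTU : IsUnit T := F_unit ρ1 hQm1 _
    have hωf_not_scalar : ∀ c : ℂ, ωf ≠ c • 1 := by
      intro c hc
      have h2 : T * ωf = c • T := by rw [hc, mul_smul_comm, mul_one]
      have h3 : ωf * T = c • T := by rw [hc, smul_mul_assoc, one_mul]
      rw [h2, h3] at hTanti
      have h4 : (c + c) • T = 0 := by
        rw [add_smul]
        nth_rewrite 1 [hTanti]
        exact neg_add_cancel _
      have h5 : c = 0 := add_self_eq_zero.mp (smul_unit_zeroK hTU h4)
      rw [h5, zero_smul] at hc
      exact hωfU.ne_zero hc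
    have hmemW : ∀ w : Module.End ℂ S,
        (w ∈ ⨅ a : CliffordAlgebra Qm, LinearMap.ker
          (LinearMap.mulLeft ℂ (ρ0 a) - LinearMap.mulRight ℂ (ρ0 a)))
          ↔ ∀ a, ρ0 a * w = w * ρ0 a := by
      intro w
      rw [Submodule.mem_iInf]
      refine forall_congr' fun a => ?_
      rw [LinearMap.mem_ker, LinearMap.sub_apply, LinearMap.mulLeft_apply,
        LinearMap.mulRight_apply, sub_eq_zero]
    have hWeq : (⨅ a : CliffordAlgebra Qm, LinearMap.ker
        (LinearMap.mulLeft ℂ (ρ0 a) - LinearMap.mulRight ℂ (ρ0 a)))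
        = Submodule.span ℂ (Set.range ![1, ωf]) := by
      apply le_antisymm
      · intro w hw
        have hw' := (hmemW w).mp hw
        have hwE : ∀ j : Fin m, w * ρ1 (eC Qm1 (Fin.castSucc j))
            = ρ1 (eC Qm1 (Fin.castSucc j)) * w := fun j => by
          rw [← hE0 j]; exact (hw' (eC Qm j)).symm
        set wc : Module.End ℂ S := -(T * w * T) with hwc
        have hwcE : ∀ j : Fin m, wc * ρ1 (eC Qm1 (Fin.castSucc j))
            = ρ1 (eC Qm1 (Fin.castSucc j)) * wc := fun j =>
          conj_comm T w _ (hwE j) (F_anti ρ1 hQm1 fun h => hne_last j h.symm)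
        have hTwc : T * wc = w * T := by
          rw [hwc, mul_neg, show T * (T * w * T) = (T * T) * (w * T) by
            simp only [mul_assoc], hTsq, neg_mul, one_mul, neg_neg]
        have hwcT : wc * T = T * w := by
          rw [hwc, neg_mul, mul_assoc (T * w) T T, hTsq, mul_neg, mul_one, neg_neg]
        set wp : Module.End ℂ S := (2⁻¹ : ℂ) • (w + wc) with hwp
        set wm : Module.End ℂ S := (2⁻¹ : ℂ) • (w - wc) with hwm
        have hwpT : wp * T = T * wp := by
          rw [hwp, smul_mul_assoc, mul_smul_comm]
          congr 1
          rw [add_mul, mul_add, hTwc, hwcT, add_comm]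
        have hwpE : ∀ j : Fin m, wp * ρ1 (eC Qm1 (Fin.castSucc j))
            = ρ1 (eC Qm1 (Fin.castSucc j)) * wp := by
          intro j
          rw [hwp, smul_mul_assoc, mul_smul_comm]
          congr 1
          rw [add_mul, mul_add, hwE j, hwcE j]
        have hwpAll : ∀ i : Fin (m+1), wp * ρ1 (eC Qm1 i) = ρ1 (eC Qm1 i) * wp := by
          intro i
          by_cases hi : i = Fin.last m
          · subst hi; rw [← hT]; exact hwpT
          · obtain ⟨j, rfl⟩ : ∃ j : Fin m, Fin.castSucc j = i :=
              ⟨i.castPred hi, Fin.castSucc_castPred _ _⟩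
            exact hwpE j
        obtain ⟨α, hα⟩ := h1 wp (comm_all ρ1 wp hwpAll)
        have hwmT : T * wm = -(wm * T) := by
          rw [hwm, mul_smul_comm, smul_mul_assoc, ← smul_neg]
          congr 1
          rw [mul_sub, sub_mul, hTwc, hwcT]
          abel
        have hwmE : ∀ j : Fin m, wm * ρ1 (eC Qm1 (Fin.castSucc j))
            = ρ1 (eC Qm1 (Fin.castSucc j)) * wm := by
          intro j
          rw [hwm, smul_mul_assoc, mul_smul_comm]
          congr 1
          rw [sub_mul, mul_sub, hwE j, hwcE j]
        have hv1 : ∀ j : Fin m, (wm * ωf) * ρ1 (eC Qm1 (Fin.castSucc j))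
            = ρ1 (eC Qm1 (Fin.castSucc j)) * (wm * ωf) := by
          intro j
          rw [mul_assoc, ← hcommf j, ← mul_assoc, hwmE j, mul_assoc]
        have hv2 : (wm * ωf) * T = T * (wm * ωf) := by
          have e1 : T * (wm * ωf) = wm * (ωf * T) := by
            rw [← mul_assoc, hwmT, neg_mul, mul_assoc, hTanti, mul_neg, neg_neg]
          rw [mul_assoc, ← e1]
        have hvAll : ∀ i : Fin (m+1), (wm * ωf) * ρ1 (eC Qm1 i)
            = ρ1 (eC Qm1 i) * (wm * ωf) := by
          intro i
          by_cases hi : i = Fin.last m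
          · subst hi; rw [← hT]; exact hv2
          · obtain ⟨j, rfl⟩ : ∃ j : Fin m, Fin.castSucc j = i :=
              ⟨i.castPred hi, Fin.castSucc_castPred _ _⟩
            exact hv1 j
        obtain ⟨β, hβ⟩ := h1 (wm * ωf) (comm_all ρ1 _ hvAll)
        obtain ⟨s, hs0, hs⟩ := hωfsq
        have hwmEq : wm = s⁻¹ • (β • ωf) := by
          have e2 : (wm * ωf) * ωf = s • wm := by
            rw [mul_assoc, hs, mul_smul_comm, mul_one]
          have e3 : (wm * ωf) * ωf = β • ωf := by
            rw [hβ, smul_mul_assoc, one_mul]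
          have e4 : s • wm = β • ωf := by rw [← e2, e3]
          have e5 := congrArg (fun z => (s⁻¹ : ℝ) • z) e4
          simpa [smul_smul, inv_mul_cancel₀ hs0] using e5
        have hsum : w = wp + wm := by
          rw [hwp, hwm]
          module
        rw [hsum, hα, hwmEq]
        refine Submodule.add_mem _ ?_ ?_
        · exact Submodule.smul_mem _ _ (Submodule.subset_span ⟨0, rfl⟩)
        · exact Submodule.smul_of_tower_mem _ _
            (Submodule.smul_mem _ _ (Submodule.subset_span ⟨1, rfl⟩))
      · rw [Submodule.span_le]
        rintro x ⟨k, rfl⟩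
        fin_cases k
        · refine (hmemW _).mpr fun a => ?_
          show ρ0 a * 1 = 1 * ρ0 a
          rw [one_mul, mul_one]
        · refine (hmemW _).mpr fun a => ?_
          show ρ0 a * ωf = ωf * ρ0 a
          refine (comm_all ρ0 ωf (fun j => ?_) a).symm
          rw [hE0 j]
          exact (hcommf j).symm
    have hLI : LinearIndependent ℂ ![1, ωf] := by
      rw [LinearIndependent.pair_iff]
      intro s t hst
      by_cases ht : t = 0
      · rw [ht, zero_smul, add_zero] at hst
        exact ⟨smul_unit_zeroK isUnit_one hst, ht⟩
      · exfalso
        have h6 : t • ωf = -(s • (1 : Module.End ℂ S)) :=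
          eq_neg_of_add_eq_zero_left (by rw [add_comm]; exact hst)
        have h7 := congrArg (fun z => (t⁻¹ : ℂ) • z) h6
        simp only [smul_smul, inv_mul_cancel₀ ht, one_smul, smul_neg] at h7
        refine hωf_not_scalar (-(t⁻¹ * s)) ?_
        rw [h7]
        module
    show Module.finrank ℂ
      ↥(⨅ a : CliffordAlgebra Qm, LinearMap.ker
        (LinearMap.mulLeft ℂ (ρ0 a) - LinearMap.mulRight ℂ (ρ0 a))) = 2
    rw [hWeq, finrank_span_eq_card hLI]
    simp
  refine ⟨?_, ?_⟩
  · intro hm hθ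
    exact ⟨hIrr1 hθ, hIrr0even hm hθ, faithful_even ρ0 hQm hm⟩
  · intro hm hθ
    exact ⟨⟨hIrr1 hθ, faithful_even ρ1 hQm1 hm.add_one⟩,
      faithful_odd ρ0 hQm hm _ hG hGu, hRank hm hθ⟩
end
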